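/- arXiv:1812.09752 — 9 statements merged into one kernel-verified Lean document; each statement's English description precedes it below -/
import Mathlib

section
/- There is an absolute constant c > 0 such that for all integers r ≥ 2 and q ≥ 2, if m = ⌈(2q·ln q)^{1/(r−1)}⌉ and n = ⌈c·r·(q·ln q)^{r/(r−1)}⌉, then the complete r-partite graph K_{m,…,m,n} with r−1 parts of size m and one part of size n is q-solvable, i.e., HG(K_{m,…,m,n}) ≥ q. -/
/-- A guessing strategy: `g v` may only depend on the colors of the vertices
that `v` sees, i.e. those `u` with `Adj v u`. -/
def IsHatStrategy {V : Type*} (Adj : V → V → Prop) (q : ℕ)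
    (g : V → (V → Fin q) → Fin q) : Prop :=
  ∀ v : V, ∀ x y : V → Fin q, (∀ u, Adj v u → x u = y u) → g v x = g v y

/-- A graph (given by its adjacency/visibility relation) is `q`-solvable if there is a
guessing strategy that guarantees a correct guess for every coloring. -/
def Solvable {V : Type*} (Adj : V → V → Prop) (q : ℕ) : Prop :=
  ∃ g : V → (V → Fin q) → Fin q, IsHatStrategy Adj q g ∧ ∀ x, ∃ v, g v x = x v

/-- Adjacency of the complete `(r+1)`-partite graph with `r` parts of size `m`
(indexed by `Fin r × Fin m`) and one part of size `n` (indexed by `Fin n`):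
two vertices are adjacent iff they lie in different parts. -/
def MultipartitePlusAdj (r m n : ℕ) :
    ((Fin r × Fin m) ⊕ Fin n) → ((Fin r × Fin m) ⊕ Fin n) → Prop
  | Sum.inl a, Sum.inl b => a.1 ≠ b.1
  | Sum.inl _, Sum.inr _ => True
  | Sum.inr _, Sum.inl _ => True
  | Sum.inr _, Sum.inr _ => False

open Finset Real

private lemma coverAux' (q m : ℕ) {ι : Type*} [DecidableEq ι] (hq : 0 < q) (hm : 0 < m)
    (P : Finset ι) :
    ∀ S : Finset ((ι × Fin m) → Fin q), S.card < m ^ P.card →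
    ∃ f : (ι × Fin m) → ((ι × Fin m) → Fin q) → Fin q,
      (∀ v x y, (∀ u, u.1 ≠ v.1 → x u = y u) → f v x = f v y) ∧
      ∀ z ∈ S, ∃ v, v.1 ∈ P ∧ f v z = z v := by
  classical
  induction P using Finset.induction_on with
  | empty =>
    intro S hS
    simp only [card_empty, pow_zero, Nat.lt_one_iff, card_eq_zero] at hS
    exact ⟨fun _ _ => ⟨0, hq⟩, fun _ _ _ _ => rfl, by simp [hS]⟩
  | @insert a P ha IH =>
    intro S hS
    rw [card_insert_of_notMem ha] at hS
    set proj : ((ι × Fin m) → Fin q) → (Fin m → Fin q) := fun z j => z (a, j) with hproj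
    set Ybig : Finset (Fin m → Fin q) :=
      univ.filter (fun y => m ^ P.card ≤ (S.filter (fun z => proj z = y)).card) with hYbig
    -- Ybig is small
    have hYcard : Ybig.card < m := by
      have hdecomp : (S.filter (fun z => proj z ∈ Ybig)).card
          = ∑ y ∈ Ybig, ((S.filter (fun z => proj z ∈ Ybig)).filter (fun z => proj z = y)).card := by
        apply Finset.card_eq_sum_card_fiberwise
        intro z hz
        exact (mem_filter.mp hz).2
      have hfib : ∀ y ∈ Ybig, ((S.filter (fun z => proj z ∈ Ybig)).filter (fun z => proj z = y)).card
          = (S.filter (fun z => proj z = y)).card := by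
        intro y hy
        congr 1
        ext z
        simp only [mem_filter, and_assoc]
        constructor
        · rintro ⟨h1, _, h3⟩; exact ⟨h1, h3⟩
        · rintro ⟨h1, h3⟩; exact ⟨h1, h3 ▸ hy, h3⟩
      have hsum : m ^ P.card * Ybig.card ≤ S.card := by
        calc m ^ P.card * Ybig.card = ∑ _y ∈ Ybig, m ^ P.card := by
              rw [Finset.sum_const, smul_eq_mul, mul_comm]
          _ ≤ ∑ y ∈ Ybig, (S.filter (fun z => proj z = y)).card := by
              apply Finset.sum_le_sum
              intro y hy
              exact (mem_filter.mp hy).2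
          _ = (S.filter (fun z => proj z ∈ Ybig)).card := by
              rw [hdecomp]
              exact (Finset.sum_congr rfl hfib).symm
          _ ≤ S.card := Finset.card_filter_le _ _
      by_contra hc
      push_neg at hc
      have : m ^ P.card * m ≤ m ^ P.card * Ybig.card :=
        Nat.mul_le_mul_left _ hc
      have : m ^ P.card * m ≤ S.card := le_trans this hsum
      rw [← pow_succ] at this
      omega
    -- strategies for small fibers, via IH
    have hsmall : ∀ y : Fin m → Fin q, y ∉ Ybig →
        ∃ f : (ι × Fin m) → ((ι × Fin m) → Fin q) → Fin q,
          (∀ v x y', (∀ u, u.1 ≠ v.1 → x u = y' u) → f v x = f v y') ∧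
          ∀ z ∈ S.filter (fun z => proj z = y), ∃ v, v.1 ∈ P ∧ f v z = z v := by
      intro y hy
      apply IH
      simp only [hYbig, mem_filter, mem_univ, true_and, not_le] at hy
      exact hy
    choose Fsmall hFvis hFcov using hsmall
    -- enumerate Ybig
    let e := Ybig.equivFin
    let bigGuess : Fin m → Fin q := fun j =>
      if h : (j : ℕ) < Ybig.card then ((e.symm ⟨j, h⟩ : Fin m → Fin q) j) else ⟨0, hq⟩
    let Fs : (Fin m → Fin q) → (ι × Fin m) → ((ι × Fin m) → Fin q) → Fin q := fun y =>
      if h : y ∈ Ybig then (fun _ _ => ⟨0, hq⟩) else Fsmall y h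
    refine ⟨fun v x => if v.1 = a then bigGuess v.2 else Fs (proj x) v x, ?_, ?_⟩
    · -- visibility
      intro v x x' hagree
      by_cases hv : v.1 = a
      · simp [hv]
      · have hpx : proj x = proj x' := by
          funext j
          exact hagree (a, j) (by simpa using fun h => hv h.symm)
        simp only [if_neg hv, hpx]
        by_cases hy : proj x' ∈ Ybig
        · simp [Fs, hy]
        · simp only [Fs, dif_neg hy]
          exact hFvis _ hy v x x' (fun u hu => hagree u hu)
    · -- covering
      intro z hz
      by_cases hbig : proj z ∈ Ybig
      · have hlt : ((e ⟨proj z, hbig⟩ : Fin Ybig.card) : ℕ) < m :=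
          lt_trans (Fin.is_lt _) hYcard
        refine ⟨(a, ⟨_, hlt⟩), by simp, ?_⟩
        have h1 : ((⟨_, hlt⟩ : Fin m) : ℕ) < Ybig.card := (e ⟨proj z, hbig⟩).is_lt
        have h2 : e.symm ⟨((⟨_, hlt⟩ : Fin m) : ℕ), h1⟩ = ⟨proj z, hbig⟩ := by
          rw [show (⟨((⟨_, hlt⟩ : Fin m) : ℕ), h1⟩ : Fin Ybig.card) = e ⟨proj z, hbig⟩ from rfl]
          exact e.symm_apply_apply _
        simp only [if_pos rfl, bigGuess, dif_pos h1, h2]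
        rfl
      · obtain ⟨v, hvP, hvcov⟩ := hFcov (proj z) hbig z (by simp [mem_filter, hz])
        have hva : v.1 ≠ a := fun h => ha (h ▸ hvP)
        refine ⟨v, mem_insert_of_mem hvP, ?_⟩
        simp only [if_neg hva, Fs, dif_neg hbig]
        exact hvcov

private lemma exists_good_g' (q m k n t : ℕ)
    (hcount : q ^ n * (Nat.choose (q ^ (k * m)) t) * ((q - 1) ^ n) ^ t
        * (q ^ n) ^ (q ^ (k * m) - t) < (q ^ n) ^ (q ^ (k * m))) :
    ∃ g : ((Fin k × Fin m) → Fin q) → (Fin n → Fin q),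
      ∀ xB : Fin n → Fin q,
        ((univ : Finset ((Fin k × Fin m) → Fin q)).filter
          (fun z => ∀ b, g z b ≠ xB b)).card < t := by
  classical
  set Z := (Fin k × Fin m) → Fin q with hZ
  set W := Fin n → Fin q with hW
  have hZcard : Fintype.card Z = q ^ (k * m) := by
    simp [hZ, Fintype.card_fun]
  have hWcard : Fintype.card W = q ^ n := by
    simp [hW, Fintype.card_fun]
  set Bad : Finset (Z → W) :=
    univ.filter (fun g => ∃ xB : W, t ≤ (univ.filter (fun z : Z => ∀ b, g z b ≠ xB b)).card)
    with hBad
  -- cardinality of the avoiding set for fixed xB, T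
  have hkey : ∀ (xB : W) (T : Finset Z),
      (univ.filter (fun g : Z → W => ∀ z ∈ T, ∀ b, g z b ≠ xB b)).card
        = ((q - 1) ^ n) ^ T.card * (q ^ n) ^ (q ^ (k * m) - T.card) := by
    intro xB T
    set Avoid : Finset W := univ.filter (fun w => ∀ b, w b ≠ xB b) with hAvoid
    have hAcard : Avoid.card = (q - 1) ^ n := by
      have : Avoid = Fintype.piFinset (fun b : Fin n => (univ : Finset (Fin q)).erase (xB b)) := by
        ext w
        simp only [hAvoid, mem_filter, mem_univ, true_and]
        exact ⟨fun h => Fintype.mem_piFinset.mpr fun b => Finset.mem_erase.mpr ⟨h b, Finset.mem_univ _⟩,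
          fun h b => (Finset.mem_erase.mp (Fintype.mem_piFinset.mp h b)).1⟩
      rw [this, Fintype.card_piFinset]
      simp
    have heq : (univ.filter (fun g : Z → W => ∀ z ∈ T, ∀ b, g z b ≠ xB b))
        = Fintype.piFinset (fun z : Z => if z ∈ T then Avoid else univ) := by
      ext g
      simp only [mem_filter, mem_univ, true_and, Fintype.mem_piFinset]
      constructor
      · intro h z
        by_cases hz : z ∈ T
        · simp only [if_pos hz, hAvoid, mem_filter, mem_univ, true_and]
          exact h z hz
        · simp [if_neg hz]
      · intro h z hz
        have := h z
        rw [if_pos hz] at this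
        simpa [hAvoid] using this
    rw [heq, Fintype.card_piFinset]
    have hsplit : ∏ z : Z, ((if z ∈ T then Avoid else univ).card)
        = (∏ z ∈ univ.filter (fun z : Z => z ∈ T), Avoid.card)
          * ∏ z ∈ univ.filter (fun z : Z => ¬ z ∈ T), (univ : Finset W).card := by
      rw [← Finset.prod_ite]
      apply Finset.prod_congr rfl
      intro z _
      split <;> rfl
    have hf1 : (univ.filter (fun z : Z => z ∈ T)) = T := by
      ext z; simp
    have hf2 : (univ.filter (fun z : Z => ¬ z ∈ T)).card = q ^ (k * m) - T.card := by
      have : (univ.filter (fun z : Z => ¬ z ∈ T)) = Tᶜ := by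
        ext z; simp
      rw [this, Finset.card_compl, hZcard]
    rw [hsplit, Finset.prod_const, Finset.prod_const, hf1, hf2, hAcard]
    congr 1
    rw [Finset.card_univ, hWcard]
  -- union bound
  have hsub : Bad ⊆ (univ : Finset W).biUnion (fun xB =>
      ((univ : Finset Z).powersetCard t).biUnion (fun T =>
        univ.filter (fun g : Z → W => ∀ z ∈ T, ∀ b, g z b ≠ xB b))) := by
    intro g hg
    rw [hBad, mem_filter] at hg
    obtain ⟨_, xB, hxB⟩ := hg
    obtain ⟨T, hTsub, hTcard⟩ := Finset.exists_subset_card_eq hxB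
    refine Finset.mem_biUnion.mpr ⟨xB, mem_univ _, Finset.mem_biUnion.mpr
      ⟨T, Finset.mem_powersetCard.mpr ⟨Finset.subset_univ _, hTcard⟩, ?_⟩⟩
    rw [mem_filter]
    exact ⟨mem_univ _, fun z hz => (mem_filter.mp (hTsub hz)).2⟩
  have hBadcard : Bad.card < Fintype.card (Z → W) := by
    calc Bad.card ≤ ∑ xB ∈ (univ : Finset W), (((univ : Finset Z).powersetCard t).biUnion (fun T =>
          univ.filter (fun g : Z → W => ∀ z ∈ T, ∀ b, g z b ≠ xB b))).card :=
        le_trans (Finset.card_le_card hsub) (Finset.card_biUnion_le)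
      _ ≤ ∑ _xB ∈ (univ : Finset W), ∑ T ∈ (univ : Finset Z).powersetCard t,
            ((q - 1) ^ n) ^ t * (q ^ n) ^ (q ^ (k * m) - t) := by
        apply Finset.sum_le_sum
        intro xB _
        refine le_trans Finset.card_biUnion_le (Finset.sum_le_sum ?_)
        intro T hT
        rw [hkey xB T, (Finset.mem_powersetCard.mp hT).2]
      _ = q ^ n * ((q ^ (k * m)).choose t) * (((q - 1) ^ n) ^ t * (q ^ n) ^ (q ^ (k * m) - t)) := by
        rw [Finset.sum_const, Finset.sum_const, Finset.card_powersetCard, Finset.card_univ,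
          Finset.card_univ, hZcard, hWcard, smul_eq_mul, smul_eq_mul, mul_assoc]
      _ < (q ^ n) ^ (q ^ (k * m)) := by
        rw [← mul_assoc]
        exact hcount
      _ = Fintype.card (Z → W) := by
        rw [Fintype.card_fun, hZcard, hWcard]
  have hne : ∃ g : Z → W, g ∉ Bad := by
    by_contra hc
    push_neg at hc
    have : Bad = univ := Finset.eq_univ_iff_forall.mpr hc
    rw [this, Finset.card_univ] at hBadcard
    exact lt_irrefl _ hBadcard
  obtain ⟨g, hg⟩ := hne
  refine ⟨g, fun xB => ?_⟩
  rw [hBad, mem_filter] at hg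
  push_neg at hg
  exact hg (mem_univ _) xB

private lemma numeric_ineq' (q m k n : ℕ) (hq : 2 ≤ q) (hm : 1 ≤ m) (hn : 1 ≤ n) (hk : 1 ≤ k)
    (h1 : 2 * (q : ℝ) * Real.log q ≤ (m : ℝ) ^ k)
    (h2 : 2 * (q : ℝ) * ((k : ℝ) * m) * Real.log q ≤ (n : ℝ)) :
    q ^ n * (Nat.choose (q ^ (k * m)) (m ^ k)) * ((q - 1) ^ n) ^ (m ^ k)
      * (q ^ n) ^ (q ^ (k * m) - m ^ k) < (q ^ n) ^ (q ^ (k * m)) := by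
  set t := m ^ k with ht
  set N := q ^ (k * m) with hN
  have hqpos : 0 < q := by omega
  have htN : t ≤ N := by
    calc t = m ^ k := rfl
      _ ≤ (q ^ m) ^ k := by
        apply Nat.pow_le_pow_left
        calc m ≤ 2 ^ m := Nat.le_of_lt (Nat.lt_two_pow_self)
          _ ≤ q ^ m := Nat.pow_le_pow_left hq m
      _ = q ^ (m * k) := by rw [pow_mul]
      _ = N := by rw [hN, mul_comm]
  have hrhs : (q ^ n) ^ N = (q ^ n) ^ t * (q ^ n) ^ (N - t) := by
    rw [← pow_add, Nat.add_sub_cancel' htN]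
  rw [hrhs]
  refine (Nat.mul_lt_mul_right (pow_pos (pow_pos hqpos _) _)).mpr ?_
  have hchoose : N.choose t ≤ N ^ t := Nat.choose_le_pow N t
  apply lt_of_le_of_lt
    (Nat.mul_le_mul_right _ (Nat.mul_le_mul_left _ hchoose))
  have hcast : ((q : ℕ) : ℝ) - 1 = ((q - 1 : ℕ) : ℝ) := by
    have h1q : (1 : ℕ) ≤ q := by omega
    push_cast [Nat.cast_sub h1q]
    ring
  rw [← Nat.cast_lt (α := ℝ)]
  push_cast
  rw [← hcast]
  -- real inequality via logarithms
  have hqR : (0 : ℝ) < (q : ℝ) := by positivity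
  have hq2R : (2 : ℝ) ≤ (q : ℝ) := by exact_mod_cast hq
  have hq1pos : (0 : ℝ) < (q : ℝ) - 1 := by linarith
  have hL : 0 < Real.log q := Real.log_pos (by exact_mod_cast hq)
  have htpos : 0 < t := pow_pos hm _
  have htR : (0 : ℝ) < (t : ℝ) := by exact_mod_cast htpos
  have hnR : (0 : ℝ) < (n : ℝ) := by exact_mod_cast hn
  have hNpos : 0 < N := pow_pos hqpos _
  have hNR : (0 : ℝ) < (N : ℝ) := by exact_mod_cast hNpos
  have hlhs_pos : (0 : ℝ) < (q : ℝ) ^ n * (N : ℝ) ^ t * (((q : ℝ) - 1) ^ n) ^ t := by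
    positivity
  have hrhs_pos : (0 : ℝ) < ((q : ℝ) ^ n) ^ t := by positivity
  rw [← Real.log_lt_log_iff hlhs_pos hrhs_pos]
  have hNc : (N : ℝ) = (q : ℝ) ^ (k * m) := by rw [hN]; push_cast; ring
  rw [hNc, Real.log_mul (by positivity) (by positivity),
    Real.log_mul (by positivity) (by positivity)]
  simp only [Real.log_pow]
  push_cast
  set L := Real.log (q : ℝ) with hLdef
  set L' := Real.log ((q : ℝ) - 1) with hL'def
  -- key: L' < L - 1/q
  have hlog1 : L' < L - 1 / q := by
    have h0 : ((q : ℝ) - 1) / q = 1 - 1 / q := by field_simp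
    have h1' : (0 : ℝ) < 1 - 1 / q := by rw [← h0]; positivity
    have hexp : 1 - 1 / (q : ℝ) < Real.exp (-(1 / q)) := by
      have hne : -(1 / (q : ℝ)) ≠ 0 := by
        simp only [ne_eq, neg_eq_zero]
        positivity
      have := Real.add_one_lt_exp hne
      linarith
    have hlog : Real.log (1 - 1 / (q : ℝ)) < -(1 / q) := by
      calc Real.log (1 - 1 / (q : ℝ)) < Real.log (Real.exp (-(1 / q))) :=
            Real.log_lt_log h1' hexp
        _ = -(1 / q) := Real.log_exp _
    have hdiv : Real.log (((q : ℝ) - 1) / q) = L' - L :=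
      Real.log_div (by linarith) (by linarith)
    rw [h0] at hdiv
    rw [hdiv] at hlog
    linarith
  have ht1 : 2 * (q : ℝ) * L ≤ (t : ℝ) := by
    have hteq : ((t : ℕ) : ℝ) = ((m : ℝ)) ^ k := by rw [ht]; push_cast; ring
    rw [hteq]; exact h1
  -- combine
  have e1 : (n : ℝ) * (2 * (q : ℝ) * L) ≤ (n : ℝ) * t :=
    mul_le_mul_of_nonneg_left ht1 hnR.le
  have e2 : (2 * (q : ℝ) * ((k : ℝ) * m) * L) * t ≤ (n : ℝ) * t :=
    mul_le_mul_of_nonneg_right h2 htR.le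
  have e3 : ((n : ℝ) + (k : ℝ) * m * t) * L ≤ (n : ℝ) * t * (1 / q) := by
    rw [mul_one_div, le_div_iff₀ hqR]
    nlinarith [e1, e2]
  have e4 : (n : ℝ) * t * (1 / q) < (n : ℝ) * t * (L - L') := by
    apply mul_lt_mul_of_pos_left _ (by positivity)
    linarith
  have key : ((n : ℝ) + (k : ℝ) * m * t) * L < (n : ℝ) * t * (L - L') :=
    lt_of_le_of_lt e3 e4
  linarith [key]

set_option maxHeartbeats 1000000

/-- There is an absolute constant `c > 0` such that for all `r ≥ 2`, `q ≥ 2`,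
with `m = ⌈(2q ln q)^(1/(r-1))⌉` and `n = ⌈c r (q ln q)^(r/(r-1))⌉`, the complete
`r`-partite graph with `r - 1` parts of size `m` and one part of size `n` is `q`-solvable. -/
theorem stmt0 : ∃ c : ℝ, 0 < c ∧ ∀ r q : ℕ, 2 ≤ r → 2 ≤ q →
    Solvable (MultipartitePlusAdj (r - 1)
      ⌈((2 * q : ℝ) * Real.log q) ^ ((1 : ℝ) / ((r : ℝ) - 1))⌉₊
      ⌈c * r * ((q : ℝ) * Real.log q) ^ ((r : ℝ) / ((r : ℝ) - 1))⌉₊) q := by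
  classical
  refine ⟨16, by norm_num, ?_⟩
  intro r q hr hq
  set k := r - 1 with hkdef
  have hk : 1 ≤ k := by omega
  have hkR : (0 : ℝ) < (k : ℝ) := by exact_mod_cast hk
  have hrcast : ((r : ℝ) - 1) = (k : ℝ) := by
    rw [hkdef]
    push_cast [Nat.cast_sub (by omega : 1 ≤ r)]
    ring
  have hqR : (2 : ℝ) ≤ (q : ℝ) := by exact_mod_cast hq
  have hlq : (0.6931471803 : ℝ) < Real.log q := by
    calc (0.6931471803 : ℝ) < Real.log 2 := Real.log_two_gt_d9
      _ ≤ Real.log q := Real.log_le_log (by norm_num) hqR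
  have hlqpos : (0 : ℝ) < Real.log q := by linarith
  set x : ℝ := (2 * q : ℝ) * Real.log q with hxdef
  have hx1 : (1 : ℝ) ≤ x := by
    rw [hxdef]; nlinarith
  have hxpos : (0 : ℝ) < x := by linarith
  set m := ⌈x ^ ((1 : ℝ) / ((r : ℝ) - 1))⌉₊ with hmdef
  set n := ⌈(16 : ℝ) * r * ((q : ℝ) * Real.log q) ^ ((r : ℝ) / ((r : ℝ) - 1))⌉₊ with hndef
  have hexp : (1 : ℝ) / ((r : ℝ) - 1) = 1 / (k : ℝ) := by rw [hrcast]
  have hxr_pos : (0 : ℝ) < x ^ ((1 : ℝ) / ((r : ℝ) - 1)) := Real.rpow_pos_of_pos hxpos _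
  have hxr_one : (1 : ℝ) ≤ x ^ ((1 : ℝ) / ((r : ℝ) - 1)) := by
    apply Real.one_le_rpow hx1
    rw [hexp]
    positivity
  have hm1 : 1 ≤ m := by
    rw [hmdef]
    exact Nat.one_le_iff_ne_zero.mpr (by
      have := Nat.ceil_pos.mpr hxr_pos
      omega)
  have hmlb : x ^ ((1 : ℝ) / ((r : ℝ) - 1)) ≤ (m : ℝ) := Nat.le_ceil _
  have hmub : (m : ℝ) ≤ 2 * x ^ ((1 : ℝ) / ((r : ℝ) - 1)) := by
    have h' : (m : ℝ) < x ^ ((1 : ℝ) / ((r : ℝ) - 1)) + 1 :=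
      Nat.ceil_lt_add_one hxr_pos.le
    linarith
  -- h1 : 2 q log q ≤ m ^ k
  have h1 : 2 * (q : ℝ) * Real.log q ≤ (m : ℝ) ^ k := by
    have step : x = (x ^ ((1 : ℝ) / ((r : ℝ) - 1))) ^ k := by
      rw [hexp, ← Real.rpow_natCast (x ^ ((1 : ℝ) / (k : ℝ))) k,
        ← Real.rpow_mul hxpos.le]
      rw [one_div, inv_mul_cancel₀ (by positivity), Real.rpow_one]
    calc 2 * (q : ℝ) * Real.log q = x := by rw [hxdef]
      _ = (x ^ ((1 : ℝ) / ((r : ℝ) - 1))) ^ k := step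
      _ ≤ (m : ℝ) ^ k := pow_le_pow_left₀ hxr_pos.le hmlb k
  -- n bounds
  set y : ℝ := ((q : ℝ) * Real.log q) ^ ((r : ℝ) / ((r : ℝ) - 1)) with hydef
  have hql_pos : (0 : ℝ) < (q : ℝ) * Real.log q := by positivity
  have hql_one : (1 : ℝ) ≤ (q : ℝ) * Real.log q := by nlinarith
  have hypos : (0 : ℝ) < y := Real.rpow_pos_of_pos hql_pos _
  have hn1 : 1 ≤ n := by
    rw [hndef]
    refine Nat.one_le_iff_ne_zero.mpr (by
      have : (0:ℝ) < (16 : ℝ) * r * y := by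
        have : (0:ℝ) < (r : ℝ) := by
          have : (2:ℝ) ≤ (r:ℝ) := by exact_mod_cast hr
          linarith
        positivity
      have := Nat.ceil_pos.mpr this
      omega)
  have hnlb : (16 : ℝ) * r * y ≤ (n : ℝ) := Nat.le_ceil _
  have h2 : 2 * (q : ℝ) * ((k : ℝ) * m) * Real.log q ≤ (n : ℝ) := by
    have hrk : (r : ℝ) = (k : ℝ) + 1 := by
      rw [hkdef]; push_cast [Nat.cast_sub (by omega : 1 ≤ r)]; ring
    have hexp2 : (r : ℝ) / ((r : ℝ) - 1) = 1 + 1 / (k : ℝ) := by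
      rw [hrcast, hrk]
      field_simp
    -- y = (q log q) * (q log q)^(1/k)
    have hy2 : y = ((q : ℝ) * Real.log q) * ((q : ℝ) * Real.log q) ^ ((1:ℝ) / (k : ℝ)) := by
      rw [hydef, hexp2, Real.rpow_add hql_pos, Real.rpow_one]
    -- x^(1/k) ≤ 2 * (q log q)^(1/k)
    have hxsplit : x ^ ((1 : ℝ) / ((r : ℝ) - 1))
        ≤ 2 * ((q : ℝ) * Real.log q) ^ ((1:ℝ) / (k : ℝ)) := by
      have hx2 : x = 2 * ((q : ℝ) * Real.log q) := by rw [hxdef]; ring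
      rw [hexp, hx2, Real.mul_rpow (by norm_num) hql_pos.le]
      have h2k : (2 : ℝ) ^ ((1:ℝ) / (k : ℝ)) ≤ 2 := by
        calc (2 : ℝ) ^ ((1:ℝ) / (k : ℝ)) ≤ (2 : ℝ) ^ (1 : ℝ) := by
              apply Real.rpow_le_rpow_of_exponent_le (by norm_num)
              rw [div_le_one hkR]
              exact_mod_cast hk
          _ = 2 := Real.rpow_one 2
      have : (0:ℝ) ≤ ((q : ℝ) * Real.log q) ^ ((1:ℝ) / (k : ℝ)) := by positivity
      nlinarith
    -- main chain
    have hkr : (k : ℝ) ≤ (r : ℝ) := by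
      have : k ≤ r := by omega
      exact_mod_cast this
    have hrpos : (0:ℝ) < (r:ℝ) := by
      have : (2:ℝ) ≤ (r:ℝ) := by exact_mod_cast hr
      linarith
    calc 2 * (q : ℝ) * ((k : ℝ) * m) * Real.log q
        = 2 * ((q : ℝ) * Real.log q) * (k : ℝ) * (m : ℝ) := by ring
      _ ≤ 2 * ((q : ℝ) * Real.log q) * (r : ℝ) * (2 * x ^ ((1 : ℝ) / ((r : ℝ) - 1))) := by
          have hbase : (0:ℝ) ≤ 2 * ((q : ℝ) * Real.log q) := by positivity
          have hmnn : (0:ℝ) ≤ (m:ℝ) := by positivity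
          apply mul_le_mul
          · apply mul_le_mul_of_nonneg_left hkr hbase
          · exact hmub
          · exact hmnn
          · positivity
      _ ≤ 2 * ((q : ℝ) * Real.log q) * (r : ℝ)
            * (2 * (2 * ((q : ℝ) * Real.log q) ^ ((1:ℝ) / (k : ℝ)))) := by
          apply mul_le_mul_of_nonneg_left _ (by positivity)
          nlinarith [hxsplit]
      _ = 8 * (r : ℝ) * (((q : ℝ) * Real.log q) * ((q : ℝ) * Real.log q) ^ ((1:ℝ) / (k : ℝ))) := by
          ring
      _ = 8 * (r : ℝ) * y := by rw [← hy2]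
      _ ≤ 16 * (r : ℝ) * y := by nlinarith
      _ ≤ (n : ℝ) := hnlb
  -- get the random strategy for the big part
  obtain ⟨g, hg⟩ := exists_good_g' q m k n (m ^ k)
    (numeric_ineq' q m k n hq hm1 hn1 hk h1 h2)
  -- covering strategies for the small parts
  have hcov : ∀ xB : Fin n → Fin q,
      ∃ f : (Fin k × Fin m) → ((Fin k × Fin m) → Fin q) → Fin q,
        (∀ v x y, (∀ u, u.1 ≠ v.1 → x u = y u) → f v x = f v y) ∧
        ∀ z ∈ (univ : Finset ((Fin k × Fin m) → Fin q)).filter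
            (fun z => ∀ b, g z b ≠ xB b), ∃ v, v.1 ∈ (univ : Finset (Fin k)) ∧ f v z = z v := by
    intro xB
    apply coverAux' q m (by omega) (by omega) univ
    rw [Finset.card_univ, Fintype.card_fin]
    exact hg xB
  choose F hFvis hFcov using hcov
  -- assemble
  refine ⟨fun v => match v with
    | Sum.inl a => fun xx => F (fun b => xx (Sum.inr b)) a (fun u => xx (Sum.inl u))
    | Sum.inr b => fun xx => g (fun u => xx (Sum.inl u)) b, ?_, ?_⟩
  · intro v xx yy hagree
    match v with
    | Sum.inl a =>
      have hB : (fun b => xx (Sum.inr b)) = (fun b => yy (Sum.inr b)) := by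
        funext b
        exact hagree (Sum.inr b) trivial
      simp only [hB]
      apply hFvis
      intro u hu
      exact hagree (Sum.inl u) (Ne.symm hu)
    | Sum.inr b =>
      have hA : (fun u => xx (Sum.inl u)) = (fun u => yy (Sum.inl u)) := by
        funext u
        exact hagree (Sum.inl u) trivial
      simp only [hA]
  · intro xx
    by_cases hcase : ∃ b, g (fun u => xx (Sum.inl u)) b = xx (Sum.inr b)
    · obtain ⟨b, hb⟩ := hcase
      exact ⟨Sum.inr b, hb⟩
    · push_neg at hcase
      have hmem : (fun u => xx (Sum.inl u)) ∈
          (univ : Finset ((Fin k × Fin m) → Fin q)).filter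
            (fun z => ∀ b, g z b ≠ (fun b => xx (Sum.inr b)) b) := by
        rw [Finset.mem_filter]
        exact ⟨Finset.mem_univ _, fun b => hcase b⟩
      obtain ⟨a, _, hacov⟩ := hFcov (fun b => xx (Sum.inr b)) _ hmem
      exact ⟨Sum.inl a, hacov⟩
end

section
/- For all integers r ≥ 3 and q ≥ 2, setting n_i = ⌈(r−1)·ln(2q·ln q)·(4·ln q)^{r−i}·q^{r+1−i}⌉ for 1 ≤ i ≤ r, the complete r-partite directed cycle C⃗_{n_1,…,n_r} is q-solvable, i.e., HG(C⃗_{n_1,…,n_r}) ≥ q. -/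
open Finset Real

private lemma card_avoid (q n : ℕ) (z : Fin n → Fin q) :
    ((Finset.univ : Finset (Fin n → Fin q)).filter fun y => ∀ v, z v ≠ y v).card
      = (q - 1) ^ n := by
  have h : ((Finset.univ : Finset (Fin n → Fin q)).filter fun y => ∀ v, z v ≠ y v)
      = Fintype.piFinset (fun v => {z v}ᶜ) := by
    ext y
    simp [Fintype.mem_piFinset, ne_comm]
  rw [h, Fintype.card_piFinset]
  simp [Finset.card_compl]

private lemma exists_hitting (q n : ℕ) (S : Finset (Fin n → Fin q))
    (h : S.card * (q - 1) ^ n < q ^ n) :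
    ∃ y : Fin n → Fin q, ∀ z ∈ S, ∃ v, y v = z v := by
  by_contra hc
  push_neg at hc
  have cover : (Finset.univ : Finset (Fin n → Fin q)) ⊆
      S.biUnion fun z => Finset.univ.filter fun y => ∀ v, z v ≠ y v := by
    intro y _
    obtain ⟨z, hzS, hz⟩ := hc y
    exact Finset.mem_biUnion.2 ⟨z, hzS, Finset.mem_filter.2 ⟨Finset.mem_univ _,
      fun v => (hz v).symm⟩⟩
  have hcard := (Finset.card_le_card cover).trans Finset.card_biUnion_le
  rw [Finset.card_univ] at hcard
  have hc2 : Fintype.card (Fin n → Fin q) = q ^ n := by simp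
  rw [hc2] at hcard
  have hsum : ∑ z ∈ S, ((Finset.univ : Finset (Fin n → Fin q)).filter
      fun y => ∀ v, z v ≠ y v).card = S.card * (q - 1) ^ n := by
    rw [Finset.sum_congr rfl fun z _ => card_avoid q n z, Finset.sum_const, smul_eq_mul]
  rw [hsum] at hcard
  exact absurd hcard (not_le.2 h)




private lemma exists_code (q n L : ℕ) (M : Type) [Fintype M] [DecidableEq M] (hq : 2 ≤ q)
    (h : (Fintype.card M) ^ (L + 1) * ((q - 1) ^ n) ^ (L + 1) * q ^ n < (q ^ n) ^ (L + 1)) :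
    ∃ E : M → Fin n → Fin q, ∀ z : Fin n → Fin q,
      ((Finset.univ : Finset M).filter fun t => ∀ v, z v ≠ E t v).card ≤ L := by
  by_contra hc
  push_neg at hc
  -- hc : ∀ E, ∃ z, L < card ...
  have e0 : Fin q := ⟨0, by omega⟩
  set C := Fintype.card M with hC
  have cover : (Finset.univ : Finset (M → Fin n → Fin q)) ⊆
      (Finset.univ : Finset (Fin n → Fin q)).biUnion (fun z =>
        ((Finset.univ : Finset M).powersetCard (L + 1)).biUnion (fun T =>
          Finset.univ.filter (fun E : M → Fin n → Fin q => ∀ t ∈ T, ∀ v, z v ≠ E t v))) := by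
    intro E _
    obtain ⟨z, hz⟩ := hc E
    obtain ⟨T, hTsub, hTcard⟩ := Finset.exists_subset_card_eq hz
    refine Finset.mem_biUnion.2 ⟨z, Finset.mem_univ _, Finset.mem_biUnion.2
      ⟨T, Finset.mem_powersetCard.2 ⟨Finset.subset_univ _, hTcard⟩,
       Finset.mem_filter.2 ⟨Finset.mem_univ _, fun t ht v => ?_⟩⟩⟩
    exact (Finset.mem_filter.1 (hTsub ht)).2 v
  -- card of each piece
  have piece : ∀ (z : Fin n → Fin q) (T : Finset M), T.card = L + 1 →
      (Finset.univ.filter (fun E : M → Fin n → Fin q => ∀ t ∈ T, ∀ v, z v ≠ E t v)).card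
        = ((q - 1) ^ n) ^ (L + 1) * (q ^ n) ^ (C - (L + 1)) := by
    intro z T hT
    have heq : (Finset.univ.filter (fun E : M → Fin n → Fin q => ∀ t ∈ T, ∀ v, z v ≠ E t v))
        = Fintype.piFinset (fun t => if t ∈ T then
            (Finset.univ.filter fun y : Fin n → Fin q => ∀ v, z v ≠ y v) else Finset.univ) := by
      ext E
      simp only [Finset.mem_filter, Finset.mem_univ, true_and, Fintype.mem_piFinset]
      constructor
      · intro hE t
        by_cases ht : t ∈ T
        · simp [ht, hE t ht]
        · simp [ht]
      · intro hE t ht v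
        have := hE t
        rw [if_pos ht] at this
        exact (Finset.mem_filter.1 this).2 v
    rw [heq, Fintype.card_piFinset]
    have : ∀ t : M, (if t ∈ T then
            (Finset.univ.filter fun y : Fin n → Fin q => ∀ v, z v ≠ y v) else Finset.univ).card
        = if t ∈ T then (q - 1) ^ n else q ^ n := by
      intro t
      by_cases ht : t ∈ T <;> simp [ht, card_avoid]
    rw [Finset.prod_congr rfl fun t _ => this t, Finset.prod_ite, Finset.prod_const,
      Finset.prod_const]
    congr 1
    · congr 1
      rw [Finset.filter_univ_mem, hT]
    · congr 1
      have : Finset.univ.filter (fun t => ¬ t ∈ T) = Tᶜ := by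
        ext t; simp [Finset.mem_compl]
      rw [this, Finset.card_compl, hT]
  -- total count
  have hcard := (Finset.card_le_card cover).trans Finset.card_biUnion_le
  rw [Finset.card_univ] at hcard
  have hfun : Fintype.card (M → Fin n → Fin q) = (q ^ n) ^ C := by
    simp [hC]
  rw [hfun] at hcard
  have hinner : ∀ z : Fin n → Fin q,
      ∑ T ∈ (Finset.univ : Finset M).powersetCard (L + 1),
        (Finset.univ.filter (fun E : M → Fin n → Fin q => ∀ t ∈ T, ∀ v, z v ≠ E t v)).card
      ≤ C ^ (L + 1) * (((q - 1) ^ n) ^ (L + 1) * (q ^ n) ^ (C - (L + 1))) := by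
    intro z
    calc ∑ T ∈ (Finset.univ : Finset M).powersetCard (L + 1),
        (Finset.univ.filter (fun E : M → Fin n → Fin q => ∀ t ∈ T, ∀ v, z v ≠ E t v)).card
        = ∑ T ∈ (Finset.univ : Finset M).powersetCard (L + 1),
          (((q - 1) ^ n) ^ (L + 1) * (q ^ n) ^ (C - (L + 1))) := by
          refine Finset.sum_congr rfl fun T hT => piece z T ?_
          exact (Finset.mem_powersetCard.1 hT).2
      _ = ((Finset.univ : Finset M).powersetCard (L + 1)).card *
            (((q - 1) ^ n) ^ (L + 1) * (q ^ n) ^ (C - (L + 1))) := by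
          rw [Finset.sum_const, smul_eq_mul]
      _ ≤ C ^ (L + 1) * (((q - 1) ^ n) ^ (L + 1) * (q ^ n) ^ (C - (L + 1))) := by
          apply Nat.mul_le_mul_right
          rw [Finset.card_powersetCard, Finset.card_univ]
          exact Nat.choose_le_pow _ _
  have htot : (q ^ n) ^ C ≤
      q ^ n * (C ^ (L + 1) * (((q - 1) ^ n) ^ (L + 1) * (q ^ n) ^ (C - (L + 1)))) := by
    refine hcard.trans ?_
    calc ∑ z : Fin n → Fin q,
          (((Finset.univ : Finset M).powersetCard (L + 1)).biUnion (fun T =>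
            Finset.univ.filter (fun E : M → Fin n → Fin q => ∀ t ∈ T, ∀ v, z v ≠ E t v))).card
        ≤ ∑ _z : Fin n → Fin q,
            C ^ (L + 1) * (((q - 1) ^ n) ^ (L + 1) * (q ^ n) ^ (C - (L + 1))) := by
          refine Finset.sum_le_sum fun z _ => ?_
          exact le_trans Finset.card_biUnion_le (hinner z)
      _ = q ^ n * (C ^ (L + 1) * (((q - 1) ^ n) ^ (L + 1) * (q ^ n) ^ (C - (L + 1)))) := by
          rw [Finset.sum_const, smul_eq_mul, Finset.card_univ]
          simp
  -- contradiction
  have hCL : L + 1 ≤ C := by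
    by_contra hCL
    push_neg at hCL
    obtain ⟨z, hz⟩ := hc fun _ _ => e0
    have h2 : L < C :=
      lt_of_lt_of_le hz (le_trans (Finset.card_filter_le _ _) (le_of_eq Finset.card_univ))
    exact absurd h2 (Nat.not_lt.2 (Nat.lt_succ_iff.1 hCL))
  have hqn : 0 < (q ^ n) ^ (C - (L + 1)) := Nat.pow_pos (Nat.pow_pos (Nat.lt_of_lt_of_le (by norm_num) hq))
  have hstrict : q ^ n * (C ^ (L + 1) * (((q - 1) ^ n) ^ (L + 1) * (q ^ n) ^ (C - (L + 1))))
      < (q ^ n) ^ C := by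
    have h2 : C ^ (L + 1) * ((q - 1) ^ n) ^ (L + 1) * q ^ n * (q ^ n) ^ (C - (L + 1))
        < (q ^ n) ^ (L + 1) * (q ^ n) ^ (C - (L + 1)) :=
      (Nat.mul_lt_mul_right hqn).2 h
    rw [← pow_add] at h2
    have hCe : L + 1 + (C - (L + 1)) = C := Nat.add_sub_cancel' hCL
    rw [hCe] at h2
    calc q ^ n * (C ^ (L + 1) * (((q - 1) ^ n) ^ (L + 1) * (q ^ n) ^ (C - (L + 1))))
        = C ^ (L + 1) * ((q - 1) ^ n) ^ (L + 1) * q ^ n * (q ^ n) ^ (C - (L + 1)) := by ring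
      _ < (q ^ n) ^ C := h2
  exact absurd htot (not_le.2 hstrict)

private def KK (L s i : ℕ) : ℕ := L ^ (s - i)

private lemma KK_pos {L : ℕ} (hL : 1 ≤ L) (s i : ℕ) : 0 < KK L s i :=
  Nat.pow_pos hL

private def msg (q L s : ℕ) (N : ℕ → ℕ) (hL : 1 ≤ L)
    (tup : ∀ i, (Fin (N i) → Fin q) → Fin L → (Fin (KK L s i) → (Fin (N (s+1)) → Fin q))) :
    ∀ i, (Fin (N (i+1)) → Fin q) → Fin (KK L s i) → (Fin (N (s+1)) → Fin q) :=
  fun i z =>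
    if h : i = s then
      fun _ v => z (Fin.cast (by rw [h]) v)
    else
      fun a =>
        tup (i+1) z
          ⟨a.val / KK L s (i+1), by
            have h2 : KK L s i ≤ KK L s (i+1) * L := by
              have h3 : s - i ≤ (s - (i+1)) + 1 := by omega
              calc KK L s i = L ^ (s - i) := rfl
                _ ≤ L ^ ((s - (i+1)) + 1) := Nat.pow_le_pow_right hL h3
                _ = L ^ (s - (i+1)) * L := by rw [pow_succ]
            exact Nat.div_lt_of_lt_mul (lt_of_lt_of_le a.isLt h2)⟩
          ⟨a.val % KK L s (i+1), Nat.mod_lt _ (KK_pos hL s (i+1))⟩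

private lemma msg_pair (q L s : ℕ) (N : ℕ → ℕ) (hL : 1 ≤ L)
    (tup : ∀ i, (Fin (N i) → Fin q) → Fin L → (Fin (KK L s i) → (Fin (N (s+1)) → Fin q)))
    (i : ℕ) (hi : i < s) (z : Fin (N (i+1)) → Fin q)
    (j : Fin L) (k : Fin (KK L s (i+1))) :
    ∃ a : Fin (KK L s i), msg q L s N hL tup i z a = tup (i+1) z j k := by
  have hKpos : 0 < KK L s (i+1) := KK_pos hL s (i+1)
  have he : KK L s i = L * KK L s (i+1) := by
    show L ^ (s - i) = L * L ^ (s - (i+1))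
    rw [← pow_succ']
    congr 1
    omega
  refine ⟨⟨j.val * KK L s (i+1) + k.val, ?_⟩, ?_⟩
  · rw [he]
    calc j.val * KK L s (i+1) + k.val < j.val * KK L s (i+1) + KK L s (i+1) :=
          Nat.add_lt_add_left k.isLt _
      _ = (j.val + 1) * KK L s (i+1) := by ring
      _ ≤ L * KK L s (i+1) := Nat.mul_le_mul_right _ j.isLt
  · have hi' : ¬ (i = s) := by omega
    have e1 : (j.val * KK L s (i+1) + k.val) / KK L s (i+1) = j.val := by
      rw [mul_comm, Nat.mul_add_div hKpos, Nat.div_eq_of_lt k.isLt, Nat.add_zero]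
    have e2 : (j.val * KK L s (i+1) + k.val) % KK L s (i+1) = k.val := by
      rw [Nat.mul_add_mod', Nat.mod_eq_of_lt k.isLt]
    simp only [msg, dif_neg hi']
    exact congrArg₂ (tup (i+1) z) (Fin.ext e1) (Fin.ext e2)

private theorem core (q L s : ℕ) (hq : 2 ≤ q) (hL : 1 ≤ L) (N : ℕ → ℕ)
    (Hcode : ∀ i, i ≤ s →
      ∃ E : (Fin (KK L s i) → (Fin (N (s+1)) → Fin q)) → Fin (N i) → Fin q,
        ∀ z : Fin (N i) → Fin q,
          (Finset.univ.filter fun t => ∀ v, z v ≠ E t v).card ≤ L)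
    (Hhit : ∀ S : Finset (Fin (N (s+1)) → Fin q), S.card ≤ L ^ (s+1) →
      ∃ y : Fin (N (s+1)) → Fin q, ∀ z ∈ S, ∃ v, y v = z v) :
    Solvable (fun v w : (Σ i : Fin (s+2), Fin (N i.1)) =>
      (w.1 : ℕ) = ((v.1 : ℕ) + 1) % (s+2)) q := by
  letI : Inhabited (Fin q) := ⟨⟨0, by omega⟩⟩
  -- choose the codes
  have Hcode' : ∀ i, ∃ E : (Fin (KK L s i) → (Fin (N (s+1)) → Fin q)) → Fin (N i) → Fin q,
      i ≤ s → ∀ z : Fin (N i) → Fin q,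
        (Finset.univ.filter fun t => ∀ v, z v ≠ E t v).card ≤ L := by
    intro i
    by_cases hi : i ≤ s
    · exact (Hcode i hi).imp fun E hE => fun _ => hE
    · exact ⟨fun _ _ => default, fun h => absurd h hi⟩
  choose E hE using Hcode'
  -- choose padded enumerations of decoded lists
  have Htup : ∀ i (z : Fin (N i) → Fin q),
      ∃ f : Fin L → (Fin (KK L s i) → (Fin (N (s+1)) → Fin q)),
        i ≤ s → ∀ t ∈ (Finset.univ.filter fun t => ∀ v, z v ≠ E i t v), ∃ j, f j = t := by
    intro i z
    by_cases hi : i ≤ s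
    · refine ⟨fun j => (Finset.univ.filter fun t => ∀ v, z v ≠ E i t v).toList.getD j default,
        fun _ t ht => ?_⟩
      have hmem : t ∈ (Finset.univ.filter fun t => ∀ v, z v ≠ E i t v).toList :=
        Finset.mem_toList.2 ht
      obtain ⟨n, hget⟩ := List.get_of_mem hmem
      have hlen : (Finset.univ.filter fun t => ∀ v, z v ≠ E i t v).toList.length ≤ L := by
        rw [Finset.length_toList]; exact hE i hi z
      refine ⟨⟨n.val, lt_of_lt_of_le n.isLt hlen⟩, ?_⟩
      show (Finset.univ.filter fun t => ∀ v, z v ≠ E i t v).toList.getD n.val default = t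
      rw [List.getD_eq_getElem _ _ n.isLt]
      simpa using hget
    · exact ⟨fun _ => default, fun h => absurd h hi⟩
  choose tup htup using Htup
  -- choose the hitting vectors
  have Hhit' : ∀ z : Fin (N 0) → Fin q,
      ∃ y : Fin (N (s+1)) → Fin q,
        ∀ w ∈ ((Finset.univ.filter fun t => ∀ v, z v ≠ E 0 t v).biUnion
            (fun t => Finset.image t Finset.univ)), ∃ v, y v = w v := by
    intro z
    apply Hhit
    calc ((Finset.univ.filter fun t => ∀ v, z v ≠ E 0 t v).biUnion
            (fun t => Finset.image t Finset.univ)).card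
        ≤ ∑ t ∈ (Finset.univ.filter fun t => ∀ v, z v ≠ E 0 t v),
            (Finset.image t Finset.univ).card := Finset.card_biUnion_le
      _ ≤ ∑ _t ∈ (Finset.univ.filter fun t => ∀ v, z v ≠ E 0 t v), L ^ s := by
          refine Finset.sum_le_sum fun t _ => ?_
          calc (Finset.image t Finset.univ).card ≤ (Finset.univ : Finset (Fin (KK L s 0))).card :=
                Finset.card_image_le
            _ = KK L s 0 := by simp
            _ = L ^ s := by simp [KK]
      _ = (Finset.univ.filter fun t => ∀ v, z v ≠ E 0 t v).card * L ^ s := by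
          rw [Finset.sum_const, smul_eq_mul]
      _ ≤ L * L ^ s := Nat.mul_le_mul_right _ (hE 0 (Nat.zero_le s) z)
      _ = L ^ (s+1) := by rw [pow_succ, mul_comm]
  choose hit hhit using Hhit'
  -- the strategy
  refine ⟨fun v xx =>
    if h : (v.1 : ℕ) = s + 1 then
      hit (fun w => xx ⟨⟨0, by omega⟩, w⟩) ⟨v.2.val, by rw [← h]; exact v.2.isLt⟩
    else
      E (v.1 : ℕ) (msg q L s N hL tup (v.1 : ℕ)
        (fun w => xx ⟨⟨(v.1 : ℕ) + 1, by have := v.1.isLt; omega⟩, w⟩)) v.2, ?_, ?_⟩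
  · -- it is a valid strategy
    intro v xx yy hxy
    by_cases h : (v.1 : ℕ) = s + 1
    · simp only [dif_pos h]
      refine congrArg₂ hit (funext fun w => ?_) rfl
      refine hxy ⟨⟨0, by omega⟩, w⟩ ?_
      show (0 : ℕ) = ((v.1 : ℕ) + 1) % (s+2)
      rw [h]
      exact (Nat.mod_self (s+2)).symm
    · simp only [dif_neg h]
      refine congrArg (fun z => E (v.1 : ℕ) (msg q L s N hL tup (v.1 : ℕ) z) v.2)
        (funext fun w => ?_)
      refine hxy ⟨⟨(v.1 : ℕ) + 1, by have := v.1.isLt; omega⟩, w⟩ ?_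
      show ((v.1 : ℕ) + 1) = ((v.1 : ℕ) + 1) % (s+2)
      exact (Nat.mod_eq_of_lt (by have := v.1.isLt; omega)).symm
  · -- it wins
    intro xx
    by_contra hcon
    push_neg at hcon
    -- the coloring of the last part
    set XL : Fin (N (s+1)) → Fin q := fun w => xx ⟨⟨s+1, by omega⟩, w⟩ with hXL
    -- every non-final part is completely wrong
    have Fact1 : ∀ i (hi : i ≤ s),
        msg q L s N hL tup i (fun w => xx ⟨⟨i+1, by omega⟩, w⟩) ∈
          (Finset.univ.filter fun t => ∀ v,
            (fun w => xx ⟨⟨i, by omega⟩, w⟩) v ≠ E i t v) := by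
      intro i hi
      refine Finset.mem_filter.2 ⟨Finset.mem_univ _, fun v => ?_⟩
      have hv := hcon ⟨⟨i, by omega⟩, v⟩
      have hne : ¬ (((⟨i, by omega⟩ : Fin (s+2)) : ℕ) = s + 1) := by
        simp only [Fin.val_mk]
        omega
      rw [dif_neg hne] at hv
      exact fun hEq => hv (by
        show E i _ v = xx ⟨⟨i, _⟩, v⟩
        exact hEq.symm)
    -- main induction: the last part's coloring is a candidate in every message
    have main : ∀ k i (hi : i ≤ s), s - i = k →
        ∃ a : Fin (KK L s i),
          msg q L s N hL tup i (fun w => xx ⟨⟨i+1, by omega⟩, w⟩) a = XL := by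
      intro k
      induction k with
      | zero =>
        intro i hi hk
        have his : i = s := by omega
        subst his
        refine ⟨⟨0, KK_pos hL _ _⟩, ?_⟩
        funext v
        simp only [msg]
        rw [dif_pos trivial]
        rfl
      | succ k ih =>
        intro i hi hk
        have hi' : i < s := by omega
        obtain ⟨a', ha'⟩ := ih (i+1) (by omega) (by omega)
        have hmem := Fact1 (i+1) (by omega)
        obtain ⟨j, hj⟩ := htup (i+1) (fun w => xx ⟨⟨i+1, by omega⟩, w⟩) (by omega) _ hmem
        obtain ⟨a, haa⟩ := msg_pair q L s N hL tup i hi'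
          (fun w => xx ⟨⟨i+1, by omega⟩, w⟩) j a'
        refine ⟨a, ?_⟩
        rw [haa, hj]
        exact ha'
    -- conclude
    obtain ⟨a, ha⟩ := main s 0 (Nat.zero_le s) (Nat.sub_zero s)
    have hXLmem : XL ∈ ((Finset.univ.filter fun t => ∀ v,
        (fun w => xx ⟨⟨0, by omega⟩, w⟩) v ≠ E 0 t v).biUnion
          (fun t => Finset.image t Finset.univ)) := by
      refine Finset.mem_biUnion.2 ⟨_, Fact1 0 (Nat.zero_le s), ?_⟩
      exact Finset.mem_image.2 ⟨a, Finset.mem_univ _, ha⟩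
    obtain ⟨v, hv⟩ := hhit (fun w => xx ⟨⟨0, by omega⟩, w⟩) XL hXLmem
    have hbad := hcon ⟨⟨s+1, by omega⟩, v⟩
    rw [dif_pos rfl] at hbad
    exact hbad hv



private lemma cast_two_le {q : ℕ} (hq : 2 ≤ q) : (2:ℝ) ≤ (q:ℝ) := by exact_mod_cast hq

private lemma logq_pos {q : ℕ} (hq : 2 ≤ q) : 0 < Real.log q :=
  Real.log_pos (by exact_mod_cast Nat.lt_of_lt_of_le one_lt_two hq)

private lemma logq_ge_log2 {q : ℕ} (hq : 2 ≤ q) : Real.log 2 ≤ Real.log q :=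
  Real.log_le_log (by norm_num) (cast_two_le hq)

/-- `log (q-1) ≤ log q - 1/q`. -/
private lemma log_pred_le {q : ℕ} (hq : 2 ≤ q) :
    Real.log ((q:ℝ) - 1) ≤ Real.log q - 1/(q:ℝ) := by
  have hy : (2:ℝ) ≤ (q:ℝ) := cast_two_le hq
  have hy0 : (0:ℝ) < (q:ℝ) := by linarith
  have h1 : (q:ℝ) - 1 ≤ (q:ℝ) * Real.exp (-(1/(q:ℝ))) := by
    have := Real.add_one_le_exp (-(1/(q:ℝ)))
    have h2 : (q:ℝ) * (-(1/(q:ℝ)) + 1) ≤ (q:ℝ) * Real.exp (-(1/(q:ℝ))) :=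
      mul_le_mul_of_nonneg_left this (le_of_lt hy0)
    have h3 : (q:ℝ) * (-(1/(q:ℝ)) + 1) = (q:ℝ) - 1 := by
      field_simp
      ring
    linarith
  have h4 : Real.log ((q:ℝ) - 1) ≤ Real.log ((q:ℝ) * Real.exp (-(1/(q:ℝ)))) :=
    Real.log_le_log (by linarith) h1
  rw [Real.log_mul (ne_of_gt hy0) (ne_of_gt (Real.exp_pos _)), Real.log_exp] at h4
  linarith

/-- The main counting inequality for the existence of codes. -/
private lemma code_count (q L n a : ℕ) (hq : 2 ≤ q) (hn : 1 ≤ n)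
    (hL : (3/2 : ℝ) * q * Real.log q ≤ L)
    (ha : 3 * (q:ℝ) * Real.log q * a ≤ n) :
    (q ^ a) ^ (L + 1) * ((q - 1) ^ n) ^ (L + 1) * q ^ n < (q ^ n) ^ (L + 1) := by
  have hq1 : 1 ≤ q := by omega
  rw [← Nat.cast_lt (α := ℝ)]
  push_cast [Nat.cast_sub hq1]
  have hy : (2:ℝ) ≤ (q:ℝ) := cast_two_le hq
  have hy0 : (0:ℝ) < (q:ℝ) := by linarith
  have hym : (1:ℝ) ≤ (q:ℝ) - 1 := by linarith
  have hx : (0:ℝ) < Real.log q := logq_pos hq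
  set y : ℝ := (q:ℝ) with hyy
  set x : ℝ := Real.log q with hxx
  -- positivity of both sides
  have hL1 : ((y ^ a) ^ (L+1) * ((y - 1) ^ n) ^ (L+1) * y ^ n : ℝ) > 0 := by positivity
  have hR1 : ((y ^ n) ^ (L+1) : ℝ) > 0 := by positivity
  rw [← Real.log_lt_log_iff hL1 hR1]
  rw [Real.log_mul (by positivity) (by positivity), Real.log_mul (by positivity) (by positivity)]
  simp only [Real.log_pow]
  push_cast
  -- now a linear inequality in logs
  have hlogym : Real.log (y - 1) ≤ x - 1/y := log_pred_le hq
  have hnR : (1:ℝ) ≤ (n:ℝ) := by exact_mod_cast hn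
  have haR : (0:ℝ) ≤ (a:ℝ) := Nat.cast_nonneg a
  have hLR : (0:ℝ) ≤ (L:ℝ) := Nat.cast_nonneg L
  -- key bounds
  have e1 : ((L:ℝ) + 1) * ((a:ℝ) * x) ≤ ((L:ℝ) + 1) * ((n:ℝ) / (3 * y)) := by
    apply mul_le_mul_of_nonneg_left _ (by linarith)
    rw [le_div_iff₀ (by linarith)]
    nlinarith [ha]
  have e2 : (n:ℝ) * x < (n:ℝ) * ((2/3) * ((L:ℝ) + 1) / y) := by
    apply mul_lt_mul_of_pos_left _ (by linarith)
    rw [lt_div_iff₀ (by linarith)]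
    nlinarith [hL]
  have e3 : ((L:ℝ) + 1) * ((n:ℝ) * Real.log (y - 1)) ≤ ((L:ℝ) + 1) * ((n:ℝ) * (x - 1/y)) := by
    apply mul_le_mul_of_nonneg_left _ (by linarith)
    exact mul_le_mul_of_nonneg_left hlogym (by linarith)
  have efin : ((L:ℝ) + 1) * ((n:ℝ)/(3*y)) + (n:ℝ) * ((2/3) * ((L:ℝ)+1) / y)
      + ((L:ℝ) + 1) * ((n:ℝ) * (x - 1/y)) = ((L:ℝ) + 1) * ((n:ℝ) * x) := by
    field_simp
    ring
  linarith [e1, e2, e3, efin]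

/-- The counting inequality for the existence of a hitting vector. -/
private lemma hit_count (q L n t : ℕ) (hq : 2 ≤ q) (hL1 : 1 ≤ L)
    (h : (t:ℝ) * Real.log L < (n:ℝ) * (Real.log q - Real.log ((q:ℝ) - 1))) :
    L ^ t * (q - 1) ^ n < q ^ n := by
  have hq1 : 1 ≤ q := by omega
  rw [← Nat.cast_lt (α := ℝ)]
  push_cast [Nat.cast_sub hq1]
  have hy : (2:ℝ) ≤ (q:ℝ) := cast_two_le hq
  have hym : (1:ℝ) ≤ (q:ℝ) - 1 := by linarith
  have hLR : (1:ℝ) ≤ (L:ℝ) := by exact_mod_cast hL1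
  have hL0 : ((L:ℝ)^t * ((q:ℝ) - 1)^n : ℝ) > 0 := by positivity
  have hR0 : ((q:ℝ)^n : ℝ) > 0 := by positivity
  rw [← Real.log_lt_log_iff hL0 hR0, Real.log_mul (by positivity) (by positivity)]
  simp only [Real.log_pow]
  linarith [h]

private noncomputable def Lq (q : ℕ) : ℕ := ⌈(3/2 : ℝ) * (q:ℝ) * Real.log q⌉₊

private lemma Lq_pos {q : ℕ} (hq : 2 ≤ q) : 1 ≤ Lq q := by
  have h : (0:ℝ) < (3/2 : ℝ) * (q:ℝ) * Real.log q := by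
    have := logq_pos hq
    have := cast_two_le hq
    nlinarith
  exact Nat.one_le_iff_ne_zero.2 (by
    intro h0
    have := Nat.ceil_eq_zero.1 h0
    linarith)

private lemma Lq_lb (q : ℕ) : (3/2 : ℝ) * (q:ℝ) * Real.log q ≤ (Lq q : ℝ) := Nat.le_ceil _

private lemma Lq_ub {q : ℕ} (hq : 2 ≤ q) : (Lq q : ℝ) ≤ (3/2 : ℝ) * (q:ℝ) * Real.log q + 1 := by
  have h : (0:ℝ) ≤ (3/2 : ℝ) * (q:ℝ) * Real.log q := by
    have := logq_pos hq
    have := cast_two_le hq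
    nlinarith
  exact le_of_lt (Nat.ceil_lt_add_one h)

/-- `1 ≤ log (2 q log q)`. -/
private lemma A_ge_one {q : ℕ} (hq : 2 ≤ q) : 1 ≤ Real.log (2 * (q:ℝ) * Real.log q) := by
  have hx : Real.log 2 ≤ Real.log q := logq_ge_log2 hq
  have hl2 : (0.6931471803 : ℝ) < Real.log 2 := Real.log_two_gt_d9
  have hy : (2:ℝ) ≤ (q:ℝ) := cast_two_le hq
  have harg : Real.exp 1 ≤ 2 * (q:ℝ) * Real.log q := by
    have he : Real.exp 1 < 2.7182818286 := Real.exp_one_lt_d9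
    nlinarith
  rw [Real.le_log_iff_exp_le (by nlinarith [Real.exp_pos 1])]
  exact harg

/-- `q * (log q - log (q-1)) ≥ 1`. -/
private lemma qc_ge_one {q : ℕ} (hq : 2 ≤ q) :
    1 ≤ (q:ℝ) * (Real.log q - Real.log ((q:ℝ) - 1)) := by
  have h := log_pred_le hq
  have hy : (2:ℝ) ≤ (q:ℝ) := cast_two_le hq
  have : 1/(q:ℝ) ≤ Real.log q - Real.log ((q:ℝ) - 1) := by linarith
  calc (1:ℝ) = (q:ℝ) * (1/(q:ℝ)) := by field_simp
    _ ≤ (q:ℝ) * (Real.log q - Real.log ((q:ℝ) - 1)) :=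
        mul_le_mul_of_nonneg_left this (by linarith)

private lemma c_pos {q : ℕ} (hq : 2 ≤ q) :
    0 < Real.log q - Real.log ((q:ℝ) - 1) := by
  have h := log_pred_le hq
  have hy : (2:ℝ) ≤ (q:ℝ) := cast_two_le hq
  have h1 : (0:ℝ) < 1/(q:ℝ) := by positivity
  linarith

/-- The key logarithmic estimate on the list size. -/
private lemma logL_lt {q : ℕ} (hq : 2 ≤ q) :
    Real.log (Lq q) < Real.log (2 * (q:ℝ) * Real.log q) *
      ((q:ℝ) * (Real.log q - Real.log ((q:ℝ) - 1))) := by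
  have hy : (2:ℝ) ≤ (q:ℝ) := cast_two_le hq
  have hx : 0 < Real.log q := logq_pos hq
  have hL1 : (1:ℝ) ≤ (Lq q : ℝ) := by exact_mod_cast Lq_pos hq
  rcases eq_or_lt_of_le hq with hq2 | hq3
  · -- q = 2
    subst hq2
    have hc : Real.log ((2:ℕ):ℝ) - Real.log (((2:ℕ):ℝ) - 1) = Real.log 2 := by
      norm_num
    rw [hc]
    have hl2a : (0.6931471803 : ℝ) < Real.log 2 := Real.log_two_gt_d9
    have hl2b : Real.log 2 < 0.6931471808 := Real.log_two_lt_d9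
    -- Lq 2 ≤ 3 log 2 + 1 ≤ 3.0794415424
    have hub : (Lq 2 : ℝ) ≤ 3.0794415424 := by
      have := Lq_ub (le_refl 2)
      have h2 : ((2:ℕ):ℝ) = 2 := by norm_num
      rw [h2] at this
      nlinarith
    -- log (Lq 2) < (7/4) log 2, since (Lq 2)^4 < 128 = 2^7
    have hstep1 : Real.log (Lq 2) < (7/4) * Real.log 2 := by
      have hp : ((Lq 2 : ℝ)) ^ 4 < (2:ℝ) ^ 7 := by
        have h1 : ((Lq 2 : ℝ)) ^ 4 ≤ (3.0794415424:ℝ) ^ 4 :=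
          pow_le_pow_left₀ (by linarith) hub 4
        nlinarith
      have h4 : (4:ℝ) * Real.log (Lq 2) < 7 * Real.log 2 := by
        have := Real.log_lt_log (by positivity : (0:ℝ) < (Lq 2 : ℝ)^4) hp
        rw [Real.log_pow, Real.log_pow] at this
        push_cast at this
        linarith
      linarith
    -- 7/8 < log (4 log 2)
    have hstep2 : (7/8 : ℝ) < Real.log (2 * ((2:ℕ):ℝ) * Real.log 2) := by
      have h2 : (2 * ((2:ℕ):ℝ) * Real.log 2) = 4 * Real.log 2 := by norm_num
      rw [h2]
      have hpos : (0:ℝ) < 4 * Real.log 2 := by linarith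
      have hexp : Real.exp 7 < (4 * Real.log 2) ^ 8 := by
        have he : Real.exp 7 = (Real.exp 1) ^ 7 := by
          rw [← Real.exp_nat_mul]
          norm_num
        have he1 : (Real.exp 1) ^ 7 < (2.7182818286:ℝ) ^ 7 := by
          have := Real.exp_one_lt_d9
          have hpos1 : (0:ℝ) ≤ Real.exp 1 := le_of_lt (Real.exp_pos 1)
          exact pow_lt_pow_left₀ this hpos1 (by norm_num)
        have h2 : (2.7182818286:ℝ) ^ 7 < (2.7725887212:ℝ) ^ 8 := by norm_num
        have h3 : (2.7725887212:ℝ) ^ 8 ≤ (4 * Real.log 2) ^ 8 := by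
          apply pow_le_pow_left₀ (by norm_num)
          nlinarith
        rw [he]
        linarith
      have h7 : (7:ℝ) < Real.log ((4 * Real.log 2) ^ 8) :=
        (Real.lt_log_iff_exp_lt (by positivity)).2 hexp
      rw [Real.log_pow] at h7
      push_cast at h7
      linarith
    -- combine
    have h2l : (0:ℝ) < Real.log 2 := by linarith
    have hcast : ((2:ℕ):ℝ) = 2 := by norm_num
    rw [hcast] at hstep2 ⊢
    have hmul : (7/8 : ℝ) * (2 * Real.log 2) < Real.log (2 * 2 * Real.log 2) * (2 * Real.log 2) :=
      mul_lt_mul_of_pos_right hstep2 (by linarith)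
    set P : ℝ := Real.log (2 * 2 * Real.log 2) * (2 * Real.log 2) with hP
    set lg : ℝ := Real.log 2 with hlg
    linarith [hstep1, hmul]
  · -- q ≥ 3
    have hq3' : (3:ℝ) ≤ (q:ℝ) := by exact_mod_cast hq3
    have hx1 : 1 < Real.log q := by
      rw [show (1:ℝ) = Real.log (Real.exp 1) by rw [Real.log_exp]]
      apply Real.log_lt_log (Real.exp_pos 1)
      have := Real.exp_one_lt_d9
      linarith
    have hLub : (Lq q : ℝ) < 2 * (q:ℝ) * Real.log q := by
      have := Lq_ub hq
      nlinarith
    have hA : Real.log (Lq q) < Real.log (2 * (q:ℝ) * Real.log q) :=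
      Real.log_lt_log (by linarith) hLub
    have hqc := qc_ge_one hq
    have hA1 := A_ge_one hq
    nlinarith

/-- The sizes of the parts, as a function of the (zero-based) natural index. -/
private noncomputable def Nz (s q : ℕ) (i : ℕ) : ℕ :=
  ⌈((s + 2 : ℕ) - 1 : ℝ) * Real.log (2 * (q:ℝ) * Real.log (q:ℝ)) *
    (4 * Real.log (q:ℝ)) ^ (s + 2 - 1 - i) * (q:ℝ) ^ (s + 2 - i)⌉₊

private lemma Nz_pos {s q : ℕ} (hq : 2 ≤ q) (i : ℕ) : 1 ≤ Nz s q i := by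
  have hx : 0 < Real.log (q:ℝ) := logq_pos hq
  have hy : (2:ℝ) ≤ (q:ℝ) := cast_two_le hq
  have hA : 1 ≤ Real.log (2 * (q:ℝ) * Real.log q) := A_ge_one hq
  have hpos : (0:ℝ) < ((s + 2 : ℕ) - 1 : ℝ) * Real.log (2 * (q:ℝ) * Real.log (q:ℝ)) *
      (4 * Real.log (q:ℝ)) ^ (s + 2 - 1 - i) * (q:ℝ) ^ (s + 2 - i) := by
    have h1 : (0:ℝ) < ((s + 2 : ℕ) - 1 : ℝ) := by
      push_cast
      linarith [Nat.cast_nonneg (α := ℝ) s]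
    positivity
  show 0 < Nz s q i
  unfold Nz
  exact Nat.ceil_pos.2 hpos

private lemma Nz_last_lb (s q : ℕ) (hq : 2 ≤ q) :
    ((s:ℝ) + 1) * Real.log (2 * (q:ℝ) * Real.log q) * (q:ℝ) ≤ (Nz s q (s+1) : ℝ) := by
  have he : ((s + 2 : ℕ) - 1 : ℝ) * Real.log (2 * (q:ℝ) * Real.log (q:ℝ)) *
      (4 * Real.log (q:ℝ)) ^ (s + 2 - 1 - (s+1)) * (q:ℝ) ^ (s + 2 - (s+1))
      = ((s:ℝ) + 1) * Real.log (2 * (q:ℝ) * Real.log q) * (q:ℝ) := by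
    rw [show s + 2 - 1 - (s+1) = 0 by omega, show s + 2 - (s+1) = 1 by omega]
    push_cast
    ring
  calc ((s:ℝ) + 1) * Real.log (2 * (q:ℝ) * Real.log q) * (q:ℝ)
      = ((s + 2 : ℕ) - 1 : ℝ) * Real.log (2 * (q:ℝ) * Real.log (q:ℝ)) *
        (4 * Real.log (q:ℝ)) ^ (s + 2 - 1 - (s+1)) * (q:ℝ) ^ (s + 2 - (s+1)) := he.symm
    _ ≤ (Nz s q (s+1) : ℝ) := Nat.le_ceil _

private lemma Nz_last_ub (s q : ℕ) (hq : 2 ≤ q) :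
    (Nz s q (s+1) : ℝ) ≤ ((s:ℝ) + 1) * Real.log (2 * (q:ℝ) * Real.log q) * (q:ℝ) + 1 := by
  have he : ((s + 2 : ℕ) - 1 : ℝ) * Real.log (2 * (q:ℝ) * Real.log (q:ℝ)) *
      (4 * Real.log (q:ℝ)) ^ (s + 2 - 1 - (s+1)) * (q:ℝ) ^ (s + 2 - (s+1))
      = ((s:ℝ) + 1) * Real.log (2 * (q:ℝ) * Real.log q) * (q:ℝ) := by
    rw [show s + 2 - 1 - (s+1) = 0 by omega, show s + 2 - (s+1) = 1 by omega]
    push_cast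
    ring
  have hpos : (0:ℝ) ≤ ((s:ℝ) + 1) * Real.log (2 * (q:ℝ) * Real.log q) * (q:ℝ) := by
    have hA : 1 ≤ Real.log (2 * (q:ℝ) * Real.log q) := A_ge_one hq
    have hs0 : (0:ℝ) ≤ (s:ℝ) := Nat.cast_nonneg s
    have hy : (2:ℝ) ≤ (q:ℝ) := cast_two_le hq
    exact mul_nonneg (mul_nonneg (by linarith) (by linarith)) (by linarith)
  have h2 : (Nz s q (s+1) : ℝ) < ((s + 2 : ℕ) - 1 : ℝ) *
      Real.log (2 * (q:ℝ) * Real.log (q:ℝ)) *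
      (4 * Real.log (q:ℝ)) ^ (s + 2 - 1 - (s+1)) * (q:ℝ) ^ (s + 2 - (s+1)) + 1 := by
    unfold Nz
    exact Nat.ceil_lt_add_one (by rw [he]; exact hpos)
  rw [he] at h2
  linarith

/-- The code-size condition at level `i ≤ s`. -/
private lemma Nz_code_cond (s q i : ℕ) (hs : 1 ≤ s) (hq : 2 ≤ q) (hi : i ≤ s) :
    3 * (q:ℝ) * Real.log q * ((Nz s q (s+1) : ℝ) * (Lq q : ℝ) ^ (s - i)) ≤ (Nz s q i : ℝ) := by
  set y : ℝ := (q:ℝ) with hyy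
  set x : ℝ := Real.log (q:ℝ) with hxx
  set A : ℝ := Real.log (2 * y * x) with hAA
  have hx : 0 < x := logq_pos hq
  have hy : (2:ℝ) ≤ y := cast_two_le hq
  have hA : 1 ≤ A := A_ge_one hq
  have hs1 : (2:ℝ) ≤ (s:ℝ) + 1 := by
    have : (1:ℝ) ≤ (s:ℝ) := by exact_mod_cast hs
    linarith
  have hxl2 : (0.6931471803 : ℝ) < Real.log 2 := Real.log_two_gt_d9
  have hxlb : (0.6931471803 : ℝ) < x := lt_of_lt_of_le hxl2 (logq_ge_log2 hq)
  set k : ℕ := s - i with hkk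
  -- upper bound on the last part size
  have hP4 : (4:ℝ) ≤ ((s:ℝ)+1) * A * y := by
    have t1 : (2:ℝ) * 1 ≤ ((s:ℝ)+1) * A := mul_le_mul hs1 hA zero_le_one (by linarith)
    have t2 : ((2:ℝ) * 1) * 2 ≤ (((s:ℝ)+1) * A) * y :=
      mul_le_mul t1 hy (by norm_num) (by linarith)
    linarith
  have hNub : (Nz s q (s+1) : ℝ) ≤ (5/4) * (((s:ℝ)+1) * A * y) := by
    have := Nz_last_ub s q hq
    rw [← hyy, ← hAA] at this
    linarith
  have hLub : (Lq q : ℝ) ≤ 4 * y * x := by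
    have := Lq_ub hq
    rw [← hyy, ← hxx] at this
    nlinarith
  have hLpow : ((Lq q : ℝ)) ^ k ≤ (4 * y * x) ^ k := by
    apply pow_le_pow_left₀ (Nat.cast_nonneg _)
    exact hLub
  -- the value of Nz i
  have hei : ((s + 2 : ℕ) - 1 : ℝ) * A * (4 * x) ^ (s + 2 - 1 - i) * y ^ (s + 2 - i)
      = ((s:ℝ) + 1) * A * ((4*x) ^ (k+1)) * y ^ (k+2) := by
    rw [show s + 2 - 1 - i = k + 1 by omega, show s + 2 - i = k + 2 by omega]
    push_cast
    ring
  have hlb : ((s:ℝ) + 1) * A * ((4*x) ^ (k+1)) * y ^ (k+2) ≤ (Nz s q i : ℝ) := by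
    calc ((s:ℝ) + 1) * A * ((4*x) ^ (k+1)) * y ^ (k+2)
        = ((s + 2 : ℕ) - 1 : ℝ) * A * (4 * x) ^ (s + 2 - 1 - i) * y ^ (s + 2 - i) := hei.symm
      _ ≤ (Nz s q i : ℝ) := Nat.le_ceil _
  -- the chain
  have hsplit : (4 * y * x) ^ k = (4 * x) ^ k * y ^ k := by
    rw [show (4 * y * x : ℝ) = (4 * x) * y by ring, mul_pow]
  have hchain : 3 * y * x * ((Nz s q (s+1) : ℝ) * (Lq q : ℝ) ^ k)
      ≤ ((s:ℝ) + 1) * A * ((4*x) ^ (k+1)) * y ^ (k+2) := by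
    have h1 : 3 * y * x * ((Nz s q (s+1) : ℝ) * (Lq q : ℝ) ^ k)
        ≤ 3 * y * x * ((5/4) * (((s:ℝ)+1) * A * y) * (4 * y * x) ^ k) := by
      apply mul_le_mul_of_nonneg_left _ (by positivity)
      apply mul_le_mul hNub hLpow (by positivity) (by positivity)
    have h2 : 3 * y * x * ((5/4) * (((s:ℝ)+1) * A * y) * (4 * y * x) ^ k)
        = (15/4) * (((s:ℝ)+1) * A * (y^2 * x) * ((4 * x) ^ k * y ^ k)) := by
      rw [hsplit]; ring
    have h3 : (15/4) * (((s:ℝ)+1) * A * (y^2 * x) * ((4 * x) ^ k * y ^ k))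
        ≤ 4 * (((s:ℝ)+1) * A * (y^2 * x) * ((4 * x) ^ k * y ^ k)) := by
      have hge : (0:ℝ) ≤ ((s:ℝ)+1) * A * (y^2 * x) * ((4 * x) ^ k * y ^ k) := by positivity
      linarith
    have h4 : 4 * (((s:ℝ)+1) * A * (y^2 * x) * ((4 * x) ^ k * y ^ k))
        = ((s:ℝ) + 1) * A * ((4*x) ^ (k+1)) * y ^ (k+2) := by
      rw [pow_succ (4*x) k, pow_add y k 2]
      ring
    linarith
  calc 3 * y * x * ((Nz s q (s+1) : ℝ) * (Lq q : ℝ) ^ k)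
      ≤ ((s:ℝ) + 1) * A * ((4*x) ^ (k+1)) * y ^ (k+2) := hchain
    _ ≤ (Nz s q i : ℝ) := hlb

/-- The hitting condition. -/
private lemma Nz_hit_cond (s q : ℕ) (hq : 2 ≤ q) :
    ((s:ℝ) + 1) * Real.log (Lq q) <
      (Nz s q (s+1) : ℝ) * (Real.log q - Real.log ((q:ℝ) - 1)) := by
  have hc := c_pos hq
  have hlog := logL_lt hq
  have hlb := Nz_last_lb s q hq
  have hs0 : (0:ℝ) < (s:ℝ) + 1 := by positivity
  have hL0 : (0:ℝ) ≤ Real.log (Lq q) := by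
    have h1 : (1:ℝ) ≤ (Lq q : ℝ) := by exact_mod_cast Lq_pos hq
    exact Real.log_nonneg h1
  have step1 : ((s:ℝ) + 1) * Real.log (Lq q)
      < ((s:ℝ) + 1) * (Real.log (2 * (q:ℝ) * Real.log q) *
          ((q:ℝ) * (Real.log q - Real.log ((q:ℝ) - 1)))) :=
    mul_lt_mul_of_pos_left hlog hs0
  have step2 : ((s:ℝ) + 1) * (Real.log (2 * (q:ℝ) * Real.log q) *
          ((q:ℝ) * (Real.log q - Real.log ((q:ℝ) - 1))))
      = (((s:ℝ) + 1) * Real.log (2 * (q:ℝ) * Real.log q) * (q:ℝ)) *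
          (Real.log q - Real.log ((q:ℝ) - 1)) := by ring
  have step3 : (((s:ℝ) + 1) * Real.log (2 * (q:ℝ) * Real.log q) * (q:ℝ)) *
          (Real.log q - Real.log ((q:ℝ) - 1))
      ≤ (Nz s q (s+1) : ℝ) * (Real.log q - Real.log ((q:ℝ) - 1)) :=
    mul_le_mul_of_nonneg_right hlb (le_of_lt hc)
  linarith



/-- For `r ≥ 3`, `q ≥ 2` and `nᵢ = ⌈(r-1)·ln(2q ln q)·(4 ln q)^(r-i)·q^(r+1-i)⌉` (`1 ≤ i ≤ r`),
the complete `r`-partite directed cycle `C⃗_{n₁,…,n_r}` is `q`-solvable.  The part with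
`Fin r`-index `i` (zero-based) is part number `i + 1`, and every vertex of part `i` sees
every vertex of part `i + 1` (cyclically). -/
theorem stmt1 (r q : ℕ) (hr : 3 ≤ r) (hq : 2 ≤ q) :
    Solvable (fun v w : (Σ i : Fin r,
        Fin ⌈((r : ℝ) - 1) * Real.log (2 * q * Real.log q) *
          (4 * Real.log q) ^ (r - 1 - (i : ℕ)) * (q : ℝ) ^ (r - (i : ℕ))⌉₊) =>
      (w.1 : ℕ) = ((v.1 : ℕ) + 1) % r) q := by
  obtain ⟨s, rfl⟩ : ∃ s, r = s + 2 := ⟨r - 2, by omega⟩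
  have hs : 1 ≤ s := by omega
  have hL1 : 1 ≤ Lq q := Lq_pos hq
  refine core q (Lq q) s hq hL1 (fun j => Nz s q j) ?_ ?_
  · -- the codes exist
    intro i hi
    apply exists_code q (Nz s q i) (Lq q) _ hq
    have hcard : Fintype.card (Fin (KK (Lq q) s i) → (Fin (Nz s q (s+1)) → Fin q))
        = q ^ (Nz s q (s+1) * KK (Lq q) s i) := by
      rw [Fintype.card_fun, Fintype.card_fun, Fintype.card_fin, Fintype.card_fin, Fintype.card_fin, ← pow_mul]
    rw [hcard]
    apply code_count q (Lq q) (Nz s q i) (Nz s q (s+1) * KK (Lq q) s i) hq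
      (Nz_pos hq i) (Lq_lb q)
    have h := Nz_code_cond s q i hs hq hi
    simp only [KK]
    push_cast
    push_cast at h
    linarith
  · -- the hitting vectors exist
    intro S hS
    apply exists_hitting q (Nz s q (s+1)) S
    calc S.card * (q - 1) ^ (Nz s q (s+1))
        ≤ (Lq q) ^ (s+1) * (q - 1) ^ (Nz s q (s+1)) := Nat.mul_le_mul_right _ hS
      _ < q ^ (Nz s q (s+1)) := by
          apply hit_count q (Lq q) (Nz s q (s+1)) (s+1) hq hL1
          have h := Nz_hit_cond s q hq
          push_cast
          linarith
end

section
/- Let G be a finite graph with maximum degree Δ ≥ 1. Then for every integer q with q ≥ e·Δ, G is not q-solvable; equivalently, HG(G) < e·Δ. -/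
namespace HatProof

open Finset Function

variable {V : Type*} [Fintype V] [DecidableEq V] {q : ℕ}
  (g : V → (V → Fin q) → Fin q)

/-- Colorings on which no vertex of `T` guesses correctly. -/
def bad (T : Finset V) : Finset (V → Fin q) :=
  univ.filter fun x => ∀ v ∈ T, g v x ≠ x v

/-- Colorings in `bad T` on which `v` guesses correctly. -/
def win (T : Finset V) (v : V) : Finset (V → Fin q) :=
  (bad g T).filter fun x => g v x = x v

lemma mem_bad {T : Finset V} {x : V → Fin q} :
    x ∈ bad g T ↔ ∀ v ∈ T, g v x ≠ x v := by simp [bad]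

lemma bad_antitone {T T' : Finset V} (h : T ⊆ T') : bad g T' ⊆ bad g T := by
  intro x hx
  rw [mem_bad] at hx ⊢
  exact fun v hv => hx v (h hv)

lemma card_bad_insert (T : Finset V) (v : V) :
    ((bad g (insert v T)).card : ℝ) = (bad g T).card - (win g T v).card := by
  have h1 : bad g (insert v T) = (bad g T).filter fun x => ¬ g v x = x v := by
    ext x
    simp only [mem_bad, mem_filter, mem_insert]
    constructor
    · intro h; exact ⟨fun u hu => h u (Or.inr hu), h v (Or.inl rfl)⟩
    · rintro ⟨h2, h3⟩ u hu
      rcases hu with rfl | hu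
      · exact h3
      · exact h2 u hu
  have h2 := Finset.card_filter_add_card_filter_not
    (s := bad g T) (p := fun x => g v x = x v)
  rw [h1]
  unfold win
  push_cast [← h2]
  ring


/-- Key exact count: if no vertex of `T` is adjacent (or equal) to `v`, then exactly a
`1/q` fraction of `bad T` has `v` guessing correctly. -/
lemma card_bad_eq_q_mul {G : SimpleGraph V} [DecidableRel G.Adj]
    (hg : IsHatStrategy G.Adj q g) (T : Finset V) (v : V)
    (hv : v ∉ T) (hadj : ∀ u ∈ T, ¬ G.Adj v u) :
    ((bad g T).card : ℕ) = q * (win g T v).card := by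
  have hupd : ∀ (x : V → Fin q) (i : Fin q) (u : V), ¬ G.Adj u v →
      g u (Function.update x v i) = g u x := by
    intro x i u hu
    refine hg u _ _ (fun w hw => ?_)
    exact Function.update_of_ne (fun h => hu (by rw [← h]; exact hw)) _ _
  have hvv : ¬ G.Adj v v := G.loopless.irrefl v
  have hbadupd : ∀ (x : V → Fin q) (i : Fin q), x ∈ bad g T →
      Function.update x v i ∈ bad g T := by
    intro x i hx
    rw [mem_bad] at hx ⊢
    intro u hu
    have huv : u ≠ v := fun h => hv (h ▸ hu)
    rw [hupd x i u (fun h => hadj u hu h.symm), Function.update_of_ne huv]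
    exact hx u hu
  have key : (bad g T).card = ((win g T v) ×ˢ (univ : Finset (Fin q))).card := by
    refine Finset.card_bij' (i := fun x _ => (Function.update x v (g v x), x v))
      (j := fun p _ => Function.update p.1 v p.2) ?_ ?_ ?_ ?_
    · intro x hx
      rw [Finset.mem_product]
      refine ⟨?_, Finset.mem_univ _⟩
      rw [win, mem_filter]
      exact ⟨hbadupd x _ hx, by simp only [hupd x _ v hvv, Function.update_self]⟩
    · intro p hp
      rw [Finset.mem_product, win, mem_filter] at hp
      exact hbadupd p.1 p.2 hp.1.1
    · intro x hx
      simp only [Function.update_idem, Function.update_eq_self]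
    · intro p hp
      rw [Finset.mem_product, win, mem_filter] at hp
      have h1 : g v (Function.update p.1 v p.2) = p.1 v := by
        rw [hupd p.1 p.2 v hvv]; exact hp.1.2
      ext <;> simp [h1, Function.update_idem, Function.update_eq_self,
        Function.update_self]
  rw [key, Finset.card_product]
  simp [mul_comm]


/-- Main LLL-style estimate, by strong induction on `T`. -/
lemma main {G : SimpleGraph V} [DecidableRel G.Adj]
    (hg : IsHatStrategy G.Adj q g) {Δ : ℕ}
    (hdeg : ∀ v : V, (G.neighborFinset v).card ≤ Δ)
    {β : ℝ} (hβ0 : 0 < β) (hβ1 : β < 1)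
    (hqβ : 1 ≤ (q : ℝ) * β * (1 - β) ^ (Δ - 1)) :
    ∀ T : Finset V, ∀ v ∉ T,
      (q : ℝ) * (1 - β) ^ ((T ∩ G.neighborFinset v).card) * ((win g T v).card : ℝ)
        ≤ ((bad g T).card : ℝ) := by
  intro T
  induction T using Finset.strongInduction with
  | _ T ih =>
    intro v hv
    -- Step: for strictly smaller sets, inserting a vertex with ≤ Δ-1 constrained
    -- neighbors loses at most a (1-β) factor.
    have step : ∀ S : Finset V, S ⊂ T → ∀ w ∉ S,
        (S ∩ G.neighborFinset w).card + 1 ≤ Δ →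
        (1 - β) * ((bad g S).card : ℝ) ≤ ((bad g (insert w S)).card : ℝ) := by
      intro S hS w hw hcap
      have h1 := ih S hS w hw
      have hk : (S ∩ G.neighborFinset w).card ≤ Δ - 1 := by omega
      have hpow : (1 - β) ^ (Δ - 1) ≤ (1 - β) ^ ((S ∩ G.neighborFinset w).card) :=
        pow_le_pow_of_le_one (by linarith) (by linarith) hk
      have hwin : ((win g S w).card : ℝ) ≤ β * ((bad g S).card : ℝ) := by
        have h2 : 1 ≤ (q : ℝ) * β * (1 - β) ^ ((S ∩ G.neighborFinset w).card) := by
          calc (1:ℝ) ≤ (q : ℝ) * β * (1 - β) ^ (Δ - 1) := hqβ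
          _ ≤ _ := by
            apply mul_le_mul_of_nonneg_left hpow
            exact mul_nonneg (Nat.cast_nonneg _) (le_of_lt hβ0)
        have h3 : ((win g S w).card : ℝ)
            = ((win g S w).card : ℝ) * 1 := by ring
        have h4 : 0 ≤ ((win g S w).card : ℝ) := Nat.cast_nonneg _
        calc ((win g S w).card : ℝ)
            ≤ ((win g S w).card : ℝ) * ((q : ℝ) * β * (1 - β) ^ ((S ∩ G.neighborFinset w).card)) := by
              nlinarith
          _ = β * ((q : ℝ) * (1 - β) ^ ((S ∩ G.neighborFinset w).card) * ((win g S w).card : ℝ)) := by ring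
          _ ≤ β * ((bad g S).card : ℝ) := by
              apply mul_le_mul_of_nonneg_left h1 (le_of_lt hβ0)
      rw [card_bad_insert]
      linarith
    -- Peeling the constrained neighbors of v one by one.
    have peel : ∀ K : Finset V, K ⊆ T ∩ G.neighborFinset v →
        (1 - β) ^ K.card * ((bad g (T \ K)).card : ℝ) ≤ ((bad g T).card : ℝ) := by
      intro K
      induction K using Finset.induction_on with
      | empty => intro _; simp
      | @insert w K hwK ihK =>
        intro hsub
        have hwTN := Finset.mem_inter.mp (hsub (Finset.mem_insert_self w K))
        have hwT : w ∈ T := hwTN.1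
        have hwN : w ∈ G.neighborFinset v := hwTN.2
        have hKsub : K ⊆ T ∩ G.neighborFinset v := fun u hu => hsub (Finset.mem_insert_of_mem hu)
        have hins : insert w (T \ insert w K) = T \ K := by
          ext u
          by_cases h : u = w
          · subst h
            simp [hwT, hwK]
          · simp [Finset.mem_insert, Finset.mem_sdiff, h]
        have hwS : w ∉ T \ insert w K := by simp
        have hSsubT : T \ insert w K ⊂ T := by
          apply Finset.sdiff_ssubset
          · rw [Finset.insert_subset_iff]
            exact ⟨hwT, fun u hu => (Finset.mem_inter.mp (hKsub hu)).1⟩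
          · exact ⟨w, Finset.mem_insert_self w K⟩
        have hvS : v ∉ T \ insert w K := fun h => hv (Finset.mem_sdiff.mp h).1
        have hvNw : v ∈ G.neighborFinset w := by
          rw [SimpleGraph.mem_neighborFinset] at hwN ⊢
          exact hwN.symm
        have hcap : ((T \ insert w K) ∩ G.neighborFinset w).card + 1 ≤ Δ := by
          have hsub2 : (T \ insert w K) ∩ G.neighborFinset w ⊆ (G.neighborFinset w).erase v := by
            intro u hu
            rw [Finset.mem_erase]
            refine ⟨fun h => hvS (h ▸ (Finset.mem_inter.mp hu).1), (Finset.mem_inter.mp hu).2⟩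
          have hle := Finset.card_le_card hsub2
          rw [Finset.card_erase_of_mem hvNw] at hle
          have hd := hdeg w
          have hpos : 1 ≤ (G.neighborFinset w).card := Finset.card_pos.mpr ⟨v, hvNw⟩
          omega
        have hstep := step (T \ insert w K) hSsubT w hwS hcap
        rw [hins] at hstep
        calc (1 - β) ^ (insert w K).card * ((bad g (T \ insert w K)).card : ℝ)
            = (1 - β) ^ K.card * ((1 - β) * ((bad g (T \ insert w K)).card : ℝ)) := by
              rw [Finset.card_insert_of_notMem hwK, pow_succ]
              ring
          _ ≤ (1 - β) ^ K.card * ((bad g (T \ K)).card : ℝ) := by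
              apply mul_le_mul_of_nonneg_left hstep
              exact pow_nonneg (by linarith) _
          _ ≤ ((bad g T).card : ℝ) := ihK hKsub
    have hKfull := peel (T ∩ G.neighborFinset v) Finset.Subset.rfl
    have hadj : ∀ u ∈ T \ (T ∩ G.neighborFinset v), ¬ G.Adj v u := by
      intro u hu h
      rw [Finset.mem_sdiff] at hu
      exact hu.2 (Finset.mem_inter.mpr ⟨hu.1, (SimpleGraph.mem_neighborFinset _ _ _).mpr h⟩)
    have hvT' : v ∉ T \ (T ∩ G.neighborFinset v) := fun h => hv (Finset.mem_sdiff.mp h).1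
    have hA := card_bad_eq_q_mul g hg (T \ (T ∩ G.neighborFinset v)) v hvT' hadj
    have hA' : ((bad g (T \ (T ∩ G.neighborFinset v))).card : ℝ)
        = (q : ℝ) * ((win g (T \ (T ∩ G.neighborFinset v)) v).card : ℝ) := by
      exact_mod_cast hA
    have hmono : ((win g T v).card : ℝ) ≤ ((win g (T \ (T ∩ G.neighborFinset v)) v).card : ℝ) := by
      exact_mod_cast Finset.card_le_card
        (Finset.filter_subset_filter _ (bad_antitone g Finset.sdiff_subset))
    calc (q : ℝ) * (1 - β) ^ ((T ∩ G.neighborFinset v).card) * ((win g T v).card : ℝ)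
        ≤ (q : ℝ) * (1 - β) ^ ((T ∩ G.neighborFinset v).card)
            * ((win g (T \ (T ∩ G.neighborFinset v)) v).card : ℝ) := by
          apply mul_le_mul_of_nonneg_left hmono
          exact mul_nonneg (Nat.cast_nonneg _) (pow_nonneg (by linarith) _)
      _ = (1 - β) ^ ((T ∩ G.neighborFinset v).card)
            * ((bad g (T \ (T ∩ G.neighborFinset v))).card : ℝ) := by
          rw [hA']; ring
      _ ≤ ((bad g T).card : ℝ) := hKfull


lemma bad_pos {G : SimpleGraph V} [DecidableRel G.Adj]
    (hg : IsHatStrategy G.Adj q g) (hq1 : 1 ≤ q) {Δ : ℕ}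
    (hdeg : ∀ v : V, (G.neighborFinset v).card ≤ Δ)
    {β : ℝ} (hβ0 : 0 < β) (hβ1 : β < 1)
    (hqβ : 1 ≤ (q : ℝ) * β * (1 - β) ^ (Δ - 1))
    (hc : 1 < (q : ℝ) * (1 - β) ^ Δ) :
    ∀ T : Finset V, 0 < (bad g T).card := by
  intro T
  induction T using Finset.induction_on with
  | empty =>
    apply Finset.card_pos.mpr
    refine ⟨fun _ => ⟨0, by omega⟩, ?_⟩
    rw [mem_bad]
    intro v hv
    exact absurd hv (Finset.notMem_empty v)
  | @insert v T hvT ihT =>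
    have h1 := main g hg hdeg hβ0 hβ1 hqβ T v hvT
    have hk : (T ∩ G.neighborFinset v).card ≤ Δ :=
      le_trans (Finset.card_le_card Finset.inter_subset_right) (hdeg v)
    have hpow : (1 - β) ^ Δ ≤ (1 - β) ^ ((T ∩ G.neighborFinset v).card) :=
      pow_le_pow_of_le_one (by linarith) (by linarith) hk
    have h2 : (q : ℝ) * (1 - β) ^ Δ * ((win g T v).card : ℝ) ≤ ((bad g T).card : ℝ) := by
      refine le_trans ?_ h1
      apply mul_le_mul_of_nonneg_right _ (Nat.cast_nonneg _)
      exact mul_le_mul_of_nonneg_left hpow (Nat.cast_nonneg _)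
    have hbadT : (0:ℝ) < ((bad g T).card : ℝ) := by exact_mod_cast ihT
    have hwin_lt : ((win g T v).card : ℝ) < ((bad g T).card : ℝ) := by
      rcases eq_or_lt_of_le (Nat.cast_nonneg (win g T v).card : (0:ℝ) ≤ _) with h0 | h0
      · rw [← h0]; exact hbadT
      · have h3 : ((win g T v).card : ℝ) * 1 < ((win g T v).card : ℝ) * ((q : ℝ) * (1 - β) ^ Δ) :=
          mul_lt_mul_of_pos_left hc h0
        nlinarith
    have : (0:ℝ) < ((bad g (insert v T)).card : ℝ) := by
      rw [card_bad_insert]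
      linarith
    exact_mod_cast this

end HatProof

/-- If `G` is a finite graph with maximum degree `Δ ≥ 1`, then `G` is not `q`-solvable
for any integer `q ≥ e·Δ`; i.e. `HG(G) < e·Δ`. -/
theorem stmt2 {V : Type*} [Fintype V] (G : SimpleGraph V) [DecidableRel G.Adj]
    (hΔ : 1 ≤ G.maxDegree) (q : ℕ) (hq : Real.exp 1 * G.maxDegree ≤ q) :
    ¬ Solvable G.Adj q := by
  classical
  rintro ⟨g, hg, hwin⟩
  set Δ : ℕ := G.maxDegree with hΔdef
  have hdeg : ∀ v : V, (G.neighborFinset v).card ≤ Δ := fun v => by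
    rw [SimpleGraph.card_neighborFinset_eq_degree]
    exact G.degree_le_maxDegree v
  set D : ℝ := (Δ : ℝ) with hDdef
  have hDne : D ≠ 0 := by
    rw [hDdef]
    exact Nat.cast_ne_zero.mpr (by omega)
  have hD1 : (1:ℝ) ≤ D := by rw [hDdef]; exact_mod_cast hΔ
  have hD0 : (0:ℝ) < D := by linarith
  have hD10 : (0:ℝ) < D + 1 := by linarith
  set β : ℝ := 1/(D+1) with hβ
  have hβ0 : 0 < β := by rw [hβ]; positivity
  have h1β : 1 - β = D / (D+1) := by rw [hβ]; field_simp; ring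
  have hβ1 : β < 1 := by rw [hβ, div_lt_one hD10]; linarith
  have hppos : (0:ℝ) < 1 - β := by rw [h1β]; positivity
  -- the exponential estimate (1+1/Δ)^Δ < e
  have hexp : (1 + 1/D)^Δ < Real.exp 1 := by
    have h0 : (1/D : ℝ) ≠ 0 := one_div_ne_zero (ne_of_gt hD0)
    have h1 : 1 + 1/D < Real.exp (1/D) := by
      have := Real.add_one_lt_exp h0
      linarith
    have h2 : (1 + 1/D)^Δ < (Real.exp (1/D))^Δ :=
      pow_lt_pow_left₀ h1 (by positivity) (by omega)
    have h3 : (Real.exp (1/D))^Δ = Real.exp 1 := by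
      rw [← Real.exp_nat_mul]
      congr 1
      rw [← hDdef]
      field_simp
    linarith
  have hq' : D * (1 + 1/D)^Δ < (q:ℝ) := by
    calc D * (1 + 1/D)^Δ < D * Real.exp 1 := by
          exact mul_lt_mul_of_pos_left hexp hD0
      _ = Real.exp 1 * D := by ring
      _ ≤ (q:ℝ) := hq
  have hmulpow : ((1 + 1/D) * (1 - β)) = 1 := by
    rw [h1β]; field_simp
  have hDq : D < (q:ℝ) * (1 - β)^Δ := by
    have hst := mul_lt_mul_of_pos_right hq' (pow_pos hppos Δ)
    calc D = D * (((1 + 1/D) * (1 - β))^Δ) := by rw [hmulpow]; simp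
      _ = D * (1 + 1/D)^Δ * (1 - β)^Δ := by rw [mul_pow]; ring
      _ < (q:ℝ) * (1 - β)^Δ := hst
  have hc : 1 < (q:ℝ) * (1 - β)^Δ := lt_of_le_of_lt hD1 hDq
  have hβa : β = (1 - β)/D := by
    have hDne' : D ≠ 0 := ne_of_gt hD0
    have hD1ne : D + 1 ≠ 0 := ne_of_gt hD10
    rw [h1β, hβ]
    field_simp
  have hpowsplit : (1 - β)^Δ = (1 - β)^(Δ-1) * (1 - β) := by
    conv_lhs => rw [show Δ = (Δ-1)+1 by omega]
    rw [pow_succ]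
  have hqβ : 1 ≤ (q : ℝ) * β * (1 - β) ^ (Δ - 1) := by
    have heq : (q : ℝ) * β * (1 - β) ^ (Δ - 1) = ((q:ℝ) * (1 - β)^Δ) / D := by
      calc (q : ℝ) * β * (1 - β) ^ (Δ - 1)
          = (q : ℝ) * ((1 - β)/D) * (1 - β)^(Δ-1) := by rw [← hβa]
        _ = ((q:ℝ) * ((1 - β)^(Δ-1) * (1 - β))) / D := by ring
        _ = ((q:ℝ) * (1 - β)^Δ) / D := by rw [← hpowsplit]
    rw [heq, le_div_iff₀ hD0]
    linarith
  have hq1 : 1 ≤ q := by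
    have hle1 : (1 - β)^Δ ≤ (1:ℝ) := by
      apply pow_le_one₀ (le_of_lt hppos)
      linarith
    have : (1:ℝ) < (q:ℝ) := by nlinarith [(Nat.cast_nonneg q : (0:ℝ) ≤ (q:ℝ))]
    exact_mod_cast le_of_lt this
  have hpos := HatProof.bad_pos g hg hq1 hdeg hβ0 hβ1 hqβ hc Finset.univ
  obtain ⟨x, hx⟩ := Finset.card_pos.mp hpos
  rw [HatProof.mem_bad] at hx
  obtain ⟨v, hv⟩ := hwin x
  exact hx v (Finset.mem_univ v) hv
end

section
/- Let k, d, q be positive integers and let G be a finite graph such that: (i) the induced subgraph of G on the set of vertices whose degree in G is greater than k is not q-solvable; and (ii) in the induced subgraph of G on the set of vertices whose degree in G is at most k, every vertex has at most d other vertices at distance at most 2 from it (distance measured within that induced subgraph). Then for every integer Q with Q ≥ e·d·q^k, G is not Q-solvable; equivalently, HG(G) < e·d·q^k. -/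
open Finset


lemma count_update {B : Type*} [Fintype B] [DecidableEq B] {Q : ℕ} (hQ0 : 0 < Q)
    (v : B) (E C : Finset (B → Fin Q)) (M : ℕ)
    (hC : ∀ (x : B → Fin Q) (a : Fin Q), x ∈ C → Function.update x v a ∈ C)
    (hE : ∀ x : B → Fin Q, (Finset.univ.filter fun a => Function.update x v a ∈ E).card ≤ M) :
    (E ∩ C).card * Q ≤ M * C.card := by
  classical
  set c0 : Fin Q := ⟨0, hQ0⟩ with hc0
  set f : (B → Fin Q) → (B → Fin Q) := fun x => Function.update x v c0 with hf
  have hself : ∀ (x : B → Fin Q), Function.update (f x) v (x v) = x := by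
    intro x; funext u
    by_cases hu : u = v
    · subst hu; simp
    · simp [hf, Function.update_of_ne hu]
  set t : Finset (B → Fin Q) := C.image f with ht
  have hmem : ∀ x ∈ E ∩ C, f x ∈ t := by
    intro x hx
    exact mem_image_of_mem f (mem_inter.mp hx).2
  have hmemC : ∀ x ∈ C, f x ∈ t := fun x hx => mem_image_of_mem f hx
  have h1 : (E ∩ C).card = ∑ z ∈ t, ((E ∩ C).filter fun x => f x = z).card :=
    card_eq_sum_card_fiberwise hmem
  have h2 : C.card = ∑ z ∈ t, (C.filter fun x => f x = z).card :=
    card_eq_sum_card_fiberwise hmemC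
  have hfibE : ∀ z ∈ t, ((E ∩ C).filter fun x => f x = z).card ≤ M := by
    intro z hz
    refine le_trans (card_le_card_of_injOn (fun x => x v) ?_ ?_) (hE z)
    · intro x hx
      simp only [mem_coe, mem_filter, mem_inter] at hx
      simp only [mem_coe, mem_filter, mem_univ, true_and]
      rw [← hx.2, hself x]
      exact hx.1.1
    · intro x hx y hy hxy
      simp only [coe_filter, Set.mem_setOf_eq] at hx hy
      have ex : Function.update z v (x v) = x := by rw [← hx.2]; exact hself x
      have ey : Function.update z v (y v) = y := by rw [← hy.2]; exact hself y
      simp only at hxy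
      rw [← ex, ← ey, hxy]
  have hfibC : ∀ z ∈ t, (C.filter fun x => f x = z).card = Q := by
    intro z hz
    obtain ⟨x0, hx0, rfl⟩ := mem_image.mp hz
    have hcard : (C.filter fun x => f x = f x0).card = (univ : Finset (Fin Q)).card := by
      refine card_bij' (fun x _ => x v) (fun a _ => Function.update (f x0) v a) ?_ ?_ ?_ ?_
      · intro a ha; exact mem_univ _
      · intro a _
        simp only [mem_filter]
        constructor
        · have : Function.update (f x0) v a = Function.update x0 v a := by
            funext u
            by_cases hu : u = v
            · subst hu; simp
            · simp [hf, Function.update_of_ne hu]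
          rw [this]; exact hC x0 a hx0
        · funext u
          by_cases hu : u = v
          · subst hu; simp [hf]
          · simp [hf, Function.update_of_ne hu]
      · intro x hx
        simp only [mem_filter] at hx
        show Function.update (f x0) v (x v) = x
        rw [← hx.2]; exact hself x
      · intro a _; simp
    simpa using hcard
  calc (E ∩ C).card * Q ≤ (M * t.card) * Q := by
        rw [h1]
        exact Nat.mul_le_mul_right Q (le_trans (sum_le_card_nsmul t _ M hfibE) (by simp [mul_comm]))
    _ = M * C.card := by
        rw [h2, sum_congr rfl hfibC, sum_const, smul_eq_mul]
        ring


open Classical in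
noncomputable def CTx {ι Ω : Type*} [Fintype Ω] (E : ι → Finset Ω) (T : Finset ι) : Finset Ω :=
  Finset.univ.filter fun x => ∀ u ∈ T, x ∉ E u

lemma mem_CTx {ι Ω : Type*} [Fintype Ω] {E : ι → Finset Ω} {T : Finset ι} {x : Ω} :
    x ∈ CTx E T ↔ ∀ u ∈ T, x ∉ E u := by
  classical
  simp [CTx]

lemma CTx_split {ι Ω : Type*} [Fintype Ω] [DecidableEq ι] [DecidableEq Ω]
    (E : ι → Finset Ω) {T : Finset ι}
    {u : ι} (hu : u ∈ T) : CTx E T = CTx E (T.erase u) \ E u := by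
  ext x
  simp only [mem_CTx, mem_sdiff]
  constructor
  · exact fun h => ⟨fun w hw => h w (mem_of_mem_erase hw), h u hu⟩
  · rintro ⟨h1, h2⟩ w hw
    by_cases hwu : w = u
    · subst hwu; exact h2
    · exact h1 w (mem_erase.mpr ⟨hwu, hw⟩)

lemma CTx_mono {ι Ω : Type*} [Fintype Ω] (E : ι → Finset Ω) {T T' : Finset ι}
    (h : T' ⊆ T) : CTx E T ⊆ CTx E T' := by
  intro x hx
  rw [mem_CTx] at hx ⊢
  exact fun u hu => hx u (h hu)

lemma lll {ι Ω : Type*} [Fintype ι] [Fintype Ω] [Nonempty Ω] [DecidableEq Ω]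
    (E : ι → Finset Ω) (Γ : ι → Finset ι) (p c : ℝ) (Δ : ℕ)
    (hΓs : ∀ u v, u ∈ Γ v → v ∈ Γ u) (hΓc : ∀ v, (Γ v).card ≤ Δ)
    (hp : 0 ≤ p) (hc : 1 ≤ c)
    (hpc1 : p * c ^ Δ ≤ c - 1) (hpc2 : p * c ^ Δ < 1)
    (hind : ∀ (v : ι) (T : Finset ι), v ∉ T → (∀ u ∈ T, u ∉ Γ v) →
      (((E v) ∩ CTx E T).card : ℝ) ≤ p * ((CTx E T).card : ℝ)) :
    ∃ x : Ω, ∀ v, x ∉ E v := by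
  classical
  have hc0 : (0:ℝ) < c := lt_of_lt_of_le one_pos hc
  have key : ∀ n (T : Finset ι), T.card ≤ n →
      (0 : ℝ) < ((CTx E T).card : ℝ) ∧
      ∀ v, v ∉ T → ((E v ∩ CTx E T).card : ℝ) ≤ p * c ^ ((T ∩ Γ v).card) * ((CTx E T).card : ℝ) := by
    intro n
    induction n with
    | zero =>
      intro T hT
      have hTe : T = ∅ := card_eq_zero.mp (Nat.le_zero.mp hT)
      subst hTe
      have hCu : CTx E (∅ : Finset ι) = univ := by
        ext x; simp [mem_CTx]
      constructor
      · rw [hCu]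
        exact_mod_cast Finset.univ_nonempty.card_pos
      · intro v _
        simpa using hind v ∅ (by simp) (by simp)
    | succ n ih =>
      intro T hT
      rcases Nat.lt_or_ge T.card (n+1) with hlt | hge
      · exact ih T (Nat.lt_succ_iff.mp hlt)
      have hcard : T.card = n + 1 := le_antisymm hT hge
      have hTne : T.Nonempty := card_pos.mp (by omega)
      have sub_bound : ∀ (u : ι), u ∈ T →
          ((E u ∩ CTx E (T.erase u)).card : ℝ)
            ≤ p * c ^ (((T.erase u) ∩ Γ u).card) * ((CTx E (T.erase u)).card : ℝ) ∧
          (0:ℝ) < ((CTx E (T.erase u)).card : ℝ) := by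
        intro u hu
        have hTe : (T.erase u).card ≤ n := by
          rw [card_erase_of_mem hu]; omega
        obtain ⟨hpos, hb⟩ := ih (T.erase u) hTe
        exact ⟨hb u (notMem_erase u T), hpos⟩
      obtain ⟨u0, hu0⟩ := hTne
      have hpos : (0:ℝ) < ((CTx E T).card : ℝ) := by
        obtain ⟨hb, hpos'⟩ := sub_bound u0 hu0
        have hbb : ((E u0 ∩ CTx E (T.erase u0)).card : ℝ)
            ≤ p * c ^ Δ * ((CTx E (T.erase u0)).card : ℝ) := by
          refine le_trans hb ?_
          have hexp : ((T.erase u0) ∩ Γ u0).card ≤ Δ :=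
            le_trans (card_le_card inter_subset_right) (hΓc u0)
          gcongr
          all_goals first | exact hc | exact hexp
        have hsplit : ((CTx E T).card : ℝ)
            = ((CTx E (T.erase u0)).card : ℝ) - ((CTx E (T.erase u0) ∩ E u0).card : ℝ) := by
          rw [CTx_split E hu0]
          have := Finset.card_inter_add_card_sdiff (CTx E (T.erase u0)) (E u0)
          push_cast [← this]
          ring
        rw [hsplit, inter_comm]
        nlinarith
      refine ⟨hpos, ?_⟩
      intro v hv
      by_cases hvΓ : (T ∩ Γ v) = ∅
      · have h0 : ∀ u ∈ T, u ∉ Γ v := by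
          intro u hu hmem
          exact (eq_empty_iff_forall_notMem.mp hvΓ) u (mem_inter.mpr ⟨hu, hmem⟩)
        have := hind v T hv h0
        rw [hvΓ]
        simpa using this
      obtain ⟨u, hu⟩ := nonempty_of_ne_empty hvΓ
      have huT : u ∈ T := (mem_inter.mp hu).1
      have huΓ : u ∈ Γ v := (mem_inter.mp hu).2
      have hvΓu : v ∈ Γ u := hΓs u v huΓ
      have hΔ1 : 1 ≤ Δ := le_trans (card_pos.mpr ⟨v, hvΓu⟩) (hΓc u)
      set T' := T.erase u with hT'
      obtain ⟨hbu, hpos'⟩ := sub_bound u huT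
      have hsubΓ : (T' ∩ Γ u) ⊆ (Γ u).erase v := by
        intro w hw
        obtain ⟨hw1, hw2⟩ := mem_inter.mp hw
        refine mem_erase.mpr ⟨?_, hw2⟩
        rintro rfl
        exact hv (mem_of_mem_erase hw1)
      have hcardΓ : (T' ∩ Γ u).card ≤ Δ - 1 := by
        refine le_trans (card_le_card hsubΓ) ?_
        rw [card_erase_of_mem hvΓu]
        exact Nat.sub_le_sub_right (hΓc u) 1
      have hbu2 : ((E u ∩ CTx E T').card : ℝ) ≤ p * c ^ (Δ - 1) * ((CTx E T').card : ℝ) := by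
        refine le_trans hbu ?_
        gcongr
        all_goals first | exact hc | exact hcardΓ
      have hfrac : p * c ^ (Δ - 1) * c ≤ c - 1 := by
        have hpow : c ^ (Δ - 1) * c = c ^ Δ := by
          rw [← pow_succ]
          congr 1
          omega
        nlinarith [hpow]
      have h1c : p * c ^ (Δ - 1) ≤ 1 - 1/c := by
        have he : (1:ℝ) - 1/c = (c-1)/c := by field_simp
        rw [he, le_div_iff₀ hc0]
        exact hfrac
      have hsplit : ((CTx E T).card : ℝ)
          = ((CTx E T').card : ℝ) - ((CTx E T' ∩ E u).card : ℝ) := by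
        rw [hT', CTx_split E huT]
        have := Finset.card_inter_add_card_sdiff (CTx E (T.erase u)) (E u)
        push_cast [← this]
        ring
      have hX : ((CTx E T' ∩ E u).card : ℝ) ≤ (1 - 1/c) * ((CTx E T').card : ℝ) := by
        rw [inter_comm]
        refine le_trans hbu2 (mul_le_mul_of_nonneg_right h1c (le_of_lt hpos'))
      have hCT' : ((CTx E T').card : ℝ) ≤ c * ((CTx E T).card : ℝ) := by
        rw [hsplit]
        have hring : ((1:ℝ) - 1/c) * ((CTx E T').card : ℝ)
            = ((CTx E T').card : ℝ) - (1/c) * ((CTx E T').card : ℝ) := by ring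
        have hc1 : c * (1/c) = 1 := by field_simp
        nlinarith [hX, hring, hc1, hpos']
      have hvT' : v ∉ T' := fun h => hv (mem_of_mem_erase h)
      have hbv : ((E v ∩ CTx E T').card : ℝ)
          ≤ p * c ^ ((T' ∩ Γ v).card) * ((CTx E T').card : ℝ) := by
        have hTe : T'.card ≤ n := by rw [hT', card_erase_of_mem huT]; omega
        exact (ih T' hTe).2 v hvT'
      have hm : (T' ∩ Γ v) = (T ∩ Γ v).erase u := by
        rw [hT']
        ext w
        simp only [mem_inter, mem_erase]
        tauto
      have hmpos : 1 ≤ (T ∩ Γ v).card := card_pos.mpr ⟨u, hu⟩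
      have hmcard : (T' ∩ Γ v).card + 1 = (T ∩ Γ v).card := by
        rw [hm, card_erase_of_mem hu]
        omega
      have hmono : ((E v ∩ CTx E T).card : ℝ) ≤ ((E v ∩ CTx E T').card : ℝ) := by
        exact_mod_cast card_le_card
          (inter_subset_inter (Finset.Subset.refl _) (CTx_mono E (erase_subset u T)))
      calc ((E v ∩ CTx E T).card : ℝ) ≤ ((E v ∩ CTx E T').card : ℝ) := hmono
        _ ≤ p * c ^ ((T' ∩ Γ v).card) * ((CTx E T').card : ℝ) := hbv
        _ ≤ p * c ^ ((T' ∩ Γ v).card) * (c * ((CTx E T).card : ℝ)) := by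
            have h0 : (0:ℝ) ≤ p * c ^ ((T' ∩ Γ v).card) := by positivity
            exact mul_le_mul_of_nonneg_left hCT' h0
        _ = p * c ^ ((T ∩ Γ v).card) * ((CTx E T).card : ℝ) := by
            rw [← hmcard, pow_succ]
            ring
  obtain ⟨hpos, _⟩ := key (univ : Finset ι).card univ le_rfl
  have hne : (CTx E (univ : Finset ι)).Nonempty := card_pos.mp (by exact_mod_cast hpos)
  obtain ⟨x, hx⟩ := hne
  exact ⟨x, fun v => (mem_CTx.mp hx) v (mem_univ v)⟩


def colFun {V : Type*} [Fintype V] (G : SimpleGraph V) [DecidableRel G.Adj] (k q Q : ℕ)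
    (hqQ : q ≤ Q)
    (x : {v : V | G.degree v ≤ k} → Fin Q) (y : {v : V | k < G.degree v} → Fin q) :
    V → Fin Q :=
  fun w => if h : G.degree w ≤ k then x ⟨w, h⟩ else Fin.castLE hqQ (y ⟨w, lt_of_not_ge h⟩)

def decQ (q Q : ℕ) (hq : 0 < q) (b : Fin Q) : Fin q :=
  if hb : (b:ℕ) < q then ⟨(b:ℕ), hb⟩ else ⟨0, hq⟩

/-- If the induced subgraph of `G` on the vertices of degree `> k` is not `q`-solvable, and in
the induced subgraph on the vertices of degree `≤ k` every vertex has at most `d` other vertices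
at distance at most `2` from it, then `G` is not `Q`-solvable for any integer `Q ≥ e·d·q^k`. -/
theorem stmt3 {V : Type*} [Fintype V] (G : SimpleGraph V) [DecidableRel G.Adj]
    (k d q : ℕ) (hk : 0 < k) (hd : 0 < d) (hq : 0 < q)
    (h1 : ¬ Solvable (G.induce {v | k < G.degree v}).Adj q)
    (h2 : ∀ v : {v | G.degree v ≤ k},
      ({u : {v | G.degree v ≤ k} | u ≠ v ∧
        (G.induce {v | G.degree v ≤ k}).edist u v ≤ 2}).ncard ≤ d)
    (Q : ℕ) (hQ : Real.exp 1 * d * (q : ℝ) ^ k ≤ Q) :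
    ¬ Solvable G.Adj Q := by
  classical
  rintro ⟨g, hg, hwin⟩
  -- numeric setup
  have he2 : (2:ℝ) < Real.exp 1 := by
    have := Real.add_one_lt_exp (one_ne_zero (α := ℝ))
    linarith
  have hd1 : (1:ℝ) ≤ (d:ℝ) := by exact_mod_cast hd
  have hq1R : (1:ℝ) ≤ (q:ℝ) := by exact_mod_cast hq
  have hqk1 : (1:ℝ) ≤ (q:ℝ) ^ k := one_le_pow₀ hq1R
  have hQR : Real.exp 1 * (d:ℝ) * (q:ℝ)^k ≤ (Q:ℝ) := hQ
  have hedq : (2:ℝ) ≤ Real.exp 1 * (d:ℝ) * (q:ℝ)^k := by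
    calc (2:ℝ) = 2 * 1 * 1 := by ring
      _ ≤ Real.exp 1 * (d:ℝ) * (q:ℝ)^k := by gcongr <;> linarith
  have hQpos : 0 < Q := by
    have h0 : (0:ℝ) < (Q:ℝ) := by linarith
    exact_mod_cast h0
  have hqQ : q ≤ Q := by
    have hr : (q:ℝ) ≤ (Q:ℝ) := by
      have hself : (q:ℝ) ≤ (q:ℝ)^k := le_self_pow₀ (by linarith) (Nat.pos_iff_ne_zero.mp hk)
      have h4 : (q:ℝ)^k = 1 * 1 * (q:ℝ)^k := by ring
      have h5 : (1:ℝ) * 1 * (q:ℝ)^k ≤ Real.exp 1 * (d:ℝ) * (q:ℝ)^k := by gcongr <;> linarith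
      linarith
    exact_mod_cast hr
  set col := colFun G k q Q hqQ with hcol
  -- locality of the strategy composed with colFun
  have hgcol : ∀ (w : V) (x x' : {v : V | G.degree v ≤ k} → Fin Q)
      (y y' : {v : V | k < G.degree v} → Fin q),
      (∀ u : {v : V | G.degree v ≤ k}, G.Adj w u.1 → x u = x' u) →
      (∀ u : {v : V | k < G.degree v}, G.Adj w u.1 → y u = y' u) →
      g w (col x y) = g w (col x' y') := by
    intro w x x' y y' hxB hyA
    apply hg w
    intro u hu
    by_cases hb : G.degree u ≤ k
    · simp only [hcol, colFun, dif_pos hb]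
      exact hxB ⟨u, hb⟩ hu
    · simp only [hcol, colFun, dif_neg hb]
      exact congrArg _ (hyA ⟨u, lt_of_not_ge hb⟩ hu)
  -- events, supports, dependency sets
  set Ev : {v : V | G.degree v ≤ k} → Finset ({v : V | G.degree v ≤ k} → Fin Q) :=
    fun v => Finset.univ.filter (fun x => ∃ y, g v.1 (col x y) = x v) with hEv
  set S : {v : V | G.degree v ≤ k} → Finset {v : V | G.degree v ≤ k} :=
    fun v => Finset.univ.filter (fun u => u = v ∨ G.Adj u.1 v.1) with hS
  set Γ : {v : V | G.degree v ≤ k} → Finset {v : V | G.degree v ≤ k} :=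
    fun v => Finset.univ.filter (fun u => u ≠ v ∧ (S u ∩ S v).Nonempty) with hΓ
  have hSself : ∀ v, v ∈ S v := by
    intro v; simp [hS]
  have hEdet : ∀ (u : {v : V | G.degree v ≤ k}) (x x' : {v : V | G.degree v ≤ k} → Fin Q),
      (∀ w ∈ S u, x w = x' w) → x ∈ Ev u → x' ∈ Ev u := by
    intro u x x' hagree hx
    simp only [hEv, mem_filter, mem_univ, true_and] at hx ⊢
    obtain ⟨y, hy⟩ := hx
    refine ⟨y, ?_⟩
    have h1' : g u.1 (col x' y) = g u.1 (col x y) := by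
      refine hgcol u.1 x' x y y ?_ (fun _ _ => rfl)
      intro w hw
      exact (hagree w (by simp [hS, G.adj_symm hw])).symm
    rw [h1', hy]
    exact hagree u (hSself u)
  -- fiber bound
  have hfiber : ∀ (v : {v : V | G.degree v ≤ k}) (x : {v : V | G.degree v ≤ k} → Fin Q),
      (Finset.univ.filter fun a : Fin Q => Function.update x v a ∈ Ev v).card ≤ q ^ k := by
    intro v x
    set F : ({v : V | k < G.degree v} → Fin q) → Fin Q := fun y => g v.1 (col x y) with hF
    have hupd : ∀ (a : Fin Q) (y : {v : V | k < G.degree v} → Fin q),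
        g v.1 (col (Function.update x v a) y) = F y := by
      intro a y
      refine hgcol v.1 _ x y y ?_ (fun _ _ => rfl)
      intro u hu
      have hne : u ≠ v := by
        intro h
        subst h
        exact G.irrefl hu
      exact Function.update_of_ne hne a x
    have hsub1 : (Finset.univ.filter fun a : Fin Q => Function.update x v a ∈ Ev v)
        ⊆ Finset.univ.image F := by
      intro a ha
      simp only [hEv, mem_filter, mem_univ, true_and] at ha
      obtain ⟨y, hy⟩ := ha
      rw [hupd a y, Function.update_self] at hy
      exact mem_image.mpr ⟨y, mem_univ y, hy⟩
    -- factor through the A-neighbours of v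
    have hsub2 : Finset.univ.image F ⊆
        Finset.univ.image (fun t : {w : {v : V | k < G.degree v} // G.Adj v.1 w.1} → Fin q =>
          F (fun w => if h : G.Adj v.1 w.1 then t ⟨w, h⟩ else ⟨0, hq⟩)) := by
      intro b hb
      obtain ⟨y, _, rfl⟩ := mem_image.mp hb
      refine mem_image.mpr ⟨fun w => y w.1, mem_univ _, ?_⟩
      refine (hgcol v.1 x x _ y (fun _ _ => rfl) ?_)
      intro u hu
      simp [dif_pos hu]
    have hcardNA : Fintype.card {w : {v : V | k < G.degree v} // G.Adj v.1 w.1} ≤ k := by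
      have hinj : Function.Injective
          (fun w : {w : {v : V | k < G.degree v} // G.Adj v.1 w.1} =>
            (⟨w.1.1, w.2⟩ : G.neighborSet v.1)) := by
        intro a b hab
        simp only [Subtype.mk.injEq] at hab
        have hab' : a.1.1 = b.1.1 := Subtype.mk.inj hab
        exact Subtype.ext (Subtype.ext hab')
      calc Fintype.card {w : {v : V | k < G.degree v} // G.Adj v.1 w.1}
          ≤ Fintype.card (G.neighborSet v.1) := Fintype.card_le_of_injective _ hinj
        _ = G.degree v.1 := G.card_neighborSet_eq_degree v.1
        _ ≤ k := v.2
    calc (Finset.univ.filter fun a : Fin Q => Function.update x v a ∈ Ev v).card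
        ≤ (Finset.univ.image (fun t : {w : {v : V | k < G.degree v} // G.Adj v.1 w.1} → Fin q =>
            F (fun w => if h : G.Adj v.1 w.1 then t ⟨w, h⟩ else ⟨0, hq⟩))).card :=
          card_le_card (hsub1.trans hsub2)
      _ ≤ (Finset.univ : Finset ({w : {v : V | k < G.degree v} // G.Adj v.1 w.1} → Fin q)).card :=
          card_image_le
      _ = q ^ Fintype.card {w : {v : V | k < G.degree v} // G.Adj v.1 w.1} := by
          rw [card_univ, Fintype.card_fun, Fintype.card_fin]
      _ ≤ q ^ k := Nat.pow_le_pow_right hq hcardNA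
  -- symmetry and cardinality of the dependency sets
  have hΓsymm : ∀ u v, u ∈ Γ v → v ∈ Γ u := by
    intro u v hu
    simp only [hΓ, mem_filter, mem_univ, true_and] at hu ⊢
    obtain ⟨hne, hno⟩ := hu
    exact ⟨hne.symm, by rwa [inter_comm]⟩
  have hΓcard : ∀ v, (Γ v).card ≤ d := by
    intro v
    have hBadj : ∀ a b : {v : V | G.degree v ≤ k}, G.Adj a.1 b.1 →
        (G.induce {v : V | G.degree v ≤ k}).Adj a b := by
      intro a b h
      simpa [SimpleGraph.comap_adj] using h
    have hsub : (↑(Γ v) : Set {v : V | G.degree v ≤ k}) ⊆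
        {u : {v : V | G.degree v ≤ k} | u ≠ v ∧
          (G.induce {v : V | G.degree v ≤ k}).edist u v ≤ 2} := by
      intro u hu
      rw [mem_coe] at hu
      simp only [hΓ, mem_filter, mem_univ, true_and] at hu
      obtain ⟨hne, w, hw⟩ := hu
      have hw1 : w = u ∨ G.Adj w.1 u.1 := by
        have := (mem_inter.mp hw).1
        simpa [hS] using this
      have hw2 : w = v ∨ G.Adj w.1 v.1 := by
        have := (mem_inter.mp hw).2
        simpa [hS] using this
      refine ⟨hne, ?_⟩
      rcases hw1 with rfl | ha1
      · rcases hw2 with rfl | ha2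
        · exact absurd rfl hne
        · have h' := SimpleGraph.edist_le ((hBadj w v ha2).toWalk)
          simp only [SimpleGraph.Walk.length_cons, SimpleGraph.Walk.length_nil] at h'
          exact le_trans h' (by norm_num)
      · rcases hw2 with rfl | ha2
        · have h' := SimpleGraph.edist_le ((hBadj u w (G.adj_symm ha1)).toWalk)
          simp only [SimpleGraph.Walk.length_cons, SimpleGraph.Walk.length_nil] at h'
          exact le_trans h' (by norm_num)
        · have h' := SimpleGraph.edist_le
            (SimpleGraph.Walk.cons (hBadj u w (G.adj_symm ha1)) ((hBadj w v ha2).toWalk))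
          simp only [SimpleGraph.Walk.length_cons, SimpleGraph.Walk.length_nil] at h'
          exact le_trans h' (by norm_num)
    calc (Γ v).card = (↑(Γ v) : Set {v : V | G.degree v ≤ k}).ncard :=
          (Set.ncard_coe_finset _).symm
      _ ≤ ({u : {v : V | G.degree v ≤ k} | u ≠ v ∧
            (G.induce {v : V | G.degree v ≤ k}).edist u v ≤ 2}).ncard :=
          Set.ncard_le_ncard hsub (Set.toFinite _)
      _ ≤ d := h2 v
  -- probability parameters
  haveI : Nonempty (Fin Q) := ⟨⟨0, hQpos⟩⟩
  set p : ℝ := (q:ℝ)^k / Q with hpdef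
  set c : ℝ := 1 + 1/(d:ℝ) with hcdef
  have hd0 : (0:ℝ) < (d:ℝ) := by linarith
  have hppos : 0 ≤ p := by positivity
  have hc1 : (1:ℝ) ≤ c := by
    rw [hcdef]
    have : (0:ℝ) ≤ 1/(d:ℝ) := by positivity
    linarith
  have hcd : c ^ d < Real.exp 1 := by
    have hx0 : (1/(d:ℝ)) ≠ 0 := by positivity
    have h1' : c < Real.exp (1/(d:ℝ)) := by
      have := Real.add_one_lt_exp hx0
      rw [hcdef]
      linarith
    have h2' : c ^ d < (Real.exp (1/(d:ℝ)))^d :=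
      pow_lt_pow_left₀ h1' (by linarith) (Nat.pos_iff_ne_zero.mp hd)
    have h3' : (Real.exp (1/(d:ℝ)))^d = Real.exp 1 := by
      rw [← Real.exp_nat_mul]
      congr 1
      field_simp
    linarith
  have hple : p ≤ 1/(Real.exp 1 * (d:ℝ)) := by
    rw [hpdef, div_le_div_iff₀ (by exact_mod_cast hQpos) (by positivity)]
    calc (q:ℝ)^k * (Real.exp 1 * (d:ℝ)) = Real.exp 1 * (d:ℝ) * (q:ℝ)^k := by ring
      _ ≤ (Q:ℝ) := hQR
      _ = 1 * (Q:ℝ) := by ring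
  have hpc : p * c^d < 1/(d:ℝ) := by
    have hb1 : p * c^d ≤ (1/(Real.exp 1 * (d:ℝ))) * c^d :=
      mul_le_mul_of_nonneg_right hple (by positivity)
    have hb2 : (1/(Real.exp 1 * (d:ℝ))) * c^d < (1/(Real.exp 1 * (d:ℝ))) * Real.exp 1 :=
      mul_lt_mul_of_pos_left hcd (by positivity)
    have hb3 : (1/(Real.exp 1 * (d:ℝ))) * Real.exp 1 = 1/(d:ℝ) := by
      field_simp
    linarith
  have hpc1 : p * c^d ≤ c - 1 := by
    have hcc : c - 1 = 1/(d:ℝ) := by rw [hcdef]; ring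
    rw [hcc]
    exact hpc.le
  have hpc2 : p * c^d < 1 := by
    have : 1/(d:ℝ) ≤ 1 := by
      rw [div_le_one hd0]
      exact hd1
    linarith
  -- the local lemma hypothesis
  have hind : ∀ (v) (T : Finset {v : V | G.degree v ≤ k}), v ∉ T → (∀ u ∈ T, u ∉ Γ v) →
      ((Ev v ∩ CTx Ev T).card : ℝ) ≤ p * ((CTx Ev T).card : ℝ) := by
    intro v T hvT hTΓ
    have hC : ∀ (x : {v : V | G.degree v ≤ k} → Fin Q) (a : Fin Q),
        x ∈ CTx Ev T → Function.update x v a ∈ CTx Ev T := by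
      intro x a hx
      rw [mem_CTx] at hx ⊢
      intro u hu hmem
      have hne : u ≠ v := fun h => hvT (h ▸ hu)
      have hSdisj : S u ∩ S v = ∅ := by
        have h' := hTΓ u hu
        simp only [hΓ, mem_filter, mem_univ, true_and] at h'
        push_neg at h'
        exact h' hne
      have hvS : v ∉ S u := by
        intro h
        have : v ∈ S u ∩ S v := mem_inter.mpr ⟨h, hSself v⟩
        rw [hSdisj] at this
        exact notMem_empty v this
      refine hx u hu (hEdet u (Function.update x v a) x ?_ hmem)
      intro w hw
      have hwv : w ≠ v := by
        intro h
        rw [h] at hw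
        exact hvS hw
      exact Function.update_of_ne hwv a x
    have hcount := count_update hQpos v (Ev v) (CTx Ev T) (q^k) hC (fun x => hfiber v x)
    rw [hpdef, div_mul_eq_mul_div, le_div_iff₀ (by exact_mod_cast hQpos)]
    calc ((Ev v ∩ CTx Ev T).card : ℝ) * (Q:ℝ)
        = (((Ev v ∩ CTx Ev T).card * Q : ℕ) : ℝ) := by push_cast; ring
      _ ≤ ((q^k * (CTx Ev T).card : ℕ) : ℝ) := by exact_mod_cast hcount
      _ = (q:ℝ)^k * ((CTx Ev T).card : ℝ) := by push_cast; ring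
  -- apply the local lemma
  obtain ⟨x, hx⟩ := lll Ev Γ p c d hΓsymm hΓcard hppos hc1 hpc1 hpc2 hind
  have hxbad : ∀ (v : {v : V | G.degree v ≤ k}) (y : {v : V | k < G.degree v} → Fin q),
      g v.1 (col x y) ≠ x v := by
    intro v y hy
    refine hx v ?_
    simp only [hEv, mem_filter, mem_univ, true_and]
    exact ⟨y, hy⟩
  -- build a winning strategy on the high-degree part
  apply h1
  refine ⟨fun v y => decQ q Q hq (g v.1 (col x y)), ?_, ?_⟩
  · intro v y y' hagree
    have heq : g v.1 (col x y) = g v.1 (col x y') := by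
      refine hgcol v.1 x x y y' (fun _ _ => rfl) ?_
      intro u hu
      refine hagree u ?_
      simpa [SimpleGraph.comap_adj] using hu
    exact congrArg (decQ q Q hq) heq
  · intro y
    obtain ⟨w, hw⟩ := hwin (col x y)
    by_cases hb : G.degree w ≤ k
    · exfalso
      have hcw : col x y w = x ⟨w, hb⟩ := by simp [hcol, colFun, dif_pos hb]
      refine hxbad ⟨w, hb⟩ y ?_
      show g w (col x y) = x ⟨w, hb⟩
      rw [hw]
      exact hcw
    · refine ⟨⟨w, lt_of_not_ge hb⟩, ?_⟩
      have hcw : col x y w = Fin.castLE hqQ (y ⟨w, lt_of_not_ge hb⟩) := by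
        simp [hcol, colFun, dif_neg hb]
      show decQ q Q hq (g w (col x y)) = y ⟨w, lt_of_not_ge hb⟩
      rw [hw, hcw]
      have hlt : ((Fin.castLE hqQ (y ⟨w, lt_of_not_ge hb⟩) : Fin Q) : ℕ) < q :=
        (y ⟨w, lt_of_not_ge hb⟩).2
      simp only [decQ, dif_pos hlt]
      exact Fin.ext rfl
end

section
/- Let k, q be positive integers and let G be a finite graph whose induced subgraph on the set of vertices of degree greater than k is not q-solvable. Then for every integer Q with Q ≥ e·k²·q^k, G is not Q-solvable; equivalently, HG(G) < e·k²·q^k. -/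
open Finset
set_option linter.unusedSectionVars false
set_option maxHeartbeats 1000000

section B
variable {L : Type*} [Fintype L] [DecidableEq L] {Q : ℕ}
variable {N : L → Finset L} {Bad : L → (L → Fin Q) → Finset (Fin Q)} {z : Fin Q}

def RGood (N : L → Finset L) (Bad : L → (L → Fin Q) → Finset (Fin Q))
    (S : Finset L) (c : L → Fin Q) : Prop :=
  ∀ u ∈ S, N u ⊆ S → c u ∉ Bad u c

open Classical in
noncomputable def RSet (N : L → Finset L) (Bad : L → (L → Fin Q) → Finset (Fin Q))
    (z : Fin Q) (S : Finset L) : Finset (L → Fin Q) :=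
  univ.filter (fun c => (∀ v ∉ S, c v = z) ∧ RGood N Bad S c)

open Classical in
lemma mem_RSet {S : Finset L} {c : L → Fin Q} :
    c ∈ RSet N Bad z S ↔ (∀ v ∉ S, c v = z) ∧ RGood N Bad S c := by simp [RSet]

lemma rgood_congr (hcongr : ∀ u c c', (∀ w ∈ N u, c w = c' w) → Bad u c = Bad u c')
    {S : Finset L} {c c' : L → Fin Q} (h : ∀ v ∈ S, c v = c' v)
    (hg : RGood N Bad S c) : RGood N Bad S c' := by
  intro u hu hsub
  rw [hcongr u c' c (fun w hw => (h w (hsub hw)).symm), (h u hu).symm]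
  exact hg u hu hsub

open Classical in
/-- extension counting: colorings supported in `insert u S` that are good on `S`. -/
lemma card_ext (hcongr : ∀ u c c', (∀ w ∈ N u, c w = c' w) → Bad u c = Bad u c')
    {S : Finset L} {u : L} (hu : u ∉ S) :
    (univ.filter (fun c : L → Fin Q =>
       (∀ v ∉ insert u S, c v = z) ∧ RGood N Bad S c)).card
      = Q * (RSet N Bad z S).card := by
  classical
  have key : (univ.filter (fun c : L → Fin Q =>
       (∀ v ∉ insert u S, c v = z) ∧ RGood N Bad S c)).card
      = ((univ : Finset (Fin Q)) ×ˢ RSet N Bad z S).card := by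
    apply Finset.card_nbij' (i := fun c => (c u, Function.update c u z))
      (j := fun p => Function.update p.2 u p.1)
    · intro c hc
      simp only [Finset.mem_coe, Finset.mem_filter, Finset.mem_univ, true_and] at hc
      obtain ⟨hsupp, hgood⟩ := hc
      simp only [Finset.mem_coe, Finset.mem_product, Finset.mem_univ, true_and, mem_RSet]
      refine ⟨fun v hv => ?_, ?_⟩
      · by_cases hvu : v = u
        · subst hvu; simp
        · rw [Function.update_of_ne hvu]
          exact hsupp v (by simp [hvu, hv])
      · apply rgood_congr hcongr (c := c) (fun v hv => ?_) hgood
        have hvu : v ≠ u := by rintro rfl; exact hu hv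
        rw [Function.update_of_ne hvu]
    · intro p hp
      simp only [Finset.mem_coe, Finset.mem_product, Finset.mem_univ, true_and, mem_RSet] at hp
      obtain ⟨hsupp, hgood⟩ := hp
      simp only [Finset.mem_coe, Finset.mem_filter, Finset.mem_univ, true_and]
      refine ⟨fun v hv => ?_, ?_⟩
      · have hvu : v ≠ u := fun h => hv (h ▸ Finset.mem_insert_self u S)
        rw [Function.update_of_ne hvu]
        exact hsupp v (fun hvS => hv (Finset.mem_insert_of_mem hvS))
      · apply rgood_congr hcongr (c := p.2) (fun v hv => ?_) hgood
        have hvu : v ≠ u := by rintro rfl; exact hu hv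
        rw [Function.update_of_ne hvu]
    · intro c hc
      funext v
      by_cases hvu : v = u
      · subst hvu; simp
      · simp [Function.update_of_ne hvu]
    · intro p hp
      simp only [Finset.mem_coe, Finset.mem_product, Finset.mem_univ, true_and, mem_RSet] at hp
      obtain ⟨hsupp, -⟩ := hp
      have h2 : Function.update (Function.update p.2 u p.1) u z = p.2 := by
        funext v
        by_cases hvu : v = u
        · subst hvu; simp [hsupp _ hu]
        · simp [Function.update_of_ne hvu]
      simp [h2]
  rw [key, Finset.card_product]
  simp [mul_comm]
open Classical in
lemma main_count (hsym : ∀ u w, w ∈ N u ↔ u ∈ N w) (hirr : ∀ u, u ∉ N u)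
    (hcongr : ∀ u c c', (∀ w ∈ N u, c w = c' w) → Bad u c = Bad u c')
    {a : L → ℕ} (hcard : ∀ u c, (Bad u c).card ≤ a u)
    {S : Finset L} {u : L} (hu : u ∉ S) :
    Q * (RSet N Bad z S).card ≤ (RSet N Bad z (insert u S)).card
      + a u * (RSet N Bad z S).card
      + ∑ w ∈ N u ∩ S, a w * (Q * (RSet N Bad z (S.erase w)).card) := by
  classical
  set A := univ.filter (fun c : L → Fin Q =>
    (∀ v ∉ insert u S, c v = z) ∧ RGood N Bad S c) with hA
  set C := univ.filter (fun c : L → Fin Q =>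
    (∀ v ∉ insert u S, c v = z) ∧ RGood N Bad S c ∧ c u ∈ Bad u c) with hCdef
  set D := fun w => univ.filter (fun c : L → Fin Q =>
    (∀ v ∉ insert u S, c v = z) ∧ RGood N Bad S c ∧ c w ∈ Bad w c) with hDdef
  have hcover : A ⊆ (RSet N Bad z (insert u S) ∪ C) ∪ (N u ∩ S).biUnion D := by
    intro c hc
    rw [hA, Finset.mem_filter] at hc
    obtain ⟨-, hsupp, hgood⟩ := hc
    by_cases hgi : RGood N Bad (insert u S) c
    · exact Finset.mem_union_left _ (Finset.mem_union_left _ (mem_RSet.2 ⟨hsupp, hgi⟩))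
    · rw [RGood] at hgi
      push_neg at hgi
      obtain ⟨x, hx, hsub, hbad⟩ := hgi
      rcases Finset.mem_insert.1 hx with rfl | hxS
      · refine Finset.mem_union_left _ (Finset.mem_union_right _ ?_)
        rw [hCdef, Finset.mem_filter]
        exact ⟨Finset.mem_univ _, hsupp, hgood, hbad⟩
      · by_cases huN : u ∈ N x
        · refine Finset.mem_union_right _ (Finset.mem_biUnion.2 ⟨x, ?_, ?_⟩)
          · exact Finset.mem_inter.2 ⟨(hsym u x).2 huN, hxS⟩
          · rw [hDdef]
            simp only [Finset.mem_filter, Finset.mem_univ, true_and]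
            exact ⟨hsupp, hgood, hbad⟩
        · exfalso
          have hNS : N x ⊆ S := by
            intro y hy
            rcases Finset.mem_insert.1 (hsub hy) with rfl | h
            · exact absurd hy huN
            · exact h
          exact hgood x hxS hNS hbad
  have hAcard : A.card = Q * (RSet N Bad z S).card := card_ext (z := z) (N := N) (Bad := Bad) hcongr hu
  have hCcard : C.card ≤ a u * (RSet N Bad z S).card := by
    apply Finset.card_le_mul_card_image_of_maps_to
      (f := fun c => Function.update c u z) (t := RSet N Bad z S)
    · intro c hc
      rw [hCdef, Finset.mem_filter] at hc
      obtain ⟨-, hsupp, hgood, -⟩ := hc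
      rw [mem_RSet]
      constructor
      · intro v hv
        by_cases hvu : v = u
        · subst hvu; simp
        · rw [Function.update_of_ne hvu]
          exact hsupp v (by simp [hvu, hv])
      · apply rgood_congr hcongr (c := c) (fun v hv => ?_) hgood
        have hvu : v ≠ u := by rintro rfl; exact hu hv
        rw [Function.update_of_ne hvu]
    · intro c₀ hc₀
      apply le_trans _ (hcard u c₀)
      apply Finset.card_le_card_of_injOn (fun c => c u)
      · intro c hc
        simp only [Finset.mem_coe, Finset.mem_filter] at hc
        obtain ⟨hcC, hupdate⟩ := hc
        rw [hCdef, Finset.mem_filter] at hcC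
        obtain ⟨-, -, -, hbad⟩ := hcC
        have : Bad u c = Bad u c₀ := by
          apply hcongr
          intro w hw
          have hwu : w ≠ u := by rintro rfl; exact hirr _ hw
          rw [← hupdate, Function.update_of_ne hwu]
        rwa [← this]
      · intro c hc c' hc' huv
        simp only [Finset.coe_filter, Set.mem_setOf_eq] at hc hc'
        funext v
        by_cases hvu : v = u
        · subst hvu; exact huv
        · have := hc.2.trans hc'.2.symm
          have h2 := congrFun this v
          rwa [Function.update_of_ne hvu, Function.update_of_ne hvu] at h2
  have hDcard : ∀ w ∈ N u ∩ S,
      (D w).card ≤ a w * (Q * (RSet N Bad z (S.erase w)).card) := by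
    intro w hw
    obtain ⟨hwN, hwS⟩ := Finset.mem_inter.1 hw
    have huw : u ≠ w := by rintro rfl; exact hu hwS
    have hu' : u ∉ S.erase w := fun h => hu (Finset.mem_of_mem_erase h)
    rw [← card_ext (N := N) (Bad := Bad) (z := z) hcongr hu']
    apply Finset.card_le_mul_card_image_of_maps_to
      (f := fun c => Function.update c w z)
    · intro c hc
      rw [hDdef, Finset.mem_filter] at hc
      obtain ⟨-, hsupp, hgood, -⟩ := hc
      simp only [Finset.mem_filter, Finset.mem_univ, true_and]
      constructor
      · intro v hv
        by_cases hvw : v = w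
        · subst hvw; simp
        · rw [Function.update_of_ne hvw]
          apply hsupp
          intro hvins
          apply hv
          rcases Finset.mem_insert.1 hvins with rfl | h
          · exact Finset.mem_insert_self _ _
          · exact Finset.mem_insert_of_mem (Finset.mem_erase.2 ⟨hvw, h⟩)
      · have hgood' : RGood N Bad (S.erase w) c :=
          fun x hx hsub => hgood x (Finset.mem_of_mem_erase hx)
            (hsub.trans (Finset.erase_subset _ _))
        apply rgood_congr hcongr (c := c) (fun v hv => ?_) hgood'
        have hvw : v ≠ w := by rintro rfl; exact (Finset.mem_erase.1 hv).1 rfl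
        rw [Function.update_of_ne hvw]
    · intro c₀ hc₀
      apply le_trans _ (hcard w c₀)
      apply Finset.card_le_card_of_injOn (fun c => c w)
      · intro c hc
        simp only [Finset.mem_coe, Finset.mem_filter] at hc
        obtain ⟨hcD, hupdate⟩ := hc
        rw [hDdef, Finset.mem_filter] at hcD
        obtain ⟨-, -, -, hbad⟩ := hcD
        have : Bad w c = Bad w c₀ := by
          apply hcongr
          intro y hy
          have hyw : y ≠ w := by rintro rfl; exact hirr _ hy
          rw [← hupdate, Function.update_of_ne hyw]
        rwa [← this]
      · intro c hc c' hc' hvv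
        simp only [Finset.coe_filter, Set.mem_setOf_eq] at hc hc'
        funext v
        by_cases hvw : v = w
        · subst hvw; exact hvv
        · have := hc.2.trans hc'.2.symm
          have h2 := congrFun this v
          rwa [Function.update_of_ne hvw, Function.update_of_ne hvw] at h2
  calc Q * (RSet N Bad z S).card = A.card := hAcard.symm
    _ ≤ ((RSet N Bad z (insert u S) ∪ C) ∪ (N u ∩ S).biUnion D).card :=
        Finset.card_le_card hcover
    _ ≤ (RSet N Bad z (insert u S) ∪ C).card + ((N u ∩ S).biUnion D).card :=
        Finset.card_union_le _ _
    _ ≤ (RSet N Bad z (insert u S)).card + C.card + ((N u ∩ S).biUnion D).card := by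
        gcongr; exact Finset.card_union_le _ _
    _ ≤ (RSet N Bad z (insert u S)).card + C.card + ∑ w ∈ N u ∩ S, (D w).card := by
        gcongr; exact Finset.card_biUnion_le
    _ ≤ _ := Nat.add_le_add (Nat.add_le_add le_rfl hCcard) (Finset.sum_le_sum hDcard)

end B

section B2
variable {L : Type*} [Fintype L] [DecidableEq L] {Q : ℕ}
variable {N : L → Finset L} {Bad : L → (L → Fin Q) → Finset (Fin Q)} {z : Fin Q}

lemma card_RSet_empty : (RSet N Bad z (∅ : Finset L)).card = 1 := by
  classical
  have h : RSet N Bad z (∅ : Finset L) = {fun _ => z} := by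
    ext c
    simp only [mem_RSet, Finset.mem_singleton]
    constructor
    · rintro ⟨h1, -⟩
      funext v
      exact h1 v (by simp)
    · rintro rfl
      exact ⟨fun v _ => rfl, fun u hu => by simp at hu⟩
  rw [h, Finset.card_singleton]

lemma rosenfeld_step (hsym : ∀ u w, w ∈ N u ↔ u ∈ N w) (hirr : ∀ u, u ∉ N u)
    (hcongr : ∀ u c c', (∀ w ∈ N u, c w = c' w) → Bad u c = Bad u c')
    {a : L → ℕ} (hcard : ∀ u c, (Bad u c).card ≤ a u)
    {β : ℝ} (hβ : 0 < β)
    (hnum : ∀ u, β^2 + (a u : ℝ) * β + (∑ w ∈ N u, (a w : ℝ)) * Q ≤ Q * β) :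
    ∀ (n : ℕ) (S : Finset L), S.card ≤ n → ∀ u ∉ S,
      β * ((RSet N Bad z S).card : ℝ) ≤ ((RSet N Bad z (insert u S)).card : ℝ) := by
  intro n
  induction n using Nat.strong_induction_on with
  | _ n IH =>
    intro S hS u hu
    have hF0 : (0:ℝ) ≤ ((RSet N Bad z S).card : ℝ) := by positivity
    have hmain := main_count (z := z) hsym hirr hcongr hcard hu
    have hmainR : ((Q : ℝ)) * ((RSet N Bad z S).card : ℝ)
        ≤ ((RSet N Bad z (insert u S)).card : ℝ)
        + (a u : ℝ) * ((RSet N Bad z S).card : ℝ)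
        + ∑ w ∈ N u ∩ S, (a w : ℝ) * ((Q : ℝ) *
          ((RSet N Bad z (S.erase w)).card : ℝ)) := by
      have h2 : ((Q * (RSet N Bad z S).card : ℕ) : ℝ)
          ≤ (((RSet N Bad z (insert u S)).card
            + a u * (RSet N Bad z S).card
            + ∑ w ∈ N u ∩ S, a w * (Q * (RSet N Bad z (S.erase w)).card) : ℕ) : ℝ) :=
        Nat.cast_le.2 hmain
      push_cast at h2
      exact h2
    have hErase : ∀ w ∈ N u ∩ S,
        β * ((RSet N Bad z (S.erase w)).card : ℝ) ≤ ((RSet N Bad z S).card : ℝ) := by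
      intro w hw
      obtain ⟨hwN, hwS⟩ := Finset.mem_inter.1 hw
      have h1 : (S.erase w).card < S.card := Finset.card_erase_lt_of_mem hwS
      have hcardlt : (S.erase w).card < n := by omega
      have hres := IH (S.erase w).card hcardlt (S.erase w) le_rfl w (Finset.notMem_erase w S)
      rwa [Finset.insert_erase hwS] at hres
    have hsum : β * (∑ w ∈ N u ∩ S, (a w : ℝ) * ((Q : ℝ) *
          ((RSet N Bad z (S.erase w)).card : ℝ)))
        ≤ (∑ w ∈ N u, (a w : ℝ)) * ((Q : ℝ) * ((RSet N Bad z S).card : ℝ)) := by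
      rw [Finset.mul_sum]
      calc ∑ w ∈ N u ∩ S, β * ((a w : ℝ) * ((Q : ℝ) * ((RSet N Bad z (S.erase w)).card : ℝ)))
          ≤ ∑ w ∈ N u ∩ S, (a w : ℝ) * ((Q : ℝ) * ((RSet N Bad z S).card : ℝ)) := by
            apply Finset.sum_le_sum
            intro w hw
            have h1 := hErase w hw
            have heq : β * ((a w : ℝ) * ((Q : ℝ) * ((RSet N Bad z (S.erase w)).card : ℝ)))
                = (a w : ℝ) * ((Q : ℝ) * (β * ((RSet N Bad z (S.erase w)).card : ℝ))) := by
              ring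
            rw [heq]
            have hq0 : (0:ℝ) ≤ (Q:ℝ) := by positivity
            have ha0 : (0:ℝ) ≤ (a w : ℝ) := by positivity
            exact mul_le_mul_of_nonneg_left (mul_le_mul_of_nonneg_left h1 hq0) ha0
        _ ≤ ∑ w ∈ N u, (a w : ℝ) * ((Q : ℝ) * ((RSet N Bad z S).card : ℝ)) := by
            apply Finset.sum_le_sum_of_subset_of_nonneg (Finset.inter_subset_left)
            intro w _ _
            positivity
        _ = (∑ w ∈ N u, (a w : ℝ)) * ((Q : ℝ) * ((RSet N Bad z S).card : ℝ)) := by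
            rw [Finset.sum_mul]
    have hnumF := mul_le_mul_of_nonneg_right (hnum u) hF0
    have hm := mul_le_mul_of_nonneg_left hmainR hβ.le
    have hfinal : β * (β * ((RSet N Bad z S).card : ℝ))
        ≤ β * ((RSet N Bad z (insert u S)).card : ℝ) := by
      nlinarith [hm, hsum, hnumF]
    exact (mul_le_mul_iff_right₀ hβ).1 hfinal

lemma rset_pos (hsym : ∀ u w, w ∈ N u ↔ u ∈ N w) (hirr : ∀ u, u ∉ N u)
    (hcongr : ∀ u c c', (∀ w ∈ N u, c w = c' w) → Bad u c = Bad u c')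
    {a : L → ℕ} (hcard : ∀ u c, (Bad u c).card ≤ a u)
    {β : ℝ} (hβ : 0 < β)
    (hnum : ∀ u, β^2 + (a u : ℝ) * β + (∑ w ∈ N u, (a w : ℝ)) * Q ≤ Q * β) :
    ∀ S : Finset L, 0 < (RSet N Bad z S).card := by
  intro S
  induction S using Finset.induction_on with
  | empty => rw [card_RSet_empty]; norm_num
  | @insert u S hu ih =>
    have hstep := rosenfeld_step (z := z) hsym hirr hcongr hcard hβ hnum S.card S le_rfl u hu
    have h0 : (0:ℝ) < β * ((RSet N Bad z S).card : ℝ) := by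
      have : (0:ℝ) < ((RSet N Bad z S).card : ℝ) := by exact_mod_cast ih
      positivity
    have : (0:ℝ) < ((RSet N Bad z (insert u S)).card : ℝ) := lt_of_lt_of_le h0 hstep
    exact_mod_cast this

theorem rosenfeld_exists (hQ : 0 < Q) (hsym : ∀ u w, w ∈ N u ↔ u ∈ N w) (hirr : ∀ u, u ∉ N u)
    (hcongr : ∀ u c c', (∀ w ∈ N u, c w = c' w) → Bad u c = Bad u c')
    {a : L → ℕ} (hcard : ∀ u c, (Bad u c).card ≤ a u)
    {β : ℝ} (hβ : 0 < β)
    (hnum : ∀ u, β^2 + (a u : ℝ) * β + (∑ w ∈ N u, (a w : ℝ)) * Q ≤ Q * β) :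
    ∃ c : L → Fin Q, ∀ u, c u ∉ Bad u c := by
  obtain ⟨c, hc⟩ := Finset.card_pos.1
    (rset_pos (z := (⟨0, hQ⟩ : Fin Q)) hsym hirr hcongr hcard hβ hnum Finset.univ)
  exact ⟨c, fun u => (mem_RSet.1 hc).2 u (Finset.mem_univ u) (Finset.subset_univ _)⟩

end B2

lemma numeric_beta (k q Q : ℕ) (hk : 0 < k) (hq : 0 < q) (hkq : 2 ≤ k ∨ 2 ≤ q)
    (hQ : Real.exp 1 * (k:ℝ)^2 * (q:ℝ)^k ≤ Q) :
    ∃ β : ℝ, 0 < β ∧ β + (q:ℝ)^k ≤ Q ∧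
      β^2 + (q:ℝ)^(k-1)*β + (k:ℝ)*(q:ℝ)^(k-1)*Q ≤ Q*β := by
  have he : (2.7:ℝ) < Real.exp 1 := by
    have := Real.exp_one_gt_d9
    linarith
  have hk1 : (1:ℝ) ≤ (k:ℝ) := by exact_mod_cast hk
  have hq1 : (1:ℝ) ≤ (q:ℝ) := by exact_mod_cast hq
  have hk2sq : (1:ℝ) ≤ (k:ℝ)^2 := by nlinarith
  set s : ℝ := (q:ℝ)^(k-1) with hs
  have hs1 : (1:ℝ) ≤ s := one_le_pow₀ hq1
  have hs0 : (0:ℝ) < s := lt_of_lt_of_le zero_lt_one hs1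
  have hsqk : (q:ℝ)^k = s * q := by
    rw [hs, ← pow_succ]
    congr 1
    omega
  have hqk1 : (1:ℝ) ≤ (q:ℝ)^k := one_le_pow₀ hq1
  have hqk0 : (0:ℝ) < (q:ℝ)^k := lt_of_lt_of_le zero_lt_one hqk1
  have hQ27 : (2.7:ℝ) * ((k:ℝ)^2 * (q:ℝ)^k) ≤ Q := by
    have h1 : (2.7:ℝ) * ((k:ℝ)^2 * (q:ℝ)^k) ≤ Real.exp 1 * ((k:ℝ)^2 * (q:ℝ)^k) :=
      mul_le_mul_of_nonneg_right he.le (by positivity)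
    calc (2.7:ℝ) * ((k:ℝ)^2 * (q:ℝ)^k) ≤ Real.exp 1 * ((k:ℝ)^2 * (q:ℝ)^k) := h1
      _ = Real.exp 1 * (k:ℝ)^2 * (q:ℝ)^k := by ring
      _ ≤ Q := hQ
  have hQqk : (2.7:ℝ) * (q:ℝ)^k ≤ Q := by
    have : (2.7:ℝ) * (q:ℝ)^k ≤ (2.7:ℝ) * ((k:ℝ)^2 * (q:ℝ)^k) := by nlinarith
    linarith
  have hsQ : s < (Q:ℝ) := by nlinarith
  have hsq_le : s ≤ (q:ℝ)^k := by nlinarith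
  refine ⟨((Q:ℝ) - s)/2, by linarith, ?_, ?_⟩
  · -- β + q^k ≤ Q  ⟺  2 q^k ≤ Q + s
    nlinarith
  · have hB : 4 * (k:ℝ) * s * Q ≤ ((Q:ℝ) - s)^2 := by
      by_cases hk2 : 2 ≤ k
      · have hk2' : (2:ℝ) ≤ (k:ℝ) := by exact_mod_cast hk2
        have h42 : (4*(k:ℝ)+2) * s ≤ (Q:ℝ) := by
          have h1 : (4*(k:ℝ)+2) ≤ 2.7 * (k:ℝ)^2 := by nlinarith
          have h2 : (4*(k:ℝ)+2) * s ≤ 2.7 * (k:ℝ)^2 * s := by nlinarith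
          have h3 : 2.7 * (k:ℝ)^2 * s ≤ 2.7 * ((k:ℝ)^2 * ((q:ℝ)^k)) := by nlinarith
          linarith
        have hQ0 : (0:ℝ) ≤ (Q:ℝ) := Nat.cast_nonneg Q
        nlinarith [sq_nonneg s]
      · have hk1' : k = 1 := by omega
        have hq2 : 2 ≤ q := by omega
        subst hk1'
        have hs' : s = 1 := by simp [hs]
        have hq2' : (2:ℝ) ≤ (q:ℝ) := by exact_mod_cast hq2
        have hQ6 : (6:ℕ) ≤ Q := by
          by_contra hcon
          push_neg at hcon
          have h5 : (Q:ℝ) ≤ 5 := by exact_mod_cast (by omega : Q ≤ 5)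
          have h6 : (2.7:ℝ) * (q:ℝ)^1 ≤ 5 := by
            calc (2.7:ℝ) * (q:ℝ)^1 ≤ Q := by simpa using hQqk
              _ ≤ 5 := h5
          nlinarith
        have hQ6' : (6:ℝ) ≤ (Q:ℝ) := by exact_mod_cast hQ6
        rw [hs']
        push_cast
        nlinarith
    nlinarith [hB]

lemma caseA {V : Type*} [Fintype V] (G : SimpleGraph V) [DecidableRel G.Adj]
    (k q Q : ℕ) (hk : 0 < k) (hq : 0 < q) (hqQ : q ≤ Q) (hQ0 : 0 < Q)
    (β : ℝ) (hβ : 0 < β) (hβ1 : β + (q:ℝ)^k ≤ Q)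
    (hβ2 : β^2 + (q:ℝ)^(k-1)*β + (k:ℝ)*(q:ℝ)^(k-1)*Q ≤ Q*β)
    (g : V → (V → Fin Q) → Fin Q) (hg : IsHatStrategy G.Adj Q g)
    (hwin : ∀ x, ∃ v, g v x = x v) :
    Solvable (G.induce {v | k < G.degree v}).Adj q := by
  classical
  set mix : ({v : V // ¬ k < G.degree v} → Fin Q) → (V → Fin q) → V → Fin Q :=
    fun c α v => if h : k < G.degree v then Fin.castLE hqQ (α v) else c ⟨v, h⟩ with hmix
  set N : {v : V // ¬ k < G.degree v} → Finset {v : V // ¬ k < G.degree v} :=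
    fun u => (G.neighborFinset u.1).subtype (fun v => ¬ k < G.degree v) with hN
  set Bad : {v : V // ¬ k < G.degree v} →
      ({v : V // ¬ k < G.degree v} → Fin Q) → Finset (Fin Q) :=
    fun u c => Finset.image (fun α : V → Fin q => g u.1 (mix c α)) Finset.univ with hBad
  set a : {v : V // ¬ k < G.degree v} → ℕ :=
    fun u => q ^ ((G.neighborFinset u.1).filter (fun w => k < G.degree w)).card with ha
  -- degree facts
  have hdegle : ∀ u : {v : V // ¬ k < G.degree v}, G.degree u.1 ≤ k :=
    fun u => Nat.not_lt.1 u.2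
  have hNcard : ∀ u, (N u).card ≤ G.degree u.1 := by
    intro u
    rw [hN, Finset.card_subtype]
    exact le_trans (Finset.card_filter_le _ _) (le_of_eq rfl)
  have hHnbcard : ∀ u : {v : V // ¬ k < G.degree v},
      ((G.neighborFinset u.1).filter (fun w => k < G.degree w)).card ≤ k :=
    fun u => le_trans (Finset.card_filter_le _ _) (hdegle u)
  -- if u has a low neighbor w, then its count of high neighbors is ≤ k - 1
  have hHnbcard' : ∀ u w : {v : V // ¬ k < G.degree v}, w ∈ N u →
      ((G.neighborFinset u.1).filter (fun w => k < G.degree w)).card ≤ k - 1 := by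
    intro u w hw
    rw [hN, Finset.mem_subtype] at hw
    have hsub : (G.neighborFinset u.1).filter (fun x => k < G.degree x)
        ⊆ (G.neighborFinset u.1).erase w.1 := by
      intro x hx
      rw [Finset.mem_filter] at hx
      refine Finset.mem_erase.2 ⟨?_, hx.1⟩
      rintro rfl
      exact w.2 hx.2
    have h1 := Finset.card_le_card hsub
    rw [Finset.card_erase_of_mem hw] at h1
    have hdeq : (G.neighborFinset u.1).card = G.degree u.1 := G.card_neighborFinset_eq_degree u.1
    have h2 : G.degree u.1 ≤ k := hdegle u
    have h3 : 1 ≤ G.degree u.1 := by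
      have : w.1 ∈ G.neighborFinset u.1 := hw
      have := Finset.card_pos.2 ⟨w.1, this⟩
      exact this
    omega
  have hsym : ∀ u w, w ∈ N u ↔ u ∈ N w := by
    intro u w
    rw [hN]
    simp only [Finset.mem_subtype, SimpleGraph.mem_neighborFinset]
    exact G.adj_comm _ _
  have hirr : ∀ u, u ∉ N u := by
    intro u
    rw [hN]
    simp only [Finset.mem_subtype, SimpleGraph.mem_neighborFinset]
    exact G.irrefl
  have hcongr : ∀ u c c', (∀ w ∈ N u, c w = c' w) → Bad u c = Bad u c' := by
    intro u c c' hcc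
    rw [hBad]
    apply Finset.image_congr
    intro α _
    apply hg u.1
    intro w hw
    rw [hmix]
    by_cases hdw : k < G.degree w
    · simp only [dif_pos hdw]
    · simp only [dif_neg hdw]
      apply hcc
      rw [hN, Finset.mem_subtype]
      exact SimpleGraph.mem_neighborFinset _ _ _ |>.2 hw
  have hcard : ∀ u c, (Bad u c).card ≤ a u := by
    intro u c
    show (Finset.image (fun α : V → Fin q => g u.1 (mix c α)) Finset.univ).card
      ≤ q ^ ((G.neighborFinset u.1).filter (fun w => k < G.degree w)).card
    set Hnb := (G.neighborFinset u.1).filter (fun w => k < G.degree w) with hHnb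
    have hfac : ∀ α : V → Fin q,
        g u.1 (mix c α) = g u.1 (mix c (fun v => if h : v ∈ Hnb then α v else ⟨0, hq⟩)) := by
      intro α
      apply hg u.1
      intro w hw
      rw [hmix]
      by_cases hdw : k < G.degree w
      · simp only [dif_pos hdw]
        have hwH : w ∈ Hnb := by
          rw [hHnb, Finset.mem_filter]
          exact ⟨(SimpleGraph.mem_neighborFinset _ _ _).2 hw, hdw⟩
        simp only [dif_pos hwH]
      · simp only [dif_neg hdw]
    have himg : Finset.image (fun α : V → Fin q => g u.1 (mix c α)) Finset.univ
        = Finset.image ((fun ρ : (↥Hnb → Fin q) => g u.1 (mix c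
            (fun v => if h : v ∈ Hnb then ρ ⟨v, h⟩ else ⟨0, hq⟩)))
          ∘ (fun (α : V → Fin q) (w : ↥Hnb) => α w.1)) Finset.univ := by
      apply Finset.image_congr
      intro α _
      simp only [Function.comp]
      rw [hfac α]
    rw [himg, ← Finset.image_image]
    calc (Finset.image _ (Finset.image (fun (α : V → Fin q) (w : ↥Hnb) => α w.1) Finset.univ)).card
        ≤ (Finset.image (fun (α : V → Fin q) (w : ↥Hnb) => α w.1) Finset.univ).card :=
          Finset.card_image_le
      _ ≤ (Finset.univ : Finset (↥Hnb → Fin q)).card := Finset.card_le_univ _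
      _ = q ^ Hnb.card := by
          rw [Finset.card_univ, Fintype.card_fun, Fintype.card_fin, Fintype.card_coe]
  have hnum : ∀ u, β^2 + (a u : ℝ) * β + (∑ w ∈ N u, (a w : ℝ)) * Q ≤ Q * β := by
    intro u
    have hs0 : (0:ℝ) < (q:ℝ)^(k-1) := by positivity
    by_cases hNu : N u = ∅
    · rw [hNu]
      simp only [Finset.sum_empty, zero_mul, add_zero]
      have hau : (a u : ℝ) ≤ (q:ℝ)^k := by
        rw [ha]
        push_cast
        exact pow_le_pow_right₀ (by exact_mod_cast hq) (hHnbcard u)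
      nlinarith [hβ, hβ1, hau, sq_nonneg β]
    · obtain ⟨w₀, hw₀⟩ := Finset.nonempty_of_ne_empty hNu
      have hau : (a u : ℝ) ≤ (q:ℝ)^(k-1) := by
        rw [ha]
        push_cast
        exact pow_le_pow_right₀ (by exact_mod_cast hq) (hHnbcard' u w₀ hw₀)
      have haw : ∀ w ∈ N u, (a w : ℝ) ≤ (q:ℝ)^(k-1) := by
        intro w hw
        rw [ha]
        push_cast
        exact pow_le_pow_right₀ (by exact_mod_cast hq) (hHnbcard' w u ((hsym u w).1 hw))
      have hsumA : (∑ w ∈ N u, (a w : ℝ)) ≤ (k:ℝ) * (q:ℝ)^(k-1) := by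
        calc (∑ w ∈ N u, (a w : ℝ)) ≤ ∑ _w ∈ N u, (q:ℝ)^(k-1) := Finset.sum_le_sum haw
          _ = ((N u).card : ℝ) * (q:ℝ)^(k-1) := by rw [Finset.sum_const, nsmul_eq_mul]
          _ ≤ (k:ℝ) * (q:ℝ)^(k-1) := by
              have h1 : (N u).card ≤ k := le_trans (hNcard u) (hdegle u)
              have h1' : ((N u).card : ℝ) ≤ (k:ℝ) := by exact_mod_cast h1
              nlinarith
      have hQ0' : (0:ℝ) ≤ (Q:ℝ) := Nat.cast_nonneg Q
      nlinarith [hβ, hβ2, hau, hsumA]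
  obtain ⟨c, hc⟩ := rosenfeld_exists (N := N) (Bad := Bad) (a := a)
    hQ0 hsym hirr hcongr hcard hβ hnum
  -- build the strategy for the induced subgraph
  refine ⟨fun v x => (fun y : Fin Q => if h : y.1 < q then (⟨y.1, h⟩ : Fin q) else ⟨0, hq⟩)
      (g v.1 (fun w => if h : k < G.degree w then Fin.castLE hqQ (x ⟨w, h⟩) else c ⟨w, h⟩)),
    ?_, ?_⟩
  · intro v x y hxy
    have : g v.1 (fun w => if h : k < G.degree w then Fin.castLE hqQ (x ⟨w, h⟩) else c ⟨w, h⟩)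
        = g v.1 (fun w => if h : k < G.degree w then Fin.castLE hqQ (y ⟨w, h⟩) else c ⟨w, h⟩) := by
      apply hg v.1
      intro w hw
      by_cases hdw : k < G.degree w
      · simp only [dif_pos hdw]
        congr 1
        exact hxy ⟨w, hdw⟩ hw
      · simp only [dif_neg hdw]
    simp only [this]
  · intro x
    obtain ⟨v, hv⟩ := hwin (fun w => if h : k < G.degree w then Fin.castLE hqQ (x ⟨w, h⟩)
      else c ⟨w, h⟩)
    by_cases hvdeg : k < G.degree v
    · refine ⟨⟨v, hvdeg⟩, ?_⟩
      show (fun y : Fin Q => if h : y.1 < q then (⟨y.1, h⟩ : Fin q) else ⟨0, hq⟩)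
        (g v (fun w => if h : k < G.degree w then Fin.castLE hqQ (x ⟨w, h⟩) else c ⟨w, h⟩))
          = x ⟨v, hvdeg⟩
      rw [hv]
      simp only [dif_pos hvdeg]
      have hlt : (Fin.castLE hqQ (x ⟨v, hvdeg⟩)).1 < q := (x ⟨v, hvdeg⟩).2
      rw [dif_pos hlt]
      apply Fin.ext
      rfl
    · exfalso
      apply hc ⟨v, hvdeg⟩
      rw [hBad, Finset.mem_image]
      refine ⟨fun w => if h : k < G.degree w then x ⟨w, h⟩ else ⟨0, hq⟩, Finset.mem_univ _, ?_⟩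
      have hmixeq : mix c (fun w => if h : k < G.degree w then x ⟨w, h⟩ else ⟨0, hq⟩)
          = (fun w => if h : k < G.degree w then Fin.castLE hqQ (x ⟨w, h⟩) else c ⟨w, h⟩) := by
        funext w
        rw [hmix]
        by_cases hdw : k < G.degree w
        · simp only [dif_pos hdw]
        · simp only [dif_neg hdw]
      rw [hmixeq, hv]
      simp only [dif_neg hvdeg]

lemma caseB {V : Type*} [Fintype V] (G : SimpleGraph V) [DecidableRel G.Adj]
    (Q : ℕ) (hQ3 : 3 ≤ Q) (hdeg : ∀ v, G.degree v ≤ 1)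
    (g : V → (V → Fin Q) → Fin Q) (hg : IsHatStrategy G.Adj Q g) :
    ∃ x : V → Fin Q, ∀ v, g v x ≠ x v := by
  classical
  have hQ0 : 0 < Q := by omega
  have hQ1 : 1 < Q := by omega
  set d0 : Fin Q := ⟨0, hQ0⟩ with hd0
  have huniq : ∀ v a b, G.Adj v a → G.Adj v b → a = b := by
    intro v a b ha hb
    by_contra hne
    have hsub : ({a, b} : Finset V) ⊆ G.neighborFinset v := by
      intro x hx
      rcases Finset.mem_insert.1 hx with rfl | hx
      · exact (SimpleGraph.mem_neighborFinset _ _ _).2 ha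
      · rw [Finset.mem_singleton] at hx
        subst hx
        exact (SimpleGraph.mem_neighborFinset _ _ _).2 hb
    have h2 : ({a, b} : Finset V).card = 2 := Finset.card_pair hne
    have h3 := Finset.card_le_card hsub
    rw [h2, G.card_neighborFinset_eq_degree] at h3
    have := hdeg v
    omega
  set ord : V → ℕ := fun v => ((Fintype.equivFin V) v : ℕ) with hord
  have hordinj : ∀ v w : V, ord v = ord w → v = w := by
    intro v w h
    have : (Fintype.equivFin V) v = (Fintype.equivFin V) w := Fin.ext h
    exact (Fintype.equivFin V).injective this
  set m : V → V := fun v => if h : ∃ w, G.Adj v w then Classical.choose h else v with hm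
  have hmadj : ∀ v, (∃ w, G.Adj v w) → G.Adj v (m v) := by
    intro v h
    rw [hm]
    simp only [dif_pos h]
    exact Classical.choose_spec h
  have hmm : ∀ v, (∃ w, G.Adj v w) → m (m v) = v := by
    intro v h
    have h1 : G.Adj v (m v) := hmadj v h
    have h2 : ∃ w, G.Adj (m v) w := ⟨v, h1.symm⟩
    exact huniq (m v) (m (m v)) v (hmadj (m v) h2) h1.symm
  have hmne : ∀ v, (∃ w, G.Adj v w) → m v ≠ v :=
    fun v h => fun heq => G.irrefl (heq ▸ hmadj v h)
  set Guess : V → Fin Q → Fin Q := fun v t => g v (fun _ => t) with hGuessDef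
  have hGuess : ∀ (v : V) (x : V → Fin Q), (∃ w, G.Adj v w) → g v x = Guess v (x (m v)) := by
    intro v x h
    apply hg v
    intro u hu
    rw [huniq v u (m v) hu (hmadj v h)]
  have hconst : ∀ (v : V) (x : V → Fin Q), ¬ (∃ w, G.Adj v w) → g v x = g v (fun _ => d0) := by
    intro v x h
    apply hg v
    intro u hu
    exact absurd ⟨u, hu⟩ h
  have hex : ∀ v, (∃ w, G.Adj v w) →
      ∃ p : Fin Q × Fin Q, p.1 ≠ Guess v p.2 ∧ p.2 ≠ Guess (m v) p.1 := by
    intro v _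
    by_contra hcon
    push_neg at hcon
    have hcover : (Finset.univ : Finset (Fin Q × Fin Q)) ⊆
        Finset.univ.filter (fun p : Fin Q × Fin Q => p.1 = Guess v p.2) ∪
        Finset.univ.filter (fun p : Fin Q × Fin Q => p.2 = Guess (m v) p.1) := by
      intro p _
      by_cases h1 : p.1 = Guess v p.2
      · exact Finset.mem_union_left _ (Finset.mem_filter.2 ⟨Finset.mem_univ _, h1⟩)
      · exact Finset.mem_union_right _ (Finset.mem_filter.2 ⟨Finset.mem_univ _, hcon p h1⟩)
    have hc1 : (Finset.univ.filter (fun p : Fin Q × Fin Q => p.1 = Guess v p.2)).card ≤ Q := by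
      have := Finset.card_le_card_of_injOn (fun p : Fin Q × Fin Q => p.2)
        (fun p _ => Finset.mem_univ (p.2)) (s := Finset.univ.filter
          (fun p : Fin Q × Fin Q => p.1 = Guess v p.2)) (t := Finset.univ) ?_
      · simpa using this
      · intro p hp p' hp' h2
        simp only [Finset.coe_filter, Set.mem_setOf_eq] at hp hp'
        have h2' : p.2 = p'.2 := h2
        have : p.1 = p'.1 := by rw [hp.2, hp'.2, h2']
        exact Prod.ext this h2'
    have hc2 : (Finset.univ.filter (fun p : Fin Q × Fin Q => p.2 = Guess (m v) p.1)).card ≤ Q := by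
      have := Finset.card_le_card_of_injOn (fun p : Fin Q × Fin Q => p.1)
        (fun p _ => Finset.mem_univ (p.1)) (s := Finset.univ.filter
          (fun p : Fin Q × Fin Q => p.2 = Guess (m v) p.1)) (t := Finset.univ) ?_
      · simpa using this
      · intro p hp p' hp' h2
        simp only [Finset.coe_filter, Set.mem_setOf_eq] at hp hp'
        have h2' : p.1 = p'.1 := h2
        have : p.2 = p'.2 := by rw [hp.2, hp'.2, h2']
        exact Prod.ext h2' this
    have hbig : Q * Q ≤ 2 * Q := by
      calc Q * Q = (Finset.univ : Finset (Fin Q × Fin Q)).card := by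
            rw [Finset.card_univ, Fintype.card_prod, Fintype.card_fin]
        _ ≤ _ := Finset.card_le_card hcover
        _ ≤ _ + _ := Finset.card_union_le _ _
        _ ≤ Q + Q := Nat.add_le_add hc1 hc2
        _ = 2 * Q := by ring
    nlinarith
  set pairF : V → Fin Q × Fin Q := fun v =>
    if h : ∃ w, G.Adj v w then Classical.choose (hex v h) else (d0, d0) with hpairF
  have hpair : ∀ v (h : ∃ w, G.Adj v w),
      (pairF v).1 ≠ Guess v (pairF v).2 ∧ (pairF v).2 ≠ Guess (m v) (pairF v).1 := by
    intro v h
    rw [hpairF]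
    simp only [dif_pos h]
    exact Classical.choose_spec (hex v h)
  set x : V → Fin Q := fun v =>
    if hM : ∃ w, G.Adj v w then
      (if ord v < ord (m v) then (pairF v).1 else (pairF (m v)).2)
    else (if (g v (fun _ => d0)).1 = 0 then (⟨1, hQ1⟩ : Fin Q) else ⟨0, hQ0⟩) with hx
  refine ⟨x, ?_⟩
  intro v
  by_cases hM : ∃ w, G.Adj v w
  · have hMu : ∃ w, G.Adj (m v) w := ⟨v, (hmadj v hM).symm⟩
    have hmmv : m (m v) = v := hmm v hM
    have hordne : ord v ≠ ord (m v) := fun h => (hmne v hM) (hordinj _ _ h).symm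
    by_cases hlt : ord v < ord (m v)
    · -- leader
      have hxv : x v = (pairF v).1 := by
        rw [hx]
        simp only [dif_pos hM, if_pos hlt]
      have hxu : x (m v) = (pairF v).2 := by
        rw [hx]
        simp only [dif_pos hMu]
        rw [hmmv, if_neg]
        omega
      rw [hGuess v x hM, hxu, hxv]
      exact (hpair v hM).1.symm
    · -- follower
      have hxv : x v = (pairF (m v)).2 := by
        rw [hx]
        simp only [dif_pos hM, if_neg hlt]
      have hxu : x (m v) = (pairF (m v)).1 := by
        rw [hx]
        simp only [dif_pos hMu]
        rw [hmmv, if_pos]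
        omega
      rw [hGuess v x hM, hxu, hxv]
      have h2 := (hpair (m v) hMu).2
      rw [hmmv] at h2
      exact fun h => h2 h.symm
  · rw [hconst v x hM]
    have hxv : x v = (if (g v (fun _ => d0)).1 = 0 then (⟨1, hQ1⟩ : Fin Q) else ⟨0, hQ0⟩) := by
      rw [hx]
      simp only [dif_neg hM]
    rw [hxv]
    by_cases h0 : (g v (fun _ => d0)).1 = 0
    · rw [if_pos h0]
      intro hcon
      rw [hcon] at h0
      simp at h0
    · rw [if_neg h0]
      intro hcon
      exact h0 (by rw [hcon])

/-- If the induced subgraph of `G` on the vertices of degree `> k` is not `q`-solvable,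
then `G` is not `Q`-solvable for any integer `Q ≥ e·k²·q^k`. -/
theorem stmt4 {V : Type*} [Fintype V] (G : SimpleGraph V) [DecidableRel G.Adj]
    (k q : ℕ) (hk : 0 < k) (hq : 0 < q)
    (h1 : ¬ Solvable (G.induce {v | k < G.degree v}).Adj q)
    (Q : ℕ) (hQ : Real.exp 1 * (k : ℝ) ^ 2 * (q : ℝ) ^ k ≤ Q) :
    ¬ Solvable G.Adj Q := by
  intro hsol
  obtain ⟨g, hg, hwin⟩ := hsol
  classical
  have he27 : (2.7:ℝ) < Real.exp 1 := by
    have := Real.exp_one_gt_d9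
    linarith
  have hk1R : (1:ℝ) ≤ (k:ℝ) := by exact_mod_cast hk
  have hq1R : (1:ℝ) ≤ (q:ℝ) := by exact_mod_cast hq
  have hqkR : (1:ℝ) ≤ (q:ℝ)^k := one_le_pow₀ hq1R
  have hk2R : (1:ℝ) ≤ (k:ℝ)^2 := by nlinarith
  have hQ27 : (2.7:ℝ) * ((k:ℝ)^2 * (q:ℝ)^k) ≤ Q := by
    have h1' : (2.7:ℝ) * ((k:ℝ)^2 * (q:ℝ)^k) ≤ Real.exp 1 * ((k:ℝ)^2 * (q:ℝ)^k) :=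
      mul_le_mul_of_nonneg_right he27.le (by positivity)
    calc (2.7:ℝ) * ((k:ℝ)^2 * (q:ℝ)^k) ≤ Real.exp 1 * ((k:ℝ)^2 * (q:ℝ)^k) := h1'
      _ = Real.exp 1 * (k:ℝ)^2 * (q:ℝ)^k := by ring
      _ ≤ Q := hQ
  have hQ27' : (2.7:ℝ) ≤ (Q:ℝ) := by nlinarith
  have hQ0 : 0 < Q := by
    by_contra hcon
    push_neg at hcon
    interval_cases Q
    · norm_num at hQ27'
  have hqQ : q ≤ Q := by
    have h1' : (q:ℝ) ≤ (Q:ℝ) := by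
      have h2' : (q:ℝ) ≤ (q:ℝ)^k := le_self_pow₀ hq1R (by omega)
      nlinarith
    exact_mod_cast h1'
  by_cases hkq : 2 ≤ k ∨ 2 ≤ q
  · obtain ⟨β, hβ, hβ1, hβ2⟩ := numeric_beta k q Q hk hq hkq hQ
    exact h1 (caseA G k q Q hk hq hqQ hQ0 β hβ hβ1 hβ2 g hg hwin)
  · push_neg at hkq
    obtain ⟨hk2, hq2⟩ := hkq
    have hk1 : k = 1 := by omega
    have hq1 : q = 1 := by omega
    subst hk1
    subst hq1
    have hempty : ∀ v : V, ¬ 1 < G.degree v := by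
      intro v hv
      apply h1
      refine ⟨fun _ _ => ⟨0, Nat.one_pos⟩, fun _ _ _ _ => rfl, ?_⟩
      intro x
      exact ⟨⟨v, hv⟩, Subsingleton.elim _ _⟩
    have hQ3 : 3 ≤ Q := by
      by_contra hcon
      push_neg at hcon
      have : (Q:ℝ) ≤ 2 := by exact_mod_cast (by omega : Q ≤ 2)
      linarith
    obtain ⟨x, hx⟩ := caseB G Q hQ3 (fun v => Nat.not_lt.1 (hempty v)) g hg
    obtain ⟨v, hv⟩ := hwin x
    exact hx v hv
end

section
/- Let q ≥ 3 be an integer and let G be a finite graph containing a vertex v of degree one. If G is q-solvable, then the graph G \ {v} obtained from G by deleting v (and its incident edge) is also q-solvable. -/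
/-- If `q ≥ 3`, `v` is a vertex of degree one in the finite graph `G`, and `G` is `q`-solvable,
then the graph obtained by deleting `v` is also `q`-solvable. -/
theorem stmt5 {V : Type*} [Fintype V] (G : SimpleGraph V) [DecidableRel G.Adj]
    (v : V) (hv : G.degree v = 1) (q : ℕ) (hq : 3 ≤ q)
    (h : Solvable G.Adj q) : Solvable (G.induce {u | u ≠ v}).Adj q := by
  classical
  obtain ⟨g, hg, hwin⟩ := h
  obtain ⟨w, hwset⟩ : ∃ w, G.neighborFinset v = {w} := Finset.card_eq_one.mp hv
  have hadj : ∀ u, G.Adj v u ↔ u = w := fun u => by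
    rw [← SimpleGraph.mem_neighborFinset, hwset, Finset.mem_singleton]
  have hAdjvw : G.Adj v w := (hadj w).mpr rfl
  have hwv : w ≠ v := fun e => G.loopless.irrefl v (e ▸ hAdjvw)
  have hq0 : 0 < q := by omega
  set z0 : Fin q := ⟨0, hq0⟩ with hz0
  set ext : (↥{u : V | u ≠ v} → Fin q) → Fin q → V → Fin q :=
    fun x b u => if h : u = v then b else x ⟨u, h⟩ with hext
  set Gv : Fin q → Fin q := fun a => g v (fun _ => a) with hGvdef
  -- members of the subtype
  have hwv' : (w : V) ∈ {u : V | u ≠ v} := hwv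
  set w' : ↥{u : V | u ≠ v} := ⟨w, hwv⟩ with hw'
  -- evaluating g at vertices other than w does not depend on the color of v
  have gother : ∀ (x : ↥{u : V | u ≠ v} → Fin q) (b b' : Fin q) (t : V), t ≠ w →
      g t (ext x b) = g t (ext x b') := by
    intro x b b' t htw
    apply hg
    intro s hs
    have hsv : s ≠ v := by
      rintro rfl
      exact htw ((hadj t).mp hs.symm)
    simp only [hext, dif_neg hsv]
  -- evaluating g at v
  have gvval : ∀ (x : ↥{u : V | u ≠ v} → Fin q) (b : Fin q),
      g v (ext x b) = Gv (x w') := by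
    intro x b
    apply hg
    intro s hs
    have hsw : s = w := (hadj s).mp hs
    subst hsw
    show ext x b s = x w'
    simp only [hext, dif_neg hwv, hw']
  -- uniqueness of the candidate value
  have Puniq : ∀ (x : ↥{u : V | u ≠ v} → Fin q) (a₁ a₂ : Fin q),
      (∀ b : Fin q, b = Gv a₁ ∨ g w (ext x b) = a₁) →
      (∀ b : Fin q, b = Gv a₂ ∨ g w (ext x b) = a₂) → a₁ = a₂ := by
    intro x a₁ a₂ h₁ h₂
    by_contra hne
    have hb : ∃ b : Fin q, b ≠ Gv a₁ ∧ b ≠ Gv a₂ := by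
      by_contra hc
      push_neg at hc
      have hsub : (Finset.univ : Finset (Fin q)) ⊆ {Gv a₁, Gv a₂} := by
        intro b _
        by_cases hb1 : b = Gv a₁
        · simp [hb1]
        · simp [hc b hb1]
      have hcard := Finset.card_le_card hsub
      have h2 : ({Gv a₁, Gv a₂} : Finset (Fin q)).card ≤ 2 :=
        (Finset.card_insert_le _ _).trans (by simp)
      simp only [Finset.card_univ, Fintype.card_fin] at hcard
      omega
    obtain ⟨b, hb1, hb2⟩ := hb
    have e1 := (h₁ b).resolve_left hb1
    have e2 := (h₂ b).resolve_left hb2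
    exact hne (e1.symm.trans e2)
  refine ⟨fun u x =>
    if u = w' then
      (if hp : ∃ a : Fin q, ∀ b : Fin q, b = Gv a ∨ g w (ext x b) = a then hp.choose else z0)
    else g u.1 (ext x z0), ?_, ?_⟩
  · -- legality
    intro u x y hxy
    dsimp only
    by_cases huw : u = w'
    · subst huw
      rw [if_pos rfl, if_pos rfl]
      have hgw : ∀ b : Fin q, g w (ext x b) = g w (ext y b) := by
        intro b
        apply hg
        intro s hs
        by_cases hsv : s = v
        · subst hsv; simp only [hext, dif_pos rfl]
        · have : x ⟨s, hsv⟩ = y ⟨s, hsv⟩ := by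
            apply hxy
            exact hs
          simp only [hext, dif_neg hsv, this]
      simp only [hgw]
    · rw [if_neg huw, if_neg huw]
      apply hg
      intro s hs
      by_cases hsv : s = v
      · subst hsv; simp only [hext, dif_pos rfl]
      · have : x ⟨s, hsv⟩ = y ⟨s, hsv⟩ := by
          apply hxy
          exact hs
        simp only [hext, dif_neg hsv, this]
  · -- winning
    intro x
    by_cases hO : ∃ u : ↥{u : V | u ≠ v}, u ≠ w' ∧ g u.1 (ext x z0) = x u
    · obtain ⟨u, huw, hu⟩ := hO
      refine ⟨u, ?_⟩
      dsimp only
      rw [if_neg huw]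
      exact hu
    · push_neg at hO
      have hPx : ∀ b : Fin q, b = Gv (x w') ∨ g w (ext x b) = x w' := by
        intro b
        obtain ⟨t, ht⟩ := hwin (ext x b)
        by_cases htv : t = v
        · subst htv
          left
          have : ext x b t = b := by simp only [hext, dif_pos rfl]
          rw [this] at ht
          rw [← ht, gvval]
        · by_cases htw : t = w
          · subst htw
            right
            have : ext x b t = x w' := by simp only [hext, dif_neg hwv, hw']
            rw [this] at ht
            exact ht
          · exfalso
            have h1 : g t (ext x b) = g t (ext x z0) := gother x b z0 t htw
            have h2 : ext x b t = x ⟨t, htv⟩ := by simp only [hext, dif_neg htv]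
            have h3 : (⟨t, htv⟩ : ↥{u : V | u ≠ v}) ≠ w' := by
              intro he
              exact htw (congrArg Subtype.val he)
            have := hO ⟨t, htv⟩ h3
            rw [← h1, ht, h2] at this
            exact this rfl
      refine ⟨w', ?_⟩
      dsimp only
      rw [if_pos rfl]
      have hex : ∃ a : Fin q, ∀ b : Fin q, b = Gv a ∨ g w (ext x b) = a := ⟨x w', hPx⟩
      rw [dif_pos hex]
      exact Puniq x hex.choose (x w') hex.choose_spec hPx
end

section
/- No finite tree is 3-solvable; in particular, HG(T) ≤ 2 for every finite tree T. -/
section HGaux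

open SimpleGraph Function

variable {V : Type*} {G : SimpleGraph V}

noncomputable def HGpth (hG : G.IsTree) (r v : V) : G.Walk v r :=
  (hG.existsUnique_path v r).choose

lemma HGpth_isPath (hG : G.IsTree) (r v : V) : (HGpth hG r v).IsPath :=
  (hG.existsUnique_path v r).choose_spec.1

lemma HGpth_unique (hG : G.IsTree) {r v : V} (p : G.Walk v r) (hp : p.IsPath) :
    p = HGpth hG r v :=
  (hG.existsUnique_path v r).choose_spec.2 p hp

noncomputable def HGdepth (hG : G.IsTree) (r v : V) : ℕ := (HGpth hG r v).length

noncomputable def HGpar (hG : G.IsTree) (r v : V) : V := (HGpth hG r v).getVert 1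

lemma HGpth_root (hG : G.IsTree) (r : V) : HGpth hG r r = Walk.nil :=
  (HGpth_unique hG Walk.nil (Walk.IsPath.nil)).symm

lemma HGdepth_root (hG : G.IsTree) (r : V) : HGdepth hG r r = 0 := by
  rw [HGdepth, HGpth_root]; rfl

lemma HGpar_root (hG : G.IsTree) (r : V) : HGpar hG r r = r := by
  rw [HGpar, HGpth_root]
  exact Walk.getVert_of_length_le _ (by simp)

lemma HGdepth_eq_zero (hG : G.IsTree) {r v : V} (h : HGdepth hG r v = 0) : v = r :=
  (Walk.nil_iff_length_eq.2 h).eq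

lemma HGparSpec (hG : G.IsTree) {r v : V} (hv : v ≠ r) :
    G.Adj v (HGpar hG r v) ∧ HGdepth hG r (HGpar hG r v) + 1 = HGdepth hG r v := by
  have hnil : ¬ (HGpth hG r v).Nil := Walk.not_nil_of_ne hv
  obtain ⟨u, hadj, qw, hq⟩ := Walk.not_nil_iff.1 hnil
  have hp := HGpth_isPath hG r v
  rw [hq] at hp
  have hqp : qw.IsPath := ((Walk.cons_isPath_iff _ _).1 hp).1
  have hqe : qw = HGpth hG r u := HGpth_unique hG qw hqp
  have hpar : HGpar hG r v = u := by rw [HGpar, hq, Walk.getVert_cons _ _ one_ne_zero]; simp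
  rw [hpar]
  refine ⟨hadj, ?_⟩
  rw [HGdepth, HGdepth, hq, ← hqe, Walk.length_cons]

lemma HGclassify (hG : G.IsTree) {r v u : V} (h : G.Adj v u) :
    (u = HGpar hG r v ∧ v ≠ r) ∨ HGpar hG r u = v := by
  classical
  by_cases hv : v ∈ (HGpth hG r u).support
  · right
    have ht : ((HGpth hG r u).takeUntil v hv).IsPath := (HGpth_isPath hG r u).takeUntil hv
    have he : (Walk.cons h.symm Walk.nil : G.Walk u v).IsPath := by
      simp [Walk.cons_isPath_iff, h.ne']
    have huniq : (HGpth hG r u).takeUntil v hv = Walk.cons h.symm Walk.nil :=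
      (hG.existsUnique_path u v).unique ht he
    have hspec := (HGpth hG r u).take_spec hv
    rw [huniq] at hspec
    rw [HGpar, ← hspec]
    simp
  · left
    have hP : (Walk.cons h (HGpth hG r u)).IsPath := by
      rw [Walk.cons_isPath_iff]
      exact ⟨HGpth_isPath hG r u, hv⟩
    have hPe : Walk.cons h (HGpth hG r u) = HGpth hG r v := HGpth_unique hG _ hP
    constructor
    · rw [HGpar, ← hPe, Walk.getVert_cons _ _ one_ne_zero]; simp
    · intro hvr
      rw [hvr] at hv
      exact hv ((HGpth hG r u).end_mem_support)

lemma HGdepth_child (hG : G.IsTree) {r v u : V} (h : G.Adj v u) (hp : HGpar hG r u = v) :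
    HGdepth hG r u = HGdepth hG r v + 1 := by
  have hur : u ≠ r := by
    intro hur
    rw [hur, HGpar_root] at hp
    rw [hur, ← hp] at h
    exact G.loopless.irrefl _ h
  have h2 := (HGparSpec hG hur).2
  rw [hp] at h2
  omega

lemma HGdepth_pos (hG : G.IsTree) {r v : V} (hv : v ≠ r) : 0 < HGdepth hG r v := by
  rcases Nat.eq_zero_or_pos (HGdepth hG r v) with h | h
  · exact absurd (HGdepth_eq_zero hG h) hv
  · exact h

lemma HGchild_ne_par (hG : G.IsTree) {r v u : V} (h : G.Adj v u) (hp : HGpar hG r u = v) :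
    u ≠ HGpar hG r v := by
  by_cases hvr : v = r
  · subst hvr
    rw [HGpar_root]
    exact h.ne'
  · intro he
    have h1 := HGdepth_child hG h hp
    have h2 := (HGparSpec hG hvr).2
    rw [← he] at h2
    omega

lemma HGinter {q : ℕ} (hq : 3 ≤ q) {A B : Set (Fin q)}
    (hA : ∀ a b, a ∉ A → b ∉ A → a = b) (hB : ∀ a b, a ∉ B → b ∉ B → a = b) :
    ∃ x, x ∈ A ∧ x ∈ B := by
  by_contra hc
  push_neg at hc
  have key : ∀ x : Fin q, x ∉ A ∨ x ∉ B := fun x => by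
    by_cases h : x ∈ A
    · exact Or.inr (hc x h)
    · exact Or.inl h
  set x0 : Fin q := ⟨0, by omega⟩ with hx0
  set x1 : Fin q := ⟨1, by omega⟩ with hx1
  set x2 : Fin q := ⟨2, by omega⟩ with hx2
  have d01 : x0 ≠ x1 := by simp [hx0, hx1, Fin.ext_iff]
  have d02 : x0 ≠ x2 := by simp [hx0, hx2, Fin.ext_iff]
  have d12 : x1 ≠ x2 := by simp [hx1, hx2, Fin.ext_iff]
  rcases key x0 with h0 | h0 <;> rcases key x1 with h1 | h1 <;> rcases key x2 with h2 | h2 <;>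
    first
      | exact d01 (hA _ _ h0 h1)
      | exact d02 (hA _ _ h0 h2)
      | exact d12 (hA _ _ h1 h2)
      | exact d01 (hB _ _ h0 h1)
      | exact d02 (hB _ _ h0 h2)
      | exact d12 (hB _ _ h1 h2)

lemma HGexists_mem {q : ℕ} (hq : 3 ≤ q) {A : Set (Fin q)}
    (hA : ∀ a b, a ∉ A → b ∉ A → a = b) : ∃ x, x ∈ A :=
  (HGinter hq hA hA).imp fun _ h => h.1

noncomputable def HGS [DecidableEq V] (hG : G.IsTree) (r : V) {q : ℕ}
    (g : V → (V → Fin q) → Fin q) : ℕ → V → Fin q → Set (Fin q)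
  | 0, _, _ => ∅
  | (n+1), v, c => {a | ∃ y : V → Fin q,
      (∀ u, G.Adj v u → HGpar hG r u = v → y u ∈ HGS hG r g n u a) ∧
      g v (Function.update y (HGpar hG r v) c) ≠ a}

lemma HGS_cosub [Fintype V] [DecidableEq V] (hG : G.IsTree) (r : V) {q : ℕ} (hq : 3 ≤ q)
    (g : V → (V → Fin q) → Fin q) :
    ∀ (n : ℕ) (v : V) (c : Fin q), Fintype.card V ≤ HGdepth hG r v + n →
      ∀ a b, a ∉ HGS hG r g n v c → b ∉ HGS hG r g n v c → a = b := by
  classical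
  intro n
  induction n with
  | zero =>
    intro v c hn a b _ _
    have := (HGpth_isPath hG r v).length_lt
    rw [HGdepth] at hn
    omega
  | succ n IH =>
    intro v c hn a b ha hb
    have key : ∀ u, G.Adj v u → HGpar hG r u = v →
        ∃ x, x ∈ HGS hG r g n u a ∧ x ∈ HGS hG r g n u b := by
      intro u hu hpu
      have hd := HGdepth_child hG hu hpu
      exact HGinter hq (IH u a (by omega)) (IH u b (by omega))
    choose f hf1 hf2 using key
    set y : V → Fin q := fun u =>
      if h : G.Adj v u ∧ HGpar hG r u = v then f u h.1 h.2 else ⟨0, by omega⟩ with hy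
    have hya : ∀ u, G.Adj v u → HGpar hG r u = v → y u ∈ HGS hG r g n u a := by
      intro u hu hpu
      simp only [hy, dif_pos (show G.Adj v u ∧ HGpar hG r u = v from ⟨hu, hpu⟩)]
      exact hf1 u hu hpu
    have hyb : ∀ u, G.Adj v u → HGpar hG r u = v → y u ∈ HGS hG r g n u b := by
      intro u hu hpu
      simp only [hy, dif_pos (show G.Adj v u ∧ HGpar hG r u = v from ⟨hu, hpu⟩)]
      exact hf2 u hu hpu
    simp only [HGS, Set.mem_setOf_eq, not_exists, not_and, not_not] at ha hb
    exact (ha y hya).symm.trans (hb y hyb)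

lemma HGdepth_lt [Fintype V] (hG : G.IsTree) (r v : V) :
    HGdepth hG r v < Fintype.card V :=
  (HGpth_isPath hG r v).length_lt

lemma HGS_root_indep [DecidableEq V] (hG : G.IsTree) (r : V) {q : ℕ}
    (g : V → (V → Fin q) → Fin q) (hg : IsHatStrategy G.Adj q g)
    (n : ℕ) (c c' : Fin q) : HGS hG r g n r c = HGS hG r g n r c' := by
  have main : ∀ (c c' : Fin q) (a : Fin q), a ∈ HGS hG r g n r c → a ∈ HGS hG r g n r c' := by
    cases n with
    | zero => intro _ _ a h; exact absurd h (by simp [HGS])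
    | succ n =>
      intro c c' a h
      simp only [HGS, Set.mem_setOf_eq] at h ⊢
      obtain ⟨y, h1, h2⟩ := h
      refine ⟨y, h1, ?_⟩
      have heq : g r (Function.update y (HGpar hG r r) c') =
          g r (Function.update y (HGpar hG r r) c) := by
        apply hg
        intro u hu
        rw [HGpar_root]
        rw [Function.update_of_ne hu.ne', Function.update_of_ne hu.ne']
      rw [heq]
      exact h2
  ext a
  exact ⟨main c c' a, main c' c a⟩

open Classical in
noncomputable def HGwit [Fintype V] [DecidableEq V] (hG : G.IsTree) (r : V) {q : ℕ}
    (g : V → (V → Fin q) → Fin q) (v : V) (c a : Fin q) : V → Fin q :=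
  if h : ∃ y : V → Fin q,
      (∀ u, G.Adj v u → HGpar hG r u = v →
        y u ∈ HGS hG r g (Fintype.card V - HGdepth hG r v - 1) u a) ∧
      g v (Function.update y (HGpar hG r v) c) ≠ a
  then h.choose else fun _ => a

lemma HGwit_spec [Fintype V] [DecidableEq V] (hG : G.IsTree) (r : V) {q : ℕ}
    (g : V → (V → Fin q) → Fin q) (v : V) (c a : Fin q)
    (h : a ∈ HGS hG r g (Fintype.card V - HGdepth hG r v) v c) :
    (∀ u, G.Adj v u → HGpar hG r u = v →
      HGwit hG r g v c a u ∈ HGS hG r g (Fintype.card V - HGdepth hG r v - 1) u a) ∧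
    g v (Function.update (HGwit hG r g v c a) (HGpar hG r v) c) ≠ a := by
  have hcard := HGdepth_lt hG r v
  have hF : Fintype.card V - HGdepth hG r v = (Fintype.card V - HGdepth hG r v - 1) + 1 := by
    omega
  rw [hF] at h
  simp only [HGS, Set.mem_setOf_eq] at h
  rw [HGwit, dif_pos h]
  exact h.choose_spec

noncomputable def HGcolr [Fintype V] [DecidableEq V] (hG : G.IsTree) (r : V) {q : ℕ}
    (g : V → (V → Fin q) → Fin q) (a0 : Fin q) (v : V) : Fin q :=
  if h : v = r then a0
  else HGwit hG r g (HGpar hG r v) (HGcolr hG r g a0 (HGpar hG r (HGpar hG r v)))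
        (HGcolr hG r g a0 (HGpar hG r v)) v
termination_by HGdepth hG r v
decreasing_by
  · have h1 := (HGparSpec hG h).2
    by_cases h2 : HGpar hG r v = r
    · rw [h2, HGpar_root, HGdepth_root]
      have := HGdepth_pos hG h
      omega
    · have h3 := (HGparSpec hG h2).2
      omega
  · have h1 := (HGparSpec hG h).2
    omega

lemma HGcolr_root [Fintype V] [DecidableEq V] (hG : G.IsTree) (r : V) {q : ℕ}
    (g : V → (V → Fin q) → Fin q) (a0 : Fin q) : HGcolr hG r g a0 r = a0 := by
  rw [HGcolr]
  simp

lemma HGcolr_ne [Fintype V] [DecidableEq V] (hG : G.IsTree) (r : V) {q : ℕ}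
    (g : V → (V → Fin q) → Fin q) (a0 : Fin q) {v : V} (hv : v ≠ r) :
    HGcolr hG r g a0 v =
      HGwit hG r g (HGpar hG r v) (HGcolr hG r g a0 (HGpar hG r (HGpar hG r v)))
        (HGcolr hG r g a0 (HGpar hG r v)) v := by
  rw [HGcolr]
  rw [dif_neg hv]

noncomputable def HGa0 [Fintype V] [DecidableEq V] (hG : G.IsTree) (r : V) {q : ℕ}
    (hq : 3 ≤ q) (g : V → (V → Fin q) → Fin q) : Fin q :=
  (HGexists_mem hq (HGS_cosub hG r hq g (Fintype.card V - HGdepth hG r r) r ⟨0, by omega⟩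
    (by have := HGdepth_lt hG r r; omega))).choose

lemma HGa0_spec [Fintype V] [DecidableEq V] (hG : G.IsTree) (r : V) {q : ℕ}
    (hq : 3 ≤ q) (g : V → (V → Fin q) → Fin q) (hg : IsHatStrategy G.Adj q g) (c : Fin q) :
    HGa0 hG r hq g ∈ HGS hG r g (Fintype.card V - HGdepth hG r r) r c := by
  rw [HGS_root_indep hG r g hg _ c ⟨0, by omega⟩]
  exact (HGexists_mem hq (HGS_cosub hG r hq g (Fintype.card V - HGdepth hG r r) r ⟨0, by omega⟩
    (by have := HGdepth_lt hG r r; omega))).choose_spec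

lemma HGcolr_mem [Fintype V] [DecidableEq V] (hG : G.IsTree) (r : V) {q : ℕ}
    (hq : 3 ≤ q) (g : V → (V → Fin q) → Fin q) (hg : IsHatStrategy G.Adj q g) (v : V) :
    HGcolr hG r g (HGa0 hG r hq g) v ∈
      HGS hG r g (Fintype.card V - HGdepth hG r v) v
        (HGcolr hG r g (HGa0 hG r hq g) (HGpar hG r v)) := by
  suffices H : ∀ n v, HGdepth hG r v ≤ n → HGcolr hG r g (HGa0 hG r hq g) v ∈
      HGS hG r g (Fintype.card V - HGdepth hG r v) v
        (HGcolr hG r g (HGa0 hG r hq g) (HGpar hG r v)) from H _ v le_rfl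
  intro n
  induction n with
  | zero =>
    intro v hv
    have hvr : v = r := HGdepth_eq_zero hG (Nat.le_zero.1 hv)
    rw [hvr, HGcolr_root]
    exact HGa0_spec hG r hq g hg _
  | succ n IH =>
    intro v hv
    by_cases hvr : v = r
    · rw [hvr, HGcolr_root]
      exact HGa0_spec hG r hq g hg _
    · have hpd := (HGparSpec hG hvr).2
      have hadj := (HGparSpec hG hvr).1
      have hmemp := IH (HGpar hG r v) (by omega)
      have hspec := HGwit_spec hG r g (HGpar hG r v)
        (HGcolr hG r g (HGa0 hG r hq g) (HGpar hG r (HGpar hG r v)))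
        (HGcolr hG r g (HGa0 hG r hq g) (HGpar hG r v)) hmemp
      have hchild := hspec.1 v hadj.symm rfl
      rw [← HGcolr_ne hG r g (HGa0 hG r hq g) hvr] at hchild
      have hidx : Fintype.card V - HGdepth hG r (HGpar hG r v) - 1 =
          Fintype.card V - HGdepth hG r v := by omega
      rwa [hidx] at hchild

end HGaux

/-- No finite tree is `3`-solvable; in particular every finite tree fails to be `q`-solvable
for every `q ≥ 3`, i.e. `HG(T) ≤ 2`. -/
theorem stmt6 {V : Type*} [Fintype V] (G : SimpleGraph V) (hG : G.IsTree) :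
    ¬ Solvable G.Adj 3 ∧ ∀ q : ℕ, 3 ≤ q → ¬ Solvable G.Adj q := by
  have main : ∀ q : ℕ, 3 ≤ q → ¬ Solvable G.Adj q := by
    intro q hq hsol
    classical
    obtain ⟨g, hg, hwin⟩ := hsol
    obtain ⟨r⟩ := hG.isConnected.nonempty
    set x := HGcolr hG r g (HGa0 hG r hq g) with hx
    obtain ⟨v, hv⟩ := hwin x
    have hmem := HGcolr_mem hG r hq g hg v
    rw [← hx] at hmem
    have hspec := HGwit_spec hG r g v (x (HGpar hG r v)) (x v) hmem
    have hagree : g v x = g v (Function.update (HGwit hG r g v (x (HGpar hG r v)) (x v))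
        (HGpar hG r v) (x (HGpar hG r v))) := by
      apply hg
      intro u hu
      rcases HGclassify hG hu with ⟨hupar, hvr⟩ | hpu
      · rw [hupar, Function.update_self]
      · have hne : u ≠ HGpar hG r v := HGchild_ne_par hG hu hpu
        rw [Function.update_of_ne hne]
        have hur : u ≠ r := by
          intro h
          rw [h, HGpar_root] at hpu
          rw [h, ← hpu] at hu
          exact G.loopless.irrefl r hu
        have heq := HGcolr_ne hG r g (HGa0 hG r hq g) hur
        rw [hpu, ← hx] at heq
        exact heq
    exact hspec.2 (hagree.symm.trans hv)
  exact ⟨main 3 le_rfl, main⟩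
end

section
/- Let G be a finite d-degenerate graph. Then for every prime power q with q ≥ d + 2, G is not linearly q-solvable; equivalently, HG_lin(G) ≤ d + 1. -/
/-- A graph (given by its adjacency relation on a finite vertex type) is linearly solvable
over the field `F` if there is a winning guessing strategy in which every vertex `v` guesses
an affine function `x ↦ ∑ u, a v u * x u + b v` of the colors of its neighbors
(so `a v u = 0` whenever `v` does not see `u`). -/
def LinearSolvable {V : Type*} [Fintype V] (Adj : V → V → Prop) (F : Type*) [Field F] : Prop :=
  ∃ (a : V → V → F) (b : V → F),
    (∀ v u : V, ¬ Adj v u → a v u = 0) ∧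
    ∀ x : V → F, ∃ v : V, x v = (∑ u : V, a v u * x u) + b v

/-- A graph is `d`-degenerate if its vertices can be ordered (by an injection into `ℕ`)
so that every vertex has at most `d` neighbors preceding it. -/
def Degenerate {V : Type*} (G : SimpleGraph V) (d : ℕ) : Prop :=
  ∃ f : V → ℕ, Function.Injective f ∧ ∀ v : V, {u : V | G.Adj v u ∧ f u < f v}.ncard ≤ d

set_option linter.unusedVariables false

def stmt9Build {F : Type*} [Zero F] (T : ℕ → (ℕ → F) → F) : ℕ → F := fun n =>
  T n (fun m => if h : m < n then stmt9Build T m else 0)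
termination_by n => n

theorem stmt9Build_eq {F : Type*} [Zero F] (T : ℕ → (ℕ → F) → F) (n : ℕ) :
    stmt9Build T n = T n (fun m => if h : m < n then stmt9Build T m else 0) := by
  rw [stmt9Build]

/-- A finite `d`-degenerate graph is not linearly `q`-solvable over any finite field with at
least `d + 2` elements; i.e. `HG_lin(G) ≤ d + 1`. -/
theorem stmt9 {V : Type*} [Fintype V] (G : SimpleGraph V) (d : ℕ) (hG : Degenerate G d)
    (F : Type*) [Field F] [Fintype F] (hF : d + 2 ≤ Fintype.card F) :
    ¬ LinearSolvable G.Adj F := by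
  classical
  rw [LinearSolvable]; rintro ⟨a, b, ha, hwin⟩
  obtain ⟨f, hfinj, hdeg⟩ := hG
  have haww : ∀ w : V, a w w = 0 := fun w => ha w w (G.irrefl)
  set C : V → Finset V := fun w => insert w (Finset.univ.filter fun u => a w u ≠ 0) with hC
  have hmax : ∀ w, ∃ v, v ∈ C w ∧ ∀ u ∈ C w, f u ≤ f v := by
    intro w
    obtain ⟨v, hv, h⟩ := (C w).exists_max_image f ⟨w, Finset.mem_insert_self _ _⟩
    exact ⟨v, hv, h⟩
  choose J hJmem hJle using hmax
  have hle : ∀ w u : V, a w u ≠ 0 → f u ≤ f (J w) := by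
    intro w u hu
    exact hJle w u (Finset.mem_insert_of_mem (Finset.mem_filter.2 ⟨Finset.mem_univ _, hu⟩))
  have hwle : ∀ w : V, f w ≤ f (J w) := fun w => hJle w w (Finset.mem_insert_self _ _)
  have hJne : ∀ w : V, J w ≠ w → a w (J w) ≠ 0 := by
    intro w hne
    rcases Finset.mem_insert.1 (hJmem w) with h | h
    · exact absurd h hne
    · exact (Finset.mem_filter.1 h).2
  -- forbidden value function
  set Φ : V → (V → F) → F := fun w y =>
    if J w = w then (∑ u : V, a w u * y u) + b w
    else (y w - (∑ u ∈ Finset.univ.erase (J w), a w u * y u) - b w) / a w (J w) with hΦ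
  -- if equation E_w holds for x, then x (J w) is the forbidden value
  have hE : ∀ (w : V) (x : V → F), x w = (∑ u : V, a w u * x u) + b w → x (J w) = Φ w x := by
    intro w x hw
    rw [hΦ]
    by_cases hjw : J w = w
    · simp only [hjw, if_pos rfl]
      rw [hjw] at *
      exact hw
    · simp only [if_neg hjw]
      have hc := hJne w hjw
      rw [eq_div_iff hc]
      have h2 : (∑ u : V, a w u * x u)
          = a w (J w) * x (J w) + ∑ u ∈ Finset.univ.erase (J w), a w u * x u :=
        (Finset.add_sum_erase Finset.univ (fun u => a w u * x u) (Finset.mem_univ (J w))).symm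
      rw [h2] at hw
      linear_combination -hw
  -- Φ only depends on coordinates with f u < f (J w)
  have hΦdep : ∀ (w : V) (y y' : V → F), (∀ u, f u < f (J w) → y u = y' u) → Φ w y = Φ w y' := by
    intro w y y' hy
    have key : ∀ u : V, a w u ≠ 0 → u ≠ J w → y u = y' u := by
      intro u hu hne
      exact hy u (lt_of_le_of_ne (hle w u hu) (fun h => hne (hfinj h)))
    rw [hΦ]
    by_cases hjw : J w = w
    · simp only [if_pos hjw]
      congr 1
      apply Finset.sum_congr rfl
      intro u _
      by_cases hu : a w u = 0
      · rw [hu]; ring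
      · rw [key u hu (fun h => hu (by rw [h, hjw]; exact haww w))]
    · simp only [if_neg hjw]
      have h1 : y w = y' w := hy w (lt_of_le_of_ne (hwle w) (fun h => hjw (hfinj h.symm)))
      have h2 : (∑ u ∈ Finset.univ.erase (J w), a w u * y u)
          = ∑ u ∈ Finset.univ.erase (J w), a w u * y' u := by
        apply Finset.sum_congr rfl
        intro u hu
        by_cases hau : a w u = 0
        · rw [hau]; ring
        · rw [key u hau (Finset.ne_of_mem_erase hu)]
      rw [h1, h2]
  -- at most d+1 equations have J w = v
  have hcard : ∀ v : V, (Finset.univ.filter fun w => J w = v).card ≤ d + 1 := by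
    intro v
    have hsub : (Finset.univ.filter fun w => J w = v)
        ⊆ insert v (Finset.univ.filter fun u => G.Adj v u ∧ f u < f v) := by
      intro w hw
      have hJw : J w = v := (Finset.mem_filter.1 hw).2
      by_cases hwv : w = v
      · exact Finset.mem_insert.2 (Or.inl hwv)
      · have hne : J w ≠ w := by rw [hJw]; exact fun h => hwv h.symm
        have haw : a w v ≠ 0 := hJw ▸ hJne w hne
        have hadj : G.Adj v w := by
          by_contra hna
          exact haw (ha w v (fun h => hna h.symm))
        have hlt : f w < f v := by
          have := hwle w; rw [hJw] at this
          exact lt_of_le_of_ne this (fun h => hwv (hfinj h))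
        exact Finset.mem_insert.2 (Or.inr (Finset.mem_filter.2 ⟨Finset.mem_univ _, hadj, hlt⟩))
    calc (Finset.univ.filter fun w => J w = v).card
        ≤ (insert v (Finset.univ.filter fun u => G.Adj v u ∧ f u < f v)).card :=
          Finset.card_le_card hsub
      _ ≤ (Finset.univ.filter fun u => G.Adj v u ∧ f u < f v).card + 1 :=
          Finset.card_insert_le _ _
      _ ≤ d + 1 := by
          have h1 := hdeg v
          have h2 : {u : V | G.Adj v u ∧ f u < f v}
              = ↑(Finset.univ.filter fun u => G.Adj v u ∧ f u < f v) := by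
            ext u; simp
          rw [h2, Set.ncard_coe_finset] at h1
          omega
  -- the greedy pick
  set S : V → (V → F) → Finset F := fun v y =>
    (Finset.univ.filter fun w => J w = v).image (fun w => Φ w y) with hS
  have hSne : ∀ v y, ((S v y)ᶜ : Finset F).Nonempty := by
    intro v y
    rw [← Finset.card_pos, Finset.card_compl]
    have : (S v y).card ≤ d + 1 := le_trans (Finset.card_image_le) (hcard v)
    omega
  set pick : V → (V → F) → F := fun v y => (hSne v y).choose with hpickdef
  have hpick : ∀ v y w, J w = v → pick v y ≠ Φ w y := by
    intro v y w hw heq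
    have hmem : pick v y ∉ S v y := by
      rw [hpickdef]
      exact Finset.mem_compl.1 (hSne v y).choose_spec
    apply hmem
    rw [heq]
    exact Finset.mem_image.2 ⟨w, Finset.mem_filter.2 ⟨Finset.mem_univ _, hw⟩, rfl⟩
  -- build the coloring
  set T : ℕ → (ℕ → F) → F := fun n g =>
    if h : ∃ v : V, f v = n then pick h.choose (fun u => g (f u)) else 0 with hT
  set g : ℕ → F := stmt9Build T with hg
  set x : V → F := fun v => g (f v) with hx
  have hxv : ∀ v : V, x v = pick v (fun u => if f u < f v then x u else 0) := by
    intro v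
    have hex : ∃ u : V, f u = f v := ⟨v, rfl⟩
    have hch : hex.choose = v := hfinj hex.choose_spec
    rw [hx]
    simp only []
    rw [hg, stmt9Build_eq, hT]
    simp only [dif_pos hex, hch]
    simp only [dite_eq_ite]
  obtain ⟨w, hw⟩ := hwin x
  have h1 : x (J w) = Φ w x := hE w x hw
  set y : V → F := fun u => if f u < f (J w) then x u else 0 with hy
  have h2 : Φ w y = Φ w x := hΦdep w y x (by intro u hu; rw [hy]; simp [hu])
  have h3 := hpick (J w) y w rfl
  rw [h2, ← h1] at h3
  have h4 := hxv (J w)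
  rw [← hy] at h4
  exact h3 h4.symm
end

section
/- Let q, m, n be positive integers and let K_{m,n} be the complete bipartite graph with parts V_L = {u_1,…,u_m} and V_R = {v_1,…,v_n}. Suppose each vertex of V_R is assigned a guessing function from [q]^m (the colorings of V_L, which each vertex of V_R fully sees) to [q], such that for every coloring y ∈ [q]^n of V_R, the set C_y = {x ∈ [q]^m : when V_L is colored by x and V_R is colored by y, every vertex of V_R guesses its own color incorrectly} is contained in a Hamming ball B_{m−1}(a^y) of radius m−1 for some a^y ∈ [q]^m. Then K_{m,n} is q-solvable. -/
/-- The Hamming ball condition: if the vertices of the right part `V_R = Fin n` of `K_{m,n}`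
have guessing functions `g` (each seeing the whole coloring of `V_L = Fin m`) such that for
every coloring `y` of `V_R` the set of colorings of `V_L` making all of `V_R` guess wrong is
contained in a Hamming ball of radius `m - 1`, then `K_{m,n}` is `q`-solvable. -/
theorem stmt11 (q m n : ℕ) (hq : 0 < q) (hm : 0 < m) (hn : 0 < n)
    (g : Fin n → (Fin m → Fin q) → Fin q)
    (h : ∀ y : Fin n → Fin q, ∃ a : Fin m → Fin q,
      ∀ x : Fin m → Fin q, (∀ i : Fin n, g i x ≠ y i) → hammingDist x a ≤ m - 1) :
    Solvable (completeBipartiteGraph (Fin m) (Fin n)).Adj q := by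
  classical
  set a : (Fin n → Fin q) → (Fin m → Fin q) := fun y => Classical.choose (h y) with ha
  refine ⟨fun v c => match v with
    | Sum.inl i => a (fun j => c (Sum.inr j)) i
    | Sum.inr j => g j (fun i => c (Sum.inl i)), ?_, ?_⟩
  · rintro (i | j) x y hxy
    · simp only
      congr 1
      funext j
      exact hxy (Sum.inr j) (by simp)
    · simp only
      congr 1
      funext i
      exact hxy (Sum.inl i) (by simp)
  · intro c
    set x : Fin m → Fin q := fun i => c (Sum.inl i)
    set y : Fin n → Fin q := fun j => c (Sum.inr j)
    by_cases hc : ∃ j, g j x = y j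
    · obtain ⟨j, hj⟩ := hc
      exact ⟨Sum.inr j, hj⟩
    · push_neg at hc
      have hd : hammingDist x (a y) ≤ m - 1 := Classical.choose_spec (h y) x hc
      have : ∃ i, x i = a y i := by
        by_contra hall
        push_neg at hall
        have : hammingDist x (a y) = m := by
          simp only [hammingDist, Finset.filter_true_of_mem (fun i _ => hall i),
            Finset.card_univ, Fintype.card_fin]
        omega
      obtain ⟨i, hi⟩ := this
      exact ⟨Sum.inl i, hi.symm⟩
end
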